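/- arXiv:2501.13830 — 10 statements merged into one kernel-verified Lean document; each statement's English description precedes it below -/
import Mathlib

section
/- Let h: R^{m×n} → R^q be smooth and orthogonally invariant (h(XQ) = h(X) for all orthogonal Q ∈ O(n)). Let X ∈ R^{m×n} with h(X) = 0, rank(X) = s, and SVD X = UΣV^T with U ∈ St(m,s), Σ ∈ R^{s×s}, V ∈ St(n,s). Then every matrix of the form UΣΩV^T + BV_⊥^T, where Ω is s×s skew-symmetric and B ∈ R^{m×(n−s)}, lies in the kernel of the differential Dh_X. -/
open Matrix

noncomputable section
attribute [local instance] Matrix.normedAddCommGroup Matrix.normedSpace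

lemma skew_isUnit_det {s : ℕ} (Ω : Matrix (Fin s) (Fin s) ℝ) (hΩ : Ωᵀ = -Ω) (t : ℝ) :
    IsUnit ((1 : Matrix (Fin s) (Fin s) ℝ) + t • Ω).det := by
  rw [isUnit_iff_ne_zero]
  intro hdet
  obtain ⟨v, hv0, hv⟩ := Matrix.exists_mulVec_eq_zero_iff.mpr hdet
  apply hv0
  have hskew : v ⬝ᵥ (Ω *ᵥ v) = 0 := by
    have h1 : v ⬝ᵥ (Ω *ᵥ v) = - (v ⬝ᵥ (Ω *ᵥ v)) := by
      calc v ⬝ᵥ (Ω *ᵥ v) = (v ᵥ* Ω) ⬝ᵥ v := Matrix.dotProduct_mulVec v Ω v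
        _ = (v ᵥ* (-Ωᵀ)) ⬝ᵥ v := by rw [hΩ, neg_neg]
        _ = (-(v ᵥ* Ωᵀ)) ⬝ᵥ v := by rw [Matrix.vecMul_neg]
        _ = (-(Ω *ᵥ v)) ⬝ᵥ v := by rw [Matrix.vecMul_transpose]
        _ = -((Ω *ᵥ v) ⬝ᵥ v) := by rw [neg_dotProduct]
        _ = -(v ⬝ᵥ (Ω *ᵥ v)) := by rw [dotProduct_comm]
    linarith [h1]
  have hv' : v + t • (Ω *ᵥ v) = 0 := by
    simpa [Matrix.add_mulVec, Matrix.one_mulVec, Matrix.smul_mulVec] using hv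
  have : v ⬝ᵥ v = 0 := by
    have := congrArg (fun w => v ⬝ᵥ w) hv'
    simpa [dotProduct_add, dotProduct_smul, hskew] using this
  exact dotProduct_self_eq_zero.mp this

/-- For smooth, orthogonally invariant `h`, a point `X` of the level
set with `rank X = s` and SVD `X = U Σ Vᵀ` (with orthonormal completion `V⊥` of `V`),
every matrix `U Σ Ω Vᵀ + B V⊥ᵀ` with `Ω` skew-symmetric lies in `ker (Dh_X)`. -/
theorem prop_kerDh {m n q s : ℕ} (hsn : s ≤ n)
    (h : Matrix (Fin m) (Fin n) ℝ → (Fin q → ℝ))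
    (hsmooth : ContDiff ℝ (⊤ : ℕ∞) h)
    (hinv : ∀ (X : Matrix (Fin m) (Fin n) ℝ) (Q : Matrix (Fin n) (Fin n) ℝ),
      Qᵀ * Q = 1 → h (X * Q) = h X)
    (X : Matrix (Fin m) (Fin n) ℝ) (hX : h X = 0) (hrank : X.rank = s)
    (U : Matrix (Fin m) (Fin s) ℝ) (σ : Fin s → ℝ) (S : Matrix (Fin s) (Fin s) ℝ)
    (V : Matrix (Fin n) (Fin s) ℝ) (Vb : Matrix (Fin n) (Fin (n - s)) ℝ)
    (hU : Uᵀ * U = 1) (hV : Vᵀ * V = 1)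
    (hS : S = Matrix.diagonal σ) (hσ : ∀ i, 0 < σ i)
    (hSVD : X = U * S * Vᵀ)
    (hVVb : Vᵀ * Vb = 0) (hVb : Vbᵀ * Vb = 1)
    (hcompl : V * Vᵀ + Vb * Vbᵀ = 1) :
    ∀ (Ω : Matrix (Fin s) (Fin s) ℝ) (B : Matrix (Fin m) (Fin (n - s)) ℝ),
      Ωᵀ = -Ω →
      U * S * Ω * Vᵀ + B * Vbᵀ ∈ LinearMap.ker (fderiv ℝ h X).toLinearMap := by
  intro Ω B hΩ
  set Δ : Matrix (Fin m) (Fin n) ℝ := U * S * Ω * Vᵀ + B * Vbᵀ with hΔ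
  -- reassociated orthonormality facts
  have hVbV : Vbᵀ * V = 0 := by
    have := congrArg Matrix.transpose hVVb
    simpa using this
  have hV' : ∀ (M : Matrix (Fin s) (Fin n) ℝ), Vᵀ * (V * M) = M := by
    intro M; rw [← Matrix.mul_assoc, hV, Matrix.one_mul]
  have hVb' : ∀ (M : Matrix (Fin (n-s)) (Fin n) ℝ), Vbᵀ * (Vb * M) = M := by
    intro M; rw [← Matrix.mul_assoc, hVb, Matrix.one_mul]
  have hVVb' : ∀ (M : Matrix (Fin (n-s)) (Fin n) ℝ), Vᵀ * (Vb * M) = 0 := by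
    intro M; rw [← Matrix.mul_assoc, hVVb, Matrix.zero_mul]
  have hVbV' : ∀ (M : Matrix (Fin s) (Fin n) ℝ), Vbᵀ * (V * M) = 0 := by
    intro M; rw [← Matrix.mul_assoc, hVbV, Matrix.zero_mul]
  -- the key evenness property
  have key : ∀ t : ℝ, h (X + t • Δ) = h (X + (-t) • Δ) := by
    intro t
    set A : Matrix (Fin s) (Fin s) ℝ := 1 + t • Ω with hA
    have hAdet : IsUnit A.det := skew_isUnit_det Ω hΩ t
    have hAT : Aᵀ = 1 - t • Ω := by
      rw [hA, Matrix.transpose_add, Matrix.transpose_one, Matrix.transpose_smul, hΩ,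
        smul_neg, ← sub_eq_add_neg]
    have hATdet : IsUnit Aᵀ.det := by rwa [Matrix.det_transpose]
    have hcommA : A * Aᵀ = Aᵀ * A := by
      rw [hAT, hA]
      generalize t • Ω = E
      noncomm_ring
    set C : Matrix (Fin s) (Fin s) ℝ := A⁻¹ * Aᵀ with hC
    have hCT : Cᵀ = A * Aᵀ⁻¹ := by
      rw [hC, Matrix.transpose_mul, Matrix.transpose_transpose, Matrix.transpose_nonsing_inv]
    have hCTC : Cᵀ * C = 1 := by
      rw [hCT, hC]
      calc A * Aᵀ⁻¹ * (A⁻¹ * Aᵀ) = A * (Aᵀ⁻¹ * A⁻¹) * Aᵀ := by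
            rw [Matrix.mul_assoc, Matrix.mul_assoc, Matrix.mul_assoc]
        _ = A * (A * Aᵀ)⁻¹ * Aᵀ := by rw [Matrix.mul_inv_rev]
        _ = A * (Aᵀ * A)⁻¹ * Aᵀ := by rw [hcommA]
        _ = A * (A⁻¹ * Aᵀ⁻¹) * Aᵀ := by rw [Matrix.mul_inv_rev]
        _ = (A * A⁻¹) * (Aᵀ⁻¹ * Aᵀ) := by
            rw [Matrix.mul_assoc, Matrix.mul_assoc, Matrix.mul_assoc]
        _ = 1 := by rw [Matrix.mul_nonsing_inv A hAdet, Matrix.nonsing_inv_mul Aᵀ hATdet,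
            Matrix.one_mul]
    have hCTC' : ∀ M : Matrix (Fin s) (Fin n) ℝ, Cᵀ * (C * M) = M := by
      intro M; rw [← Matrix.mul_assoc, hCTC, Matrix.one_mul]
    set Q : Matrix (Fin n) (Fin n) ℝ := V * C * Vᵀ - Vb * Vbᵀ with hQ
    have hQorth : Qᵀ * Q = 1 := by
      rw [hQ]
      simp only [Matrix.transpose_sub, Matrix.transpose_mul, Matrix.transpose_transpose,
        Matrix.sub_mul, Matrix.mul_sub, Matrix.mul_assoc, hV', hVb', hVVb', hVbV',
        Matrix.mul_zero, hCTC', sub_zero, zero_sub, sub_neg_eq_add]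
      exact hcompl
    have hAC : ∀ M : Matrix (Fin s) (Fin n) ℝ, A * (C * M) = Aᵀ * M := by
      intro M
      rw [hC, Matrix.mul_assoc A⁻¹ Aᵀ M, ← Matrix.mul_assoc A A⁻¹ (Aᵀ * M),
        Matrix.mul_nonsing_inv A hAdet, Matrix.one_mul]
    have hXQ : (X + t • Δ) * Q = X + (-t) • Δ := by
      have hlhs : X + t • Δ = U * S * (A * Vᵀ) + (t • B) * Vbᵀ := by
        rw [hSVD, hΔ, hA]
        simp only [smul_add, Matrix.smul_mul, Matrix.mul_smul, Matrix.add_mul,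
          Matrix.mul_add, Matrix.mul_one, Matrix.one_mul, Matrix.mul_assoc]
        abel
      have hrhs : X + (-t) • Δ = U * S * (Aᵀ * Vᵀ) + (-(t • B)) * Vbᵀ := by
        rw [hSVD, hΔ, hAT]
        simp only [smul_add, Matrix.smul_mul, Matrix.mul_smul, Matrix.sub_mul,
          Matrix.add_mul, Matrix.mul_add, Matrix.mul_sub, Matrix.mul_one, Matrix.one_mul,
          Matrix.mul_assoc, neg_smul, Matrix.neg_mul, Matrix.mul_neg, sub_eq_add_neg]
        abel
      rw [hlhs, hrhs, hQ]
      simp only [Matrix.add_mul, Matrix.mul_sub, Matrix.smul_mul, Matrix.neg_mul,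
        Matrix.mul_assoc, hV', hVb', hVVb', hVbV', Matrix.mul_zero, sub_zero, zero_sub,
        hAC, neg_smul, smul_zero, Matrix.mul_neg, add_zero, zero_add]
      abel
    calc h (X + t • Δ) = h ((X + t • Δ) * Q) := (hinv _ Q hQorth).symm
      _ = h (X + (-t) • Δ) := by rw [hXQ]
  -- calculus part
  have hdiff : HasFDerivAt h (fderiv ℝ h X) X :=
    (hsmooth.differentiable (by simp) X).hasFDerivAt
  have hcurve : HasDerivAt (fun t : ℝ => X + t • Δ) Δ 0 := by
    have := ((hasDerivAt_id (0 : ℝ)).smul_const Δ).const_add X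
    simp only [id, one_smul] at this
    exact this
  have hdiff0 : HasFDerivAt h (fderiv ℝ h X) (X + (0 : ℝ) • Δ) := by simpa using hdiff
  have hφ : HasDerivAt (fun t : ℝ => h (X + t • Δ)) (fderiv ℝ h X Δ) 0 := by
    have := hdiff0.comp_hasDerivAt 0 hcurve
    exact this
  have hψ : HasDerivAt (fun t : ℝ => h (X + t • Δ)) (-(fderiv ℝ h X Δ)) 0 := by
    have h2 : HasDerivAt ((fun t : ℝ => h (X + t • Δ)) ∘ (fun t : ℝ => -t))
        ((-1 : ℝ) • fderiv ℝ h X Δ) 0 :=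
      HasDerivAt.scomp (0 : ℝ) (by simpa using hφ) (hasDerivAt_neg 0)
    have heq : ((fun t : ℝ => h (X + t • Δ)) ∘ (fun t : ℝ => -t))
        = (fun t : ℝ => h (X + t • Δ)) := by
      funext t
      simp only [Function.comp]
      exact (key t).symm
    rw [heq] at h2
    simpa using h2
  have hzero : fderiv ℝ h X Δ = 0 := by
    have := hφ.unique hψ
    have h3 : (2 : ℝ) • fderiv ℝ h X Δ = 0 := by
      rw [two_smul]
      nth_rewrite 1 [this]
      simp
    simpa using h3
  simpa [LinearMap.mem_ker] using hzero
end
end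

section
/- Let h: R^{m×n} → R^q be smooth and orthogonally invariant. If X ∈ R^{m×n} satisfies h(X) = 0 and Y ∈ R^{m×n} satisfies XY^T = 0, then Y ∈ ker(Dh_X). -/
open Matrix
open scoped RealInnerProductSpace

noncomputable section
attribute [local instance] Matrix.normedAddCommGroup Matrix.normedSpace

lemma key_reflect {m n : ℕ} (X Y : Matrix (Fin m) (Fin n) ℝ) (hXY : X * Yᵀ = 0) :
    ∃ Q : Matrix (Fin n) (Fin n) ℝ, Qᵀ * Q = 1 ∧ ∀ t : ℝ, (X - t • Y) * Q = X + t • Y := by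
  classical
  let e : EuclideanSpace ℝ (Fin n) ≃ₗ[ℝ] (Fin n → ℝ) := WithLp.linearEquiv 2 ℝ (Fin n → ℝ)
  let K : Submodule ℝ (EuclideanSpace ℝ (Fin n)) := Submodule.span ℝ (Set.range fun i => e.symm (Y i))
  let g : EuclideanSpace ℝ (Fin n) ≃ₗᵢ[ℝ] EuclideanSpace ℝ (Fin n) := Submodule.reflection Kᗮ
  let f : (Fin n → ℝ) →ₗ[ℝ] (Fin n → ℝ) :=
    e.toLinearMap ∘ₗ g.toLinearEquiv.toLinearMap ∘ₗ e.symm.toLinearMap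
  let A : Matrix (Fin n) (Fin n) ℝ := LinearMap.toMatrix' f
  -- inner products of rows
  have hinner : ∀ (u v : Fin n → ℝ), (inner (𝕜 := ℝ) (e.symm u) (e.symm v)) = ∑ k, u k * v k := by
    intro u v
    simp [PiLp.inner_apply, RCLike.inner_apply, e, WithLp.linearEquiv, mul_comm]
  -- rows of X are in Kᗮ
  have hXmem : ∀ i, e.symm (X i) ∈ Kᗮ := by
    intro i
    rw [Submodule.mem_orthogonal]
    intro u hu
    induction hu using Submodule.span_induction with
    | mem x hx =>
      obtain ⟨j, rfl⟩ := hx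
      rw [hinner]
      have := congrFun (congrFun hXY i) j
      simpa [Matrix.mul_apply, mul_comm] using this
    | zero => simp
    | add x y _ _ hx hy => rw [inner_add_left, hx, hy, add_zero]
    | smul c x _ hx => rw [inner_smul_left, hx, mul_zero]
  have hgX : ∀ i, g (e.symm (X i)) = e.symm (X i) := fun i =>
    Submodule.reflection_mem_subspace_eq_self (hXmem i)
  have hgY : ∀ i, g (e.symm (Y i)) = -(e.symm (Y i)) := by
    intro i
    exact Submodule.reflection_mem_subspace_orthogonalComplement_eq_neg
      (K.le_orthogonal_orthogonal (Submodule.subset_span ⟨i, rfl⟩))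
  have hfX : ∀ i, f (X i) = X i := by
    intro i
    simp only [f, LinearMap.comp_apply, LinearEquiv.coe_coe,
      LinearIsometryEquiv.coe_toLinearEquiv, hgX i]
    simp
  have hfY : ∀ i, f (Y i) = -(Y i) := by
    intro i
    simp only [f, LinearMap.comp_apply, LinearEquiv.coe_coe,
      LinearIsometryEquiv.coe_toLinearEquiv, hgY i]
    simp
  refine ⟨Aᵀ, ?_, ?_⟩
  · -- Aᵀᵀ * Aᵀ = A * Aᵀ = 1 from AᵀA = 1
    rw [transpose_transpose]
    rw [mul_eq_one_comm]
    refine Matrix.ext fun i j => ?_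
    have colA : ∀ (i k : Fin n), A k i = f (Pi.single i 1) k := by
      intro i k
      have h1 : (fun j' => if j' = i then (1:ℝ) else 0) = Pi.single i 1 :=
        funext fun j' => by simp [Pi.single_apply]
      simp only [A]
      rw [LinearMap.toMatrix'_apply]
    have : ∀ w : Fin n → ℝ, f w = e (g (e.symm w)) := fun w => rfl
    calc (Aᵀ * A) i j = ∑ k, f (Pi.single i 1) k * f (Pi.single j 1) k := by
          simp [Matrix.mul_apply, colA, Matrix.transpose_apply]
      _ = (inner (𝕜 := ℝ) (e.symm (f (Pi.single i 1))) (e.symm (f (Pi.single j 1)))) := (hinner _ _).symm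
      _ = (inner (𝕜 := ℝ) (g (e.symm (Pi.single i 1))) (g (e.symm (Pi.single j 1)))) := by rw [this, this]; simp [e]
      _ = (inner (𝕜 := ℝ) (e.symm (Pi.single i 1)) (e.symm (Pi.single j 1))) := g.inner_map_map _ _
      _ = (1 : Matrix (Fin n) (Fin n) ℝ) i j := by
          rw [hinner]
          simp [Pi.single_apply, Matrix.one_apply, eq_comm]
  · intro t
    have hrow : ∀ (M : Matrix (Fin m) (Fin n) ℝ) i j, (M * Aᵀ) i j = f (M i) j := by
      intro M i j
      have : (M * Aᵀ) i j = (A *ᵥ (M i)) j := by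
        simp [Matrix.mul_apply, Matrix.mulVec, dotProduct, mul_comm]
      rw [this, ← Matrix.toLin'_apply, Matrix.toLin'_toMatrix']
    ext i j
    rw [hrow]
    have : (X - t • Y) i = X i - t • Y i := rfl
    rw [this, map_sub, _root_.map_smul, hfX, hfY]
    simp [smul_neg, sub_neg_eq_add]

/-- If `h` is smooth and orthogonally invariant, `h X = 0` and
`X * Yᵀ = 0`, then `Y` lies in the kernel of the differential of `h` at `X`. -/
theorem corollary_orth_tangentX {m n q : ℕ}
    (h : Matrix (Fin m) (Fin n) ℝ → (Fin q → ℝ))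
    (hsmooth : ContDiff ℝ (⊤ : ℕ∞) h)
    (hinv : ∀ (X : Matrix (Fin m) (Fin n) ℝ) (Q : Matrix (Fin n) (Fin n) ℝ),
      Qᵀ * Q = 1 → h (X * Q) = h X)
    (X Y : Matrix (Fin m) (Fin n) ℝ)
    (hX : h X = 0) (hXY : X * Yᵀ = 0) :
    Y ∈ LinearMap.ker (fderiv ℝ h X).toLinearMap := by
  obtain ⟨Q, hQ, hQrow⟩ := key_reflect X Y hXY
  have heq : (fun t : ℝ => h (X + t • Y)) = (fun t : ℝ => h (X - t • Y)) := by
    funext t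
    rw [← hQrow t, hinv _ Q hQ]
  have hdiff : DifferentiableAt ℝ h X := (hsmooth.differentiable (by simp)).differentiableAt
  have hc1 : HasDerivAt (fun t : ℝ => X + t • Y) Y 0 := by
    have := ((hasDerivAt_id (0:ℝ)).smul_const Y).const_add X
    simp only [id, one_smul] at this
    exact this
  have hc2 : HasDerivAt (fun t : ℝ => X - t • Y) (-Y) 0 := by
    have := ((hasDerivAt_id (0:ℝ)).smul_const Y).const_sub X
    simp only [id, one_smul] at this
    exact this
  have hfd : HasFDerivAt h (fderiv ℝ h X) ((fun t : ℝ => X + t • Y) 0) := by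
    simpa using hdiff.hasFDerivAt
  have hfd2 : HasFDerivAt h (fderiv ℝ h X) ((fun t : ℝ => X - t • Y) 0) := by
    simpa using hdiff.hasFDerivAt
  have hD1 : HasDerivAt (fun t : ℝ => h (X + t • Y)) (fderiv ℝ h X Y) 0 :=
    hfd.comp_hasDerivAt 0 hc1
  have hD2 : HasDerivAt (fun t : ℝ => h (X - t • Y)) (-(fderiv ℝ h X Y)) 0 := by
    have := hfd2.comp_hasDerivAt 0 hc2
    have e : fderiv ℝ h X (-Y) = -(fderiv ℝ h X Y) := (fderiv ℝ h X).map_neg Y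
    exact this.congr_deriv e
  rw [← heq] at hD2
  have hDD : fderiv ℝ h X Y = -(fderiv ℝ h X Y) := hD1.unique hD2
  have h2 : fderiv ℝ h X Y + fderiv ℝ h X Y = 0 := by
    nth_rewrite 2 [hDD]
    simp
  have h3 : (2:ℝ) • fderiv ℝ h X Y = 0 := by rw [two_smul]; exact h2
  have h4 : fderiv ℝ h X Y = 0 := (smul_eq_zero.mp h3).resolve_left (by norm_num)
  simpa [LinearMap.mem_ker] using h4
end
end

section
/- Let h: R^{m×n} → R^q be smooth and orthogonally invariant, let X satisfy h(X) = 0 with rank(X) = s and SVD X = UΣV^T. Then the normal space N_X H = (ker Dh_X)^⊥ is contained in the set {AX : A ∈ R^{m×m}, U^T A U symmetric}. Equivalently, the orthogonal complement of the linear space K_X = {UΣΩV^T + BV_⊥^T : Ω ∈ Skew(s), B ∈ R^{m×(n−s)}} equals {AX : A ∈ R^{m×m}, U^T A U ∈ Sym(s)}. -/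
open Matrix

noncomputable section
attribute [local instance] Matrix.normedAddCommGroup Matrix.normedSpace

/- ### Auxiliary trace lemmas -/

lemma aux_trace_skew_symm {k : ℕ} (Ω G : Matrix (Fin k) (Fin k) ℝ)
    (hΩ : Ωᵀ = -Ω) (hG : Gᵀ = G) : (Ωᵀ * G).trace = 0 := by
  have h1 : (Ωᵀ * G).trace = (Ω * G).trace := by
    rw [← Matrix.trace_transpose (Ωᵀ * G), Matrix.transpose_mul, Matrix.transpose_transpose, hG,
      Matrix.trace_mul_comm]
  rw [hΩ, Matrix.neg_mul, Matrix.trace_neg] at h1 ⊢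
  linarith

lemma aux_eq_zero_of_trace_transpose_mul_self {k l : ℕ} (C : Matrix (Fin k) (Fin l) ℝ)
    (h : (Cᵀ * C).trace = 0) : C = 0 := by
  have h' : ∑ j, ∑ i, C i j * C i j = 0 := by
    simpa [Matrix.trace, Matrix.diag, Matrix.mul_apply] using h
  ext i j
  have hnn : ∀ j ∈ Finset.univ, (0:ℝ) ≤ ∑ i, C i j * C i j :=
    fun j _ => Finset.sum_nonneg fun i _ => mul_self_nonneg _
  have h2 := (Finset.sum_eq_zero_iff_of_nonneg hnn).mp h' j (Finset.mem_univ j)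
  have h3 := (Finset.sum_eq_zero_iff_of_nonneg
    (fun i _ => mul_self_nonneg (C i j))).mp h2 i (Finset.mem_univ i)
  simpa using mul_self_eq_zero.mp h3

lemma aux_symm_of_trace_skew {k : ℕ} (N : Matrix (Fin k) (Fin k) ℝ)
    (h : ∀ Ω : Matrix (Fin k) (Fin k) ℝ, Ωᵀ = -Ω → (Ωᵀ * N).trace = 0) : Nᵀ = N := by
  set D := N - Nᵀ with hD
  have hDskew : Dᵀ = -D := by simp [hD, Matrix.transpose_sub, neg_sub]
  have h1 : (Dᵀ * N).trace = 0 := h D hDskew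
  have h2 : (Dᵀ * Nᵀ).trace = 0 := by
    have e1 : (Dᵀ * Nᵀ).trace = (N * D).trace := by
      conv_rhs => rw [← Matrix.trace_transpose (N * D), Matrix.transpose_mul]
    have e2 : (N * D).trace = (D * N).trace := Matrix.trace_mul_comm _ _
    have e3 : (D * N).trace = -((Dᵀ * N).trace) := by
      conv_lhs => rw [show D = -Dᵀ by rw [hDskew, neg_neg]]
      rw [Matrix.neg_mul, Matrix.trace_neg]
    rw [e1, e2, e3, h1, neg_zero]
  have h4 : (Dᵀ * D).trace = 0 := by
    have e : Dᵀ * D = Dᵀ * N - Dᵀ * Nᵀ := by rw [hD]; noncomm_ring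
    rw [e, Matrix.trace_sub, h1, h2, sub_zero]
  have h5 : N - Nᵀ = 0 := hD ▸ aux_eq_zero_of_trace_transpose_mul_self D h4
  exact (sub_eq_zero.mp h5).symm

/- ### Algebra of rotation generators -/

lemma aux_stdBasis_transpose {k : ℕ} (i j : Fin k) (c : ℝ) :
    (Matrix.single i j c)ᵀ = Matrix.single j i c := by
  ext a b
  simp [Matrix.single, Matrix.transpose_apply, and_comm]

lemma aux_rot_orth {k : ℕ} (W P : Matrix (Fin k) (Fin k) ℝ)
    (hWT : Wᵀ = -W) (hPT : Pᵀ = P) (hWP : W * P = W) (hPW : P * W = W)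
    (hWW : W * W = -P) (hPP : P * P = P) (a b : ℝ) (hab : a ^ 2 + b ^ 2 = 1) :
    (1 + a • W + (b - 1) • P)ᵀ * (1 + a • W + (b - 1) • P) = 1 := by
  have hT : (1 + a • W + (b - 1) • P)ᵀ = 1 + (-a) • W + (b - 1) • P := by
    simp [Matrix.transpose_add, Matrix.transpose_smul, hWT, hPT]
  rw [hT]
  simp only [Matrix.add_mul, Matrix.mul_add, Matrix.mul_one, Matrix.one_mul,
    Matrix.smul_mul, Matrix.mul_smul, hWP, hPW, hWW, hPP, smul_smul]
  match_scalars <;> nlinarith [hab]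

/- ### Calculus: derivative of `h` vanishes along rotation directions -/

lemma aux_fderiv_rot_gen {m n q : ℕ}
    (h : Matrix (Fin m) (Fin n) ℝ → (Fin q → ℝ))
    (hsmooth : ContDiff ℝ (⊤ : ℕ∞) h)
    (hinv : ∀ (X : Matrix (Fin m) (Fin n) ℝ) (Q : Matrix (Fin n) (Fin n) ℝ),
      Qᵀ * Q = 1 → h (X * Q) = h X)
    (X : Matrix (Fin m) (Fin n) ℝ) (W P : Matrix (Fin n) (Fin n) ℝ)
    (hWT : Wᵀ = -W) (hPT : Pᵀ = P) (hWP : W * P = W) (hPW : P * W = W)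
    (hWW : W * W = -P) (hPP : P * P = P) :
    fderiv ℝ h X (X * W) = 0 := by
  set c : ℝ → Matrix (Fin m) (Fin n) ℝ :=
    fun t => X + (Real.sin t • (X * W) + (Real.cos t - 1) • (X * P)) with hc
  have hc0 : c 0 = X := by simp [hc]
  have hcd : HasDerivAt c (X * W) 0 := by
    have d1 : HasDerivAt (fun t => Real.sin t • (X * W)) (Real.cos 0 • (X * W)) 0 :=
      (Real.hasDerivAt_sin 0).smul_const _
    have d2 : HasDerivAt (fun t => (Real.cos t - 1) • (X * P)) ((-Real.sin 0) • (X * P)) 0 :=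
      ((Real.hasDerivAt_cos 0).sub_const 1).smul_const _
    have := (d1.add d2).const_add X
    exact this.congr_deriv (by simp)
  have hconst : ∀ t, h (c t) = h X := by
    intro t
    have hQ : (1 + Real.sin t • W + (Real.cos t - 1) • P)ᵀ *
        (1 + Real.sin t • W + (Real.cos t - 1) • P) = 1 :=
      aux_rot_orth W P hWT hPT hWP hPW hWW hPP _ _ (Real.sin_sq_add_cos_sq t)
    have hXQ : c t = X * (1 + Real.sin t • W + (Real.cos t - 1) • P) := by
      simp [hc, Matrix.mul_add, Matrix.mul_one, Matrix.mul_smul, add_assoc]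
    rw [hXQ]
    exact hinv X _ hQ
  have hf : HasFDerivAt h (fderiv ℝ h X) (c 0) := by
    rw [hc0]; exact (hsmooth.differentiable (by simp) X).hasFDerivAt
  have hg1 : HasDerivAt (fun t => h (c t)) (fderiv ℝ h X (X * W)) 0 :=
    hf.comp_hasDerivAt 0 hcd
  have hg2 : HasDerivAt (fun t => h (c t)) 0 0 := by
    rw [show (fun t => h (c t)) = fun _ => h X from funext hconst]
    exact hasDerivAt_const 0 _
  exact hg1.unique hg2

lemma aux_fderiv_skew_zero {m n q : ℕ}
    (h : Matrix (Fin m) (Fin n) ℝ → (Fin q → ℝ))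
    (hsmooth : ContDiff ℝ (⊤ : ℕ∞) h)
    (hinv : ∀ (X : Matrix (Fin m) (Fin n) ℝ) (Q : Matrix (Fin n) (Fin n) ℝ),
      Qᵀ * Q = 1 → h (X * Q) = h X)
    (X : Matrix (Fin m) (Fin n) ℝ) (W : Matrix (Fin n) (Fin n) ℝ) (hW : Wᵀ = -W) :
    fderiv ℝ h X (X * W) = 0 := by
  have key : ∀ i j : Fin n,
      fderiv ℝ h X (X * (Matrix.single i j (1:ℝ) - Matrix.single j i 1)) = 0 := by
    intro i j
    rcases eq_or_ne i j with rfl | hij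
    · simp
    · set W0 : Matrix (Fin n) (Fin n) ℝ :=
        Matrix.single i j (1:ℝ) - Matrix.single j i 1 with hW0
      set P0 : Matrix (Fin n) (Fin n) ℝ :=
        Matrix.single i i (1:ℝ) + Matrix.single j j 1 with hP0
      have hWT : W0ᵀ = -W0 := by
        simp [hW0, Matrix.transpose_sub, aux_stdBasis_transpose, neg_sub]
      have hPT : P0ᵀ = P0 := by
        simp [hP0, Matrix.transpose_add, aux_stdBasis_transpose]
      have hWP : W0 * P0 = W0 := by
        simp [hW0, hP0, Matrix.sub_mul, Matrix.mul_add,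
          Matrix.single_mul_single_same, Matrix.single_mul_single_of_ne, hij, hij.symm]
        all_goals abel
      have hPW : P0 * W0 = W0 := by
        simp [hW0, hP0, Matrix.add_mul, Matrix.mul_sub,
          Matrix.single_mul_single_same, Matrix.single_mul_single_of_ne, hij, hij.symm]
        all_goals abel
      have hWW : W0 * W0 = -P0 := by
        simp [hW0, hP0, Matrix.sub_mul, Matrix.mul_sub,
          Matrix.single_mul_single_same, Matrix.single_mul_single_of_ne, hij, hij.symm]
        all_goals abel
      have hPP : P0 * P0 = P0 := by
        simp [hP0, Matrix.add_mul, Matrix.mul_add,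
          Matrix.single_mul_single_same, Matrix.single_mul_single_of_ne, hij, hij.symm]
        all_goals abel
      exact aux_fderiv_rot_gen h hsmooth hinv X W0 P0 hWT hPT hWP hPW hWW hPP
  have hsum : W + W = ∑ i, ∑ j,
      W i j • (Matrix.single i j (1:ℝ) - Matrix.single j i 1) := by
    have e1 : ∑ i, ∑ j, W i j • (Matrix.single i j (1:ℝ) - Matrix.single j i 1)
        = (∑ i, ∑ j, Matrix.single i j (W i j))
          - ∑ i, ∑ j, Matrix.single j i (W i j) := by
      simp [smul_sub, Finset.sum_sub_distrib]
    have e2 : ∑ i, ∑ j, Matrix.single i j (W i j) = W :=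
      (Matrix.matrix_eq_sum_single W).symm
    have e3 : ∑ i, ∑ j, Matrix.single j i (W i j) = Wᵀ := by
      rw [Finset.sum_comm]
      conv_rhs => rw [Matrix.matrix_eq_sum_single Wᵀ]
      exact Finset.sum_congr rfl fun j _ => Finset.sum_congr rfl fun i _ => by
        rw [Matrix.transpose_apply]
    rw [e1, e2, e3, hW, sub_neg_eq_add]
  have hzero : fderiv ℝ h X (X * (W + W)) = 0 := by
    rw [hsum, Matrix.mul_sum, map_sum]
    refine Finset.sum_eq_zero fun i _ => ?_
    rw [Matrix.mul_sum, map_sum]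
    refine Finset.sum_eq_zero fun j _ => ?_
    rw [Matrix.mul_smul, _root_.map_smul, key i j, smul_zero]
  rw [Matrix.mul_add, map_add] at hzero
  have h4 : (2:ℝ) • fderiv ℝ h X (X * W) = 0 := by
    rw [two_smul]; exact hzero
  exact (smul_eq_zero.mp h4).resolve_left (by norm_num)

lemma aux_fderiv_B_zero {m n q s : ℕ}
    (h : Matrix (Fin m) (Fin n) ℝ → (Fin q → ℝ))
    (hsmooth : ContDiff ℝ (⊤ : ℕ∞) h)
    (hinv : ∀ (X : Matrix (Fin m) (Fin n) ℝ) (Q : Matrix (Fin n) (Fin n) ℝ),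
      Qᵀ * Q = 1 → h (X * Q) = h X)
    (X : Matrix (Fin m) (Fin n) ℝ) (Vb : Matrix (Fin n) (Fin (n - s)) ℝ)
    (hVb : Vbᵀ * Vb = 1) (hXVb : X * Vb = 0)
    (B : Matrix (Fin m) (Fin (n - s)) ℝ) :
    fderiv ℝ h X (B * Vbᵀ) = 0 := by
  set Z : Matrix (Fin m) (Fin n) ℝ := B * Vbᵀ with hZ
  set Q : Matrix (Fin n) (Fin n) ℝ := 1 - (2:ℝ) • (Vb * Vbᵀ) with hQdef
  have hGG : (Vb * Vbᵀ) * (Vb * Vbᵀ) = Vb * Vbᵀ := by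
    rw [Matrix.mul_assoc, ← Matrix.mul_assoc Vbᵀ Vb Vbᵀ, hVb, Matrix.one_mul]
  have hQT : Qᵀ = Q := by
    simp [hQdef, Matrix.transpose_sub, Matrix.transpose_smul, Matrix.transpose_mul,
      Matrix.transpose_one, Matrix.transpose_transpose]
  have hQ : Qᵀ * Q = 1 := by
    rw [hQT, hQdef]
    simp only [Matrix.sub_mul, Matrix.mul_sub, Matrix.mul_one, Matrix.one_mul,
      Matrix.smul_mul, Matrix.mul_smul, hGG, smul_smul]
    module
  have hXQ : X * Q = X := by
    rw [hQdef]
    simp only [Matrix.mul_sub, Matrix.mul_one, Matrix.mul_smul, ← Matrix.mul_assoc, hXVb]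
    simp
  have hZQ : Z * Q = -Z := by
    rw [hQdef, hZ]
    have e : B * Vbᵀ * (Vb * Vbᵀ) = B * Vbᵀ := by
      rw [Matrix.mul_assoc, ← Matrix.mul_assoc Vbᵀ Vb Vbᵀ, hVb, Matrix.one_mul]
    simp only [Matrix.mul_sub, Matrix.mul_one, Matrix.mul_smul, e]
    module
  have heven : ∀ t : ℝ, h (X + t • Z) = h (X + t • (-Z)) := by
    intro t
    have harg : (X + t • (-Z)) * Q = X + t • Z := by
      rw [Matrix.add_mul, hXQ, Matrix.smul_mul, Matrix.neg_mul, hZQ, neg_neg]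
    calc h (X + t • Z) = h ((X + t • (-Z)) * Q) := by rw [harg]
    _ = h (X + t • (-Z)) := hinv _ _ hQ
  have hf : HasFDerivAt h (fderiv ℝ h X) X := (hsmooth.differentiable (by simp) X).hasFDerivAt
  have hd : ∀ M : Matrix (Fin m) (Fin n) ℝ,
      HasDerivAt (fun t : ℝ => h (X + t • M)) (fderiv ℝ h X M) 0 := by
    intro M
    have d1 : HasDerivAt (fun t : ℝ => X + t • M) M 0 := by
      have := ((hasDerivAt_id (0:ℝ)).smul_const M).const_add X
      exact this.congr_deriv (by simp)
    have hf' : HasFDerivAt h (fderiv ℝ h X) ((fun t : ℝ => X + t • M) 0) := by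
      simpa using hf
    exact hf'.comp_hasDerivAt 0 d1
  have h1 := hd Z
  have h2 := hd (-Z)
  rw [show (fun t : ℝ => h (X + t • (-Z))) = (fun t : ℝ => h (X + t • Z)) from
    (funext fun t => (heven t).symm)] at h2
  have h3 : fderiv ℝ h X Z = fderiv ℝ h X (-Z) := h1.unique h2
  rw [map_neg] at h3
  have h4 : (2:ℝ) • fderiv ℝ h X Z = 0 := by
    rw [two_smul]
    nth_rewrite 2 [h3]
    simp
  exact (smul_eq_zero.mp h4).resolve_left (by norm_num)

/-- With `h` smooth, orthogonally invariant, `h X = 0`, `rank X = s`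
and SVD `X = U Σ Vᵀ`: the normal space `(ker Dh_X)ᗮ` (w.r.t. the Frobenius inner
product `⟨A,B⟩ = tr(Aᵀ B)`) is contained in `{A X : Uᵀ A U symmetric}`, and the
orthogonal complement of `K_X = {U Σ Ω Vᵀ + B V⊥ᵀ : Ω skew, B}` equals that set. -/
theorem lemma_normal_H {m n q s : ℕ} (hsn : s ≤ n)
    (h : Matrix (Fin m) (Fin n) ℝ → (Fin q → ℝ))
    (hsmooth : ContDiff ℝ (⊤ : ℕ∞) h)
    (hinv : ∀ (X : Matrix (Fin m) (Fin n) ℝ) (Q : Matrix (Fin n) (Fin n) ℝ),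
      Qᵀ * Q = 1 → h (X * Q) = h X)
    (X : Matrix (Fin m) (Fin n) ℝ) (hX : h X = 0) (hrank : X.rank = s)
    (U : Matrix (Fin m) (Fin s) ℝ) (σ : Fin s → ℝ) (S : Matrix (Fin s) (Fin s) ℝ)
    (V : Matrix (Fin n) (Fin s) ℝ) (Vb : Matrix (Fin n) (Fin (n - s)) ℝ)
    (hU : Uᵀ * U = 1) (hV : Vᵀ * V = 1)
    (hS : S = Matrix.diagonal σ) (hσ : ∀ i, 0 < σ i)
    (hSVD : X = U * S * Vᵀ)
    (hVVb : Vᵀ * Vb = 0) (hVb : Vbᵀ * Vb = 1)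
    (hcompl : V * Vᵀ + Vb * Vbᵀ = 1) :
    ({Y | ∀ Z ∈ LinearMap.ker (fderiv ℝ h X).toLinearMap, ((Zᵀ * Y).trace = 0)} ⊆
        {Y | ∃ A : Matrix (Fin m) (Fin m) ℝ, Y = A * X ∧ (Uᵀ * A * U)ᵀ = Uᵀ * A * U}) ∧
    ({Y | ∀ Z ∈ {Z' | ∃ (Ω : Matrix (Fin s) (Fin s) ℝ) (B : Matrix (Fin m) (Fin (n - s)) ℝ),
          Ωᵀ = -Ω ∧ Z' = U * S * Ω * Vᵀ + B * Vbᵀ}, ((Zᵀ * Y).trace = 0)} =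
        {Y | ∃ A : Matrix (Fin m) (Fin m) ℝ, Y = A * X ∧ (Uᵀ * A * U)ᵀ = Uᵀ * A * U}) := by
  have hXVb : X * Vb = 0 := by rw [hSVD, Matrix.mul_assoc, hVVb, Matrix.mul_zero]
  have hSt : Sᵀ = S := by rw [hS, Matrix.diagonal_transpose]
  set T : Matrix (Fin s) (Fin s) ℝ := Matrix.diagonal (fun i => (σ i)⁻¹) with hT
  have hTt : Tᵀ = T := by rw [hT, Matrix.diagonal_transpose]
  have hST : S * T = 1 := by
    rw [hS, hT, Matrix.diagonal_mul_diagonal]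
    rw [show (fun i => σ i * (σ i)⁻¹) = fun _ => (1:ℝ) from
      funext fun i => mul_inv_cancel₀ (hσ i).ne']
    exact Matrix.diagonal_one
  have hTS : T * S = 1 := by
    rw [hS, hT, Matrix.diagonal_mul_diagonal]
    rw [show (fun i => (σ i)⁻¹ * σ i) = fun _ => (1:ℝ) from
      funext fun i => inv_mul_cancel₀ (hσ i).ne']
    exact Matrix.diagonal_one
  have part2 :
      ({Y | ∀ Z ∈ {Z' | ∃ (Ω : Matrix (Fin s) (Fin s) ℝ) (B : Matrix (Fin m) (Fin (n - s)) ℝ),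
          Ωᵀ = -Ω ∧ Z' = U * S * Ω * Vᵀ + B * Vbᵀ}, ((Zᵀ * Y).trace = 0)} =
        {Y | ∃ A : Matrix (Fin m) (Fin m) ℝ, Y = A * X ∧ (Uᵀ * A * U)ᵀ = Uᵀ * A * U}) := by
    ext Y
    simp only [Set.mem_setOf_eq]
    constructor
    · intro hY
      have hB : ∀ B : Matrix (Fin m) (Fin (n-s)) ℝ, ((B * Vbᵀ)ᵀ * Y).trace = 0 :=
        fun B => hY (B * Vbᵀ) ⟨0, B, by simp, by simp⟩
      have hYVb : Y * Vb = 0 := by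
        apply aux_eq_zero_of_trace_transpose_mul_self
        have e : ((Y * Vb * Vbᵀ)ᵀ * Y).trace = ((Y * Vb)ᵀ * (Y * Vb)).trace := by
          rw [Matrix.transpose_mul, Matrix.transpose_transpose, Matrix.mul_assoc,
            Matrix.trace_mul_comm, Matrix.mul_assoc]
        rw [← e]; exact hB (Y * Vb)
      have hYVV : Y * (V * Vᵀ) = Y := by
        have e : Y * (V * Vᵀ) + Y * (Vb * Vbᵀ) = Y := by
          rw [← Matrix.mul_add, hcompl, Matrix.mul_one]
        rwa [← Matrix.mul_assoc Y Vb Vbᵀ, hYVb, Matrix.zero_mul, add_zero] at e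
      have hN : (S * (Uᵀ * Y * V))ᵀ = S * (Uᵀ * Y * V) := by
        apply aux_symm_of_trace_skew
        intro Ω hΩ'
        have hmem := hY (U * S * Ω * Vᵀ) ⟨Ω, 0, hΩ', by simp⟩
        have e : ((U * S * Ω * Vᵀ)ᵀ * Y).trace = (Ωᵀ * (S * (Uᵀ * Y * V))).trace := by
          simp only [Matrix.transpose_mul, Matrix.transpose_transpose, hSt]
          rw [Matrix.mul_assoc, Matrix.trace_mul_comm]
          simp only [Matrix.mul_assoc]
        rw [← e]; exact hmem
      have hN' : (Uᵀ * Y * V)ᵀ * S = S * (Uᵀ * Y * V) := by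
        rw [← hSt]
        calc (Uᵀ * Y * V)ᵀ * Sᵀ = (S * (Uᵀ * Y * V))ᵀ :=
          (Matrix.transpose_mul S (Uᵀ * Y * V)).symm
        _ = Sᵀ * (Uᵀ * Y * V) := by rw [hN, hSt]
      refine ⟨Y * V * T * Uᵀ, ?_, ?_⟩
      · rw [hSVD]
        rw [show (Y * V * T * Uᵀ) * (U * S * Vᵀ) = Y * (V * Vᵀ) by
          simp only [Matrix.mul_assoc]
          rw [← Matrix.mul_assoc Uᵀ U (S * Vᵀ), hU, Matrix.one_mul,
            ← Matrix.mul_assoc T S Vᵀ, hTS, Matrix.one_mul]]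
        exact hYVV.symm
      · have eA : Uᵀ * (Y * V * T * Uᵀ) * U = (Uᵀ * Y * V) * T := by
          simp only [Matrix.mul_assoc]
          rw [hU, Matrix.mul_one]
        rw [eA, Matrix.transpose_mul, hTt]
        calc T * (Uᵀ * Y * V)ᵀ = T * (Uᵀ * Y * V)ᵀ * (S * T) := by
              rw [hST, Matrix.mul_one]
        _ = T * ((Uᵀ * Y * V)ᵀ * S) * T := by simp only [Matrix.mul_assoc]
        _ = T * (S * (Uᵀ * Y * V)) * T := by rw [hN']
        _ = (T * S) * ((Uᵀ * Y * V) * T) := by simp only [Matrix.mul_assoc]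
        _ = (Uᵀ * Y * V) * T := by rw [hTS, Matrix.one_mul]
    · rintro ⟨A, rfl, hsym⟩
      intro Z hZ
      obtain ⟨Ω, B, hΩ', rfl⟩ := hZ
      rw [hSVD, Matrix.transpose_add, Matrix.add_mul, Matrix.trace_add]
      have t2 : ((B * Vbᵀ)ᵀ * (A * (U * S * Vᵀ))).trace = 0 := by
        rw [Matrix.transpose_mul, Matrix.transpose_transpose, Matrix.mul_assoc,
          Matrix.trace_mul_comm]
        simp only [Matrix.mul_assoc]
        rw [hVVb]
        simp
      have t1 : ((U * S * Ω * Vᵀ)ᵀ * (A * (U * S * Vᵀ))).trace = 0 := by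
        have e : ((U * S * Ω * Vᵀ)ᵀ * (A * (U * S * Vᵀ))).trace
            = (Ωᵀ * (S * (Uᵀ * A * U) * S)).trace := by
          simp only [Matrix.transpose_mul, Matrix.transpose_transpose, hSt]
          rw [Matrix.mul_assoc, Matrix.trace_mul_comm]
          simp only [Matrix.mul_assoc]
          rw [hV, Matrix.mul_one]
        rw [e]
        apply aux_trace_skew_symm _ _ hΩ'
        rw [Matrix.transpose_mul, Matrix.transpose_mul, hSt, hsym]
        simp only [Matrix.mul_assoc]
      rw [t1, t2, add_zero]
  refine ⟨?_, part2⟩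
  intro Y hY
  rw [Set.mem_setOf_eq] at hY
  rw [← part2]
  intro Z hZ
  obtain ⟨Ω, B, hΩ', rfl⟩ := hZ
  apply hY
  apply LinearMap.mem_ker.mpr
  have z1 : fderiv ℝ h X (U * S * Ω * Vᵀ) = 0 := by
    have hWs : (V * Ω * Vᵀ)ᵀ = -(V * Ω * Vᵀ) := by
      rw [Matrix.transpose_mul, Matrix.transpose_mul, Matrix.transpose_transpose, hΩ']
      simp only [Matrix.mul_neg, Matrix.neg_mul, Matrix.mul_assoc]
    have e : X * (V * Ω * Vᵀ) = U * S * Ω * Vᵀ := by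
      rw [hSVD]
      simp only [Matrix.mul_assoc]
      rw [← Matrix.mul_assoc Vᵀ V (Ω * Vᵀ), hV, Matrix.one_mul]
    rw [← e]
    exact aux_fderiv_skew_zero h hsmooth hinv X _ hWs
  have z2 := aux_fderiv_B_zero h hsmooth hinv X Vb hVb hXVb B
  rw [map_add, ContinuousLinearMap.coe_coe, z1, z2, add_zero]
end
end

section
/- Let h: R^{m×n} → R^q be smooth and orthogonally invariant, and define h^s := h ∘ i^s where i^s: R^{m×s} → R^{m×n} maps H to [H 0]. Given X ∈ R^{m×n} with decomposition X = HV^T where H ∈ R^{m×s} and V ∈ St(n,s), it holds that h(X) = h^s(H) and Dh_X[KV^T] = Dh^s_H[K] for all K ∈ R^{m×s}. In particular, h(X) = 0 if and only if h^s(H) = 0. -/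
open Matrix

noncomputable section
attribute [local instance] Matrix.normedAddCommGroup Matrix.normedSpace

/-- The natural embedding `i^s : ℝ^{m×s} → ℝ^{m×n}`, `H ↦ [H 0]`. -/
def pad {m : ℕ} (s n : ℕ) (H : Matrix (Fin m) (Fin s) ℝ) : Matrix (Fin m) (Fin n) ℝ :=
  Matrix.of fun i j => if hj : (j : ℕ) < s then H i ⟨j, hj⟩ else 0

def padL {m s n : ℕ} : Matrix (Fin m) (Fin s) ℝ →ₗ[ℝ] Matrix (Fin m) (Fin n) ℝ where
  toFun := pad s n
  map_add' A B := by
    ext i j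
    simp only [pad, Matrix.add_apply, Matrix.of_apply]
    split <;> simp
  map_smul' c A := by
    ext i j
    simp only [pad, Matrix.smul_apply, Matrix.of_apply, RingHom.id_apply, smul_eq_mul]
    split <;> simp

def mulRightL {m n : ℕ} (Q : Matrix (Fin n) (Fin n) ℝ) :
    Matrix (Fin m) (Fin n) ℝ →ₗ[ℝ] Matrix (Fin m) (Fin n) ℝ where
  toFun Y := Y * Q
  map_add' A B := Matrix.add_mul A B Q
  map_smul' c A := Matrix.smul_mul c A Q

/-- With `h` smooth and orthogonally invariant, `hˢ := h ∘ iˢ`, and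
`X = H Vᵀ` with `V ∈ St(n,s)`: `h X = hˢ H`, the differentials agree via
`Dh_X[K Vᵀ] = Dhˢ_H[K]`, and `h X = 0 ↔ hˢ H = 0`. -/
theorem lemma_inheritance {m n q s : ℕ} (hsn : s ≤ n)
    (h : Matrix (Fin m) (Fin n) ℝ → (Fin q → ℝ))
    (hsmooth : ContDiff ℝ (⊤ : ℕ∞) h)
    (hinv : ∀ (X : Matrix (Fin m) (Fin n) ℝ) (Q : Matrix (Fin n) (Fin n) ℝ),
      Qᵀ * Q = 1 → h (X * Q) = h X)
    (X : Matrix (Fin m) (Fin n) ℝ)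
    (H : Matrix (Fin m) (Fin s) ℝ) (V : Matrix (Fin n) (Fin s) ℝ)
    (hV : Vᵀ * V = 1) (hdecomp : X = H * Vᵀ) :
    h X = (fun H' => h (pad s n H')) H ∧
    (∀ K : Matrix (Fin m) (Fin s) ℝ,
      fderiv ℝ h X (K * Vᵀ) = fderiv ℝ (fun H' => h (pad s n H')) H K) ∧
    (h X = 0 ↔ (fun H' => h (pad s n H')) H = 0) := by
  classical
  -- the columns of V, as an orthonormal family in EuclideanSpace
  set s' : Set (Fin n) := {j | (j : ℕ) < s} with hs'
  set v : Fin n → EuclideanSpace ℝ (Fin n) :=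
    fun j => if hj : (j : ℕ) < s then WithLp.toLp 2 (fun k => V k ⟨j, hj⟩) else 0 with hv'
  have hon : Orthonormal ℝ (s'.restrict v) := by
    rw [orthonormal_iff_ite]
    rintro ⟨i, hi⟩ ⟨j, hj⟩
    have hi' : (i : ℕ) < s := hi
    have hj' : (j : ℕ) < s := hj
    have : (inner ℝ (s'.restrict v ⟨i, hi⟩) (s'.restrict v ⟨j, hj⟩) : ℝ)
        = (Vᵀ * V) ⟨i, hi'⟩ ⟨j, hj'⟩ := by
      simp only [Set.restrict_apply, hv', hi', hj', dif_pos, PiLp.inner_apply,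
        RCLike.inner_apply', conj_trivial, Matrix.mul_apply, Matrix.transpose_apply]
      simp [Set.restrict, hi', hj']
    rw [this, hV]
    by_cases hij : i = j
    · subst hij; simp [Matrix.one_apply]
    · rw [Matrix.one_apply_ne (by simpa [Fin.ext_iff] using hij)]
      simp [Subtype.ext_iff, hij]
  obtain ⟨b, hb⟩ := hon.exists_orthonormalBasis_extension_of_card_eq
    (by simp [finrank_euclideanSpace_fin])
  -- the orthogonal matrix Q whose columns are b
  set Q : Matrix (Fin n) (Fin n) ℝ := Matrix.of fun k j => b j k with hQdef
  have hinner : ∀ i j, (inner ℝ (b i) (b j) : ℝ) = if i = j then 1 else 0 :=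
    orthonormal_iff_ite.mp b.orthonormal
  have hQ : Qᵀ * Q = 1 := by
    ext j l
    have := hinner j l
    simp only [PiLp.inner_apply, RCLike.inner_apply', conj_trivial] at this
    simp [Matrix.mul_apply, Matrix.one_apply, hQdef, this]
  -- key computation: (M Vᵀ) Q = pad M
  have key : ∀ M : Matrix (Fin m) (Fin s) ℝ, M * Vᵀ * Q = pad s n M := by
    intro M
    ext i j
    have col : ∀ a : Fin s, ∀ k, V k a = b (Fin.castLE hsn a) k := by
      intro a k
      have ha : ((Fin.castLE hsn a : Fin n) : ℕ) < s := a.isLt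
      have := hb (Fin.castLE hsn a) ha
      rw [this]
      simp [hv', ha]
    have step : ∀ a : Fin s, (∑ k, V k a * Q k j)
        = if (Fin.castLE hsn a : Fin n) = j then 1 else 0 := by
      intro a
      rw [← hinner (Fin.castLE hsn a) j]
      simp only [PiLp.inner_apply, RCLike.inner_apply', conj_trivial]
      exact Finset.sum_congr rfl fun k _ => by rw [col a k, hQdef]; rfl
    calc (M * Vᵀ * Q) i j = ∑ a, M i a * (∑ k, V k a * Q k j) := by
          simp only [Matrix.mul_apply, Matrix.transpose_apply, Finset.sum_mul,
            Finset.mul_sum]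
          rw [Finset.sum_comm]
          exact Finset.sum_congr rfl fun a _ => Finset.sum_congr rfl fun k _ => by ring
      _ = pad s n M i j := by
          simp only [step]
          by_cases hj : (j : ℕ) < s
          · rw [Finset.sum_eq_single (⟨j, hj⟩ : Fin s)]
            · simp [pad, hj, Fin.ext_iff]
            · intro a _ ha
              rw [if_neg (by simpa [Fin.ext_iff] using fun e => ha (Fin.ext e)), mul_zero]
            · simp
          · rw [Finset.sum_eq_zero, pad]
            · simp [hj]
            · intro a _
              rw [if_neg (by simp [Fin.ext_iff]; omega), mul_zero]
  have hXQ : X * Q = pad s n H := by rw [hdecomp]; exact key H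
  have hEq0 : h X = h (pad s n H) := by rw [← hXQ, hinv X Q hQ]
  have hdiff := hsmooth.differentiable (by simp)
  refine ⟨hEq0, ?_, by rw [hEq0]⟩
  intro K
  -- continuous linear maps
  let rQ : Matrix (Fin m) (Fin n) ℝ →L[ℝ] Matrix (Fin m) (Fin n) ℝ :=
    LinearMap.toContinuousLinearMap (mulRightL Q)
  let pL : Matrix (Fin m) (Fin s) ℝ →L[ℝ] Matrix (Fin m) (Fin n) ℝ :=
    LinearMap.toContinuousLinearMap padL
  have hfun : h = h ∘ rQ := funext fun Y => (hinv Y Q hQ).symm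
  have hdh : fderiv ℝ h X = (fderiv ℝ h (X * Q)).comp rQ := by
    conv_lhs => rw [hfun]
    refine (fderiv_comp X (hdiff _) rQ.differentiableAt).trans ?_
    refine (congrArg (fun L => (fderiv ℝ h (rQ X)).comp L) rQ.fderiv).trans ?_
    rfl
  have hdh2 : fderiv ℝ (fun H' => h (pad s n H')) H
      = (fderiv ℝ h (pad s n H)).comp pL := by
    have : (fun H' => h (pad s n H')) = h ∘ pL := rfl
    rw [this]
    refine (fderiv_comp H (hdiff _) pL.differentiableAt).trans ?_
    refine (congrArg (fun L => (fderiv ℝ h (pL H)).comp L) pL.fderiv).trans ?_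
    rfl
  rw [hdh, hdh2]
  simp only [ContinuousLinearMap.comp_apply]
  have h1 : rQ (K * Vᵀ) = pad s n K := key K
  have h2 : pL K = pad s n K := rfl
  rw [h1, h2, hXQ]

end
end

section
/- Let h: R^{m×n} → R^q be smooth, orthogonally invariant, and of full rank q on its zero level set H. For 1 ≤ s ≤ n, define h^s = h ∘ i^s: R^{m×s} → R^q with i^s(H) = [H 0]. If the level set H^s = {H ∈ R^{m×s} : h^s(H) = 0} is nonempty, then Dh^s has full rank q at every point of H^s; consequently H^s is an embedded submanifold of R^{m×s} of dimension ms − q. -/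
open Matrix

noncomputable section
attribute [local instance] Matrix.normedAddCommGroup Matrix.normedSpace

/-- `M` is a smooth embedded submanifold of dimension `d` of the ambient space `E`:
around each of its points it is the zero set of a smooth local defining function of
full rank (a submersion) into a space of the complementary dimension. -/
def IsEmbeddedSubmanifoldOfDim {E : Type*} [NormedAddCommGroup E] [NormedSpace ℝ E]
    (M : Set E) (d : ℕ) : Prop :=
  ∀ x ∈ M, ∃ (U : Set E) (Φ : E → (Fin (Module.finrank ℝ E - d) → ℝ)),
    IsOpen U ∧ x ∈ U ∧ ContDiff ℝ (⊤ : ℕ∞) Φ ∧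
    Function.Surjective (fderiv ℝ Φ x) ∧
    M ∩ U = U ∩ Φ ⁻¹' {0}

/-- `pad` as a continuous linear map. -/
def padCLM (m s n : ℕ) :
    Matrix (Fin m) (Fin s) ℝ →L[ℝ] Matrix (Fin m) (Fin n) ℝ :=
  LinearMap.toContinuousLinearMap
  { toFun := pad s n
    map_add' := by
      intro A B; ext i j
      simp only [pad, Matrix.add_apply, Matrix.of_apply]
      split <;> simp
    map_smul' := by
      intro c A; ext i j
      simp only [pad, Matrix.smul_apply, Matrix.of_apply, RingHom.id_apply]
      split <;> simp }

lemma padCLM_apply {m : ℕ} (s n : ℕ) (H : Matrix (Fin m) (Fin s) ℝ) :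
    padCLM m s n H = pad s n H := rfl

/-- right multiplication by a fixed matrix, as a continuous linear map -/
def mulRightCLM {m n : ℕ} (Q : Matrix (Fin n) (Fin n) ℝ) :
    Matrix (Fin m) (Fin n) ℝ →L[ℝ] Matrix (Fin m) (Fin n) ℝ :=
  LinearMap.toContinuousLinearMap
  { toFun := fun Y => Y * Q
    map_add' := fun A B => Matrix.add_mul A B Q
    map_smul' := fun c A => Matrix.smul_mul c A Q }

/-- Under the blanket assumption on `h`, the induced map
`hˢ = h ∘ iˢ` has full rank `q` (surjective differential) at every point of its zero
level set `Hˢ`; consequently, if `Hˢ` is nonempty it is an embedded submanifold of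
`ℝ^{m×s}` of dimension `m s − q`. -/
theorem prop_manifold_Hs {m n q s : ℕ} (hs1 : 1 ≤ s) (hsn : s ≤ n)
    (h : Matrix (Fin m) (Fin n) ℝ → (Fin q → ℝ))
    (hsmooth : ContDiff ℝ (⊤ : ℕ∞) h)
    (hinv : ∀ (X : Matrix (Fin m) (Fin n) ℝ) (Q : Matrix (Fin n) (Fin n) ℝ),
      Qᵀ * Q = 1 → h (X * Q) = h X)
    (hfullrank : ∀ X : Matrix (Fin m) (Fin n) ℝ, h X = 0 →
      Function.Surjective (fderiv ℝ h X)) :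
    (∀ H : Matrix (Fin m) (Fin s) ℝ, h (pad s n H) = 0 →
      Function.Surjective (fderiv ℝ (fun H' => h (pad s n H')) H)) ∧
    ((∃ H : Matrix (Fin m) (Fin s) ℝ, h (pad s n H) = 0) →
      IsEmbeddedSubmanifoldOfDim
        {H : Matrix (Fin m) (Fin s) ℝ | h (pad s n H) = 0} (m * s - q)) := by
  -- the orthogonal matrix Q = diag(1,…,1,-1,…,-1)
  set Q : Matrix (Fin n) (Fin n) ℝ :=
    Matrix.diagonal (fun j : Fin n => if (j : ℕ) < s then (1 : ℝ) else -1) with hQ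
  have hQorth : Qᵀ * Q = 1 := by
    rw [hQ, Matrix.diagonal_transpose, Matrix.diagonal_mul_diagonal]
    ext i j
    by_cases hij : i = j
    · subst hij
      simp only [Matrix.diagonal_apply_eq, Matrix.one_apply_eq]
      split <;> norm_num
    · simp [Matrix.diagonal_apply_ne _ hij, Matrix.one_apply_ne hij]
  -- pad H * Q = pad H
  have hpadQ : ∀ H : Matrix (Fin m) (Fin s) ℝ, pad s n H * Q = pad s n H := by
    intro H; ext i j
    rw [hQ, Matrix.mul_diagonal]
    by_cases hj : (j : ℕ) < s
    · simp [hj]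
    · simp [pad, hj]
  -- the key claim: surjectivity of the differential of hˢ
  have key : ∀ H : Matrix (Fin m) (Fin s) ℝ, h (pad s n H) = 0 →
      Function.Surjective (fderiv ℝ (fun H' => h (pad s n H')) H) := by
    intro H hH0
    set X : Matrix (Fin m) (Fin n) ℝ := pad s n H with hX
    have hdh : DifferentiableAt ℝ h X := (hsmooth.differentiable (by simp)) X
    -- derivative of hˢ is Dh_X ∘ pad
    have hcomp : fderiv ℝ (fun H' => h (pad s n H')) H =
        (fderiv ℝ h X).comp (padCLM m s n) := by
      have : (fun H' => h (pad s n H')) = h ∘ (padCLM m s n) := rfl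
      rw [this]
      exact (hdh.hasFDerivAt.comp H (padCLM m s n).hasFDerivAt).fderiv
    -- from invariance: Dh_X (V * Q) = Dh_X V
    have hQder : ∀ V : Matrix (Fin m) (Fin n) ℝ,
        fderiv ℝ h X (V * Q) = fderiv ℝ h X V := by
      intro V
      have hfun : (fun Y : Matrix (Fin m) (Fin n) ℝ => h (Y * Q)) = h := by
        funext Y; exact hinv Y Q hQorth
      have hXQ : X * Q = X := hpadQ H
      have h1 : HasFDerivAt (fun Y : Matrix (Fin m) (Fin n) ℝ => h (Y * Q))
          ((fderiv ℝ h X).comp (mulRightCLM Q)) X := by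
        have := ((hsmooth.differentiable (by simp)) (X * Q)).hasFDerivAt.comp X
          (mulRightCLM Q).hasFDerivAt
        rwa [hXQ] at this
      have h2 : HasFDerivAt h ((fderiv ℝ h X).comp (mulRightCLM Q)) X := by
        rwa [hfun] at h1
      have := h2.fderiv
      calc fderiv ℝ h X (V * Q) = ((fderiv ℝ h X).comp (mulRightCLM Q)) V := rfl
        _ = fderiv ℝ h X V := by rw [← this]
    -- now surjectivity
    intro b
    obtain ⟨V, hV⟩ := hfullrank X hH0 b
    -- W = (V + V*Q)/2 is supported on the first s columns
    set W : Matrix (Fin m) (Fin n) ℝ := (2 : ℝ)⁻¹ • (V + V * Q) with hW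
    have hWcol : ∀ (i : Fin m) (j : Fin n), ¬ (j : ℕ) < s → W i j = 0 := by
      intro i j hj
      have : (V * Q) i j = - V i j := by
        rw [hQ, Matrix.mul_diagonal]; simp [hj]
      simp [hW, Matrix.smul_apply, Matrix.add_apply, this]
    set W' : Matrix (Fin m) (Fin s) ℝ :=
      Matrix.of (fun i k => W i (Fin.castLE hsn k)) with hW'
    have hpadW' : pad s n W' = W := by
      ext i j
      by_cases hj : (j : ℕ) < s
      · have : (Fin.castLE hsn ⟨(j : ℕ), hj⟩) = j := by
          apply Fin.ext; rfl
        simp [pad, hj, hW', this]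
      · simp [pad, hj, hWcol i j hj]
    refine ⟨W', ?_⟩
    rw [hcomp]
    have : (padCLM m s n) W' = W := hpadW'
    simp only [ContinuousLinearMap.coe_comp', Function.comp_apply, this]
    have hDW : fderiv ℝ h X W = b := by
      rw [hW]
      rw [(fderiv ℝ h X).map_smul, map_add, hQder V, hV]
      funext k
      simp [Pi.smul_apply]
      ring
    exact hDW
  refine ⟨key, ?_⟩
  rintro ⟨H₀, hH₀⟩
  -- q ≤ m * s since the differential at H₀ is surjective
  have hrank : Module.finrank ℝ (Matrix (Fin m) (Fin s) ℝ) = m * s := by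
    rw [Module.finrank_matrix]
    simp
  have hq : q ≤ m * s := by
    have hsurj := key H₀ hH₀
    have h1 := (fderiv ℝ (fun H' => h (pad s n H')) H₀).toLinearMap.finrank_range_le
    have h2 : LinearMap.range (fderiv ℝ (fun H' => h (pad s n H')) H₀).toLinearMap = ⊤ :=
      LinearMap.range_eq_top.2 hsurj
    rw [h2, finrank_top, Module.finrank_fintype_fun_eq_card, Fintype.card_fin, hrank] at h1
    exact h1
  have hKq : Module.finrank ℝ (Matrix (Fin m) (Fin s) ℝ) - (m * s - q) = q := by
    rw [hrank]; omega
  -- the reindexing equivalence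
  set K := Module.finrank ℝ (Matrix (Fin m) (Fin s) ℝ) - (m * s - q) with hK
  have e : (Fin q → ℝ) ≃L[ℝ] (Fin K → ℝ) :=
    (LinearEquiv.funCongrLeft ℝ ℝ (finCongr hKq)).toContinuousLinearEquiv
  intro x hx
  refine ⟨Set.univ, fun H' => e (h (pad s n H')), isOpen_univ, Set.mem_univ x, ?_, ?_, ?_⟩
  · -- smoothness
    have h1 : ContDiff ℝ (⊤ : ℕ∞) (fun H' : Matrix (Fin m) (Fin s) ℝ => h (pad s n H')) :=
      hsmooth.comp (padCLM m s n).contDiff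
    exact (e : (Fin q → ℝ) →L[ℝ] (Fin K → ℝ)).contDiff.comp h1
  · -- surjectivity of the differential
    have hdiff : DifferentiableAt ℝ (fun H' => h (pad s n H')) x :=
      (hsmooth.comp (padCLM m s n).contDiff).differentiable (by simp) x
    have hfd : fderiv ℝ (fun H' => e (h (pad s n H'))) x =
        (e : (Fin q → ℝ) →L[ℝ] (Fin K → ℝ)).comp
          (fderiv ℝ (fun H' => h (pad s n H')) x) :=
      ((e : (Fin q → ℝ) →L[ℝ] (Fin K → ℝ)).hasFDerivAt.comp x
        hdiff.hasFDerivAt).fderiv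
    refine (show Function.Surjective (fderiv ℝ (fun H' => e (h (pad s n H'))) x) from ?_)
    rw [hfd]
    exact e.surjective.comp (key x hx)
  · -- level set description
    ext H'
    simp only [Set.mem_inter_iff, Set.mem_univ, true_and, and_true, Set.mem_setOf_eq,
      Set.mem_preimage, Set.mem_singleton_iff]
    constructor
    · intro hz; rw [hz]; exact map_zero e
    · intro hz
      have := congrArg e.symm hz
      rwa [ContinuousLinearEquiv.symm_apply_apply, map_zero] at this
end
end

section
/- Under the blanket assumption on h, with X ∈ H of rank s, X = HV^T (H ∈ R^{m×s}, V ∈ St(n,s)), the orthogonal projection of any E ∈ R^{m×n} onto T_X H is given by P_{T_X H}(E) = P_{T_H H^s}(EV) V^T + E V_⊥ V_⊥^T. -/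
open Matrix

noncomputable section
attribute [local instance] Matrix.normedAddCommGroup Matrix.normedSpace

/-- Splitting a sum over `Fin n` into the first `s` and the last `n - s` indices. -/
lemma sum_split {α : Type*} [AddCommMonoid α] {s n : ℕ} (hsn : s ≤ n) (f : Fin n → α) :
    ∑ k, f k = (∑ a : Fin s, f (Fin.castLE hsn a)) +
      ∑ b : Fin (n - s), f ⟨s + (b : ℕ), by omega⟩ := by
  have hadd : s + (n - s) = n := by omega
  rw [← Equiv.sum_comp (finCongr hadd) f, Fin.sum_univ_add]
  congr 1

lemma mul_mul_mul' {a b c d e : ℕ} (A : Matrix (Fin a) (Fin b) ℝ)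
    (B : Matrix (Fin b) (Fin c) ℝ) (C : Matrix (Fin c) (Fin d) ℝ)
    (D : Matrix (Fin d) (Fin e) ℝ) : (A * B) * (C * D) = A * (B * C) * D := by
  rw [Matrix.mul_assoc, ← Matrix.mul_assoc B C D, ← Matrix.mul_assoc]

/-- Right multiplication by `Vᵀ` as a continuous linear map. -/
def rmulCLM {m s n : ℕ} (V : Matrix (Fin n) (Fin s) ℝ) :
    Matrix (Fin m) (Fin s) ℝ →L[ℝ] Matrix (Fin m) (Fin n) ℝ :=
  LinearMap.toContinuousLinearMap
    { toFun := fun W => W * Vᵀ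
      map_add' := fun A B => Matrix.add_mul A B Vᵀ
      map_smul' := fun c A => by simp [Matrix.smul_mul] }

/-- Under the blanket assumption, with `X = H Vᵀ ∈ H` of rank `s`,
the Frobenius-orthogonal projection of `E` onto `T_X H = ker Dh_X` is
`P_{T_X H}(E) = P_{T_H Hˢ}(E V) Vᵀ + E V⊥ V⊥ᵀ`.  Here the orthogonal projection of
`E V` onto `T_H Hˢ = ker Dhˢ_H` is characterized by membership plus Frobenius
orthogonality of the residual. -/
theorem projection_onto_TXH {m n q s : ℕ} (hsn : s ≤ n)
    (h : Matrix (Fin m) (Fin n) ℝ → (Fin q → ℝ))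
    (hsmooth : ContDiff ℝ (⊤ : ℕ∞) h)
    (hinv : ∀ (X : Matrix (Fin m) (Fin n) ℝ) (Q : Matrix (Fin n) (Fin n) ℝ),
      Qᵀ * Q = 1 → h (X * Q) = h X)
    (hfullrank : ∀ X : Matrix (Fin m) (Fin n) ℝ, h X = 0 →
      Function.Surjective (fderiv ℝ h X))
    (X : Matrix (Fin m) (Fin n) ℝ) (hX : h X = 0) (hrank : X.rank = s)
    (H : Matrix (Fin m) (Fin s) ℝ) (V : Matrix (Fin n) (Fin s) ℝ)
    (Vb : Matrix (Fin n) (Fin (n - s)) ℝ)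
    (hV : Vᵀ * V = 1) (hdecomp : X = H * Vᵀ)
    (hVVb : Vᵀ * Vb = 0) (hVb : Vbᵀ * Vb = 1)
    (hcompl : V * Vᵀ + Vb * Vbᵀ = 1)
    (E : Matrix (Fin m) (Fin n) ℝ) (K : Matrix (Fin m) (Fin s) ℝ)
    -- `K` is the orthogonal projection of `E V` onto `T_H Hˢ`:
    (hKmem : K ∈ LinearMap.ker (fderiv ℝ (fun H' => h (pad s n H')) H : Matrix (Fin m) (Fin s) ℝ →ₗ[ℝ] (Fin q → ℝ)))
    (hKproj : ∀ K' ∈ LinearMap.ker (fderiv ℝ (fun H' => h (pad s n H')) H : Matrix (Fin m) (Fin s) ℝ →ₗ[ℝ] (Fin q → ℝ)),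
      (((E * V - K)ᵀ * K').trace = 0)) :
    -- then `K Vᵀ + E V⊥ V⊥ᵀ` is the orthogonal projection of `E` onto `T_X H`:
    K * Vᵀ + E * Vb * Vbᵀ ∈ LinearMap.ker (fderiv ℝ h X : Matrix (Fin m) (Fin n) ℝ →ₗ[ℝ] (Fin q → ℝ)) ∧
    ∀ Z ∈ LinearMap.ker (fderiv ℝ h X : Matrix (Fin m) (Fin n) ℝ →ₗ[ℝ] (Fin q → ℝ)),
      ((E - (K * Vᵀ + E * Vb * Vbᵀ))ᵀ * Z).trace = 0 := by
  classical
  have hdiff : Differentiable ℝ h := hsmooth.differentiable (by simp)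
  have hVbV : Vbᵀ * V = 0 := by
    have := congrArg Matrix.transpose hVVb
    simpa using this
  -- Step 1: the derivative of h at X kills every matrix of the form W * Vbᵀ.
  have key : ∀ W : Matrix (Fin m) (Fin (n - s)) ℝ, fderiv ℝ h X (W * Vbᵀ) = 0 := by
    intro W
    set Z : Matrix (Fin m) (Fin n) ℝ := W * Vbᵀ with hZ
    set Q : Matrix (Fin n) (Fin n) ℝ := V * Vᵀ - Vb * Vbᵀ with hQ
    have hQorth : Qᵀ * Q = 1 := by
      have hQsymm : Qᵀ = Q := by
        simp [hQ, Matrix.transpose_sub, Matrix.transpose_mul]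
      rw [hQsymm, hQ]
      have e1 : V * Vᵀ * (V * Vᵀ) = V * Vᵀ := by
        rw [mul_mul_mul', hV]; simp
      have e2 : V * Vᵀ * (Vb * Vbᵀ) = 0 := by
        rw [mul_mul_mul', hVVb]; simp
      have e3 : Vb * Vbᵀ * (V * Vᵀ) = 0 := by
        rw [mul_mul_mul', hVbV]; simp
      have e4 : Vb * Vbᵀ * (Vb * Vbᵀ) = Vb * Vbᵀ := by
        rw [mul_mul_mul', hVb]; simp
      rw [Matrix.sub_mul, Matrix.mul_sub, Matrix.mul_sub, e1, e2, e3, e4]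
      rw [sub_zero, zero_sub, sub_neg_eq_add]
      exact hcompl
    have hXQ : X * Q = X := by
      rw [hdecomp, hQ, Matrix.mul_sub, mul_mul_mul', mul_mul_mul', hV, hVVb]
      simp
    have hZQ : Z * Q = -Z := by
      rw [hZ, hQ, Matrix.mul_sub, mul_mul_mul', mul_mul_mul', hVbV, hVb]
      simp
    have heven : ∀ t : ℝ, h (X + t • Z) = h (X - t • Z) := by
      intro t
      have hmul : (X + t • Z) * Q = X - t • Z := by
        rw [Matrix.add_mul, Matrix.smul_mul, hXQ, hZQ, smul_neg, ← sub_eq_add_neg]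
      calc h (X + t • Z) = h ((X + t • Z) * Q) := (hinv _ Q hQorth).symm
        _ = h (X - t • Z) := by rw [hmul]
    have hc1 : HasDerivAt (fun t : ℝ => X + t • Z) Z 0 := by
      have := ((hasDerivAt_id (0 : ℝ)).smul_const Z).const_add X
      simp only [id_eq, one_smul] at this
      exact this
    have hc2 : HasDerivAt (fun t : ℝ => X - t • Z) (-Z) 0 := by
      have := ((hasDerivAt_id (0 : ℝ)).smul_const (-Z)).const_add X
      simp only [id_eq, one_smul, smul_neg, ← sub_eq_add_neg] at this
      exact this
    have hf : HasFDerivAt h (fderiv ℝ h X) (X + (0 : ℝ) • Z) := by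
      simpa using (hdiff X).hasFDerivAt
    have hf' : HasFDerivAt h (fderiv ℝ h X) (X - (0 : ℝ) • Z) := by
      simpa using (hdiff X).hasFDerivAt
    have hphi : HasDerivAt (fun t : ℝ => h (X + t • Z)) (fderiv ℝ h X Z) 0 :=
      hf.comp_hasDerivAt 0 hc1
    have hpsi : HasDerivAt (fun t : ℝ => h (X - t • Z)) (fderiv ℝ h X (-Z)) 0 :=
      hf'.comp_hasDerivAt 0 hc2
    have hpsi' : HasDerivAt (fun t : ℝ => h (X + t • Z)) (-(fderiv ℝ h X Z)) 0 := by
      have : (fun t : ℝ => h (X + t • Z)) = fun t : ℝ => h (X - t • Z) := funext heven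
      rw [this]
      simpa using hpsi
    have hneg : fderiv ℝ h X Z = -(fderiv ℝ h X Z) := hphi.unique hpsi'
    have h2 : (2 : ℝ) • fderiv ℝ h X Z = 0 := by
      rw [two_smul]
      nth_rewrite 2 [hneg]
      simp
    have := smul_eq_zero.mp h2
    simpa using this.resolve_left (by norm_num)
  -- Step 2: the padded function agrees with W ↦ h (W * Vᵀ).
  have hpadh : ∀ W : Matrix (Fin m) (Fin s) ℝ, h (pad s n W) = h (W * Vᵀ) := by
    intro W
    set Q3 : Matrix (Fin n) (Fin n) ℝ :=
      Matrix.of fun i j => if hi : (i : ℕ) < s then V j ⟨(i : ℕ), hi⟩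
        else Vb j ⟨(i : ℕ) - s, by omega⟩ with hQ3
    have hQ3A : ∀ (a : Fin s) (x : Fin n), Q3 (Fin.castLE hsn a) x = V x a := by
      intro a x
      simp [hQ3]
    have hQ3B : ∀ (b : Fin (n - s)) (hb : s + (b : ℕ) < n) (x : Fin n),
        Q3 (⟨s + (b : ℕ), hb⟩ : Fin n) x = Vb x b := by
      intro b hb x
      have hns : ¬ (s + (b : ℕ) < s) := by omega
      rw [hQ3]
      simp only [Matrix.of_apply, dif_neg hns]
      exact congrArg (Vb x) (Fin.ext (by simp))
    have hpadA : ∀ (W' : Matrix (Fin m) (Fin s) ℝ) (i : Fin m) (a : Fin s),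
        pad s n W' i (Fin.castLE hsn a) = W' i a := by
      intro W' i a
      simp [pad]
    have hpadB : ∀ (W' : Matrix (Fin m) (Fin s) ℝ) (i : Fin m) (b : Fin (n - s))
        (hb : s + (b : ℕ) < n), pad s n W' i (⟨s + (b : ℕ), hb⟩ : Fin n) = 0 := by
      intro W' i b hb
      have hns : ¬ (s + (b : ℕ) < s) := by omega
      simp [pad, hns]
    have hQ3orth : Q3ᵀ * Q3 = 1 := by
      ext i j
      rw [Matrix.mul_apply]
      simp only [Matrix.transpose_apply]
      rw [sum_split hsn (fun k => Q3 k i * Q3 k j)]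
      simp only [hQ3A, hQ3B]
      have h1 : (∑ a : Fin s, V i a * V j a) = (V * Vᵀ) i j := by
        simp [Matrix.mul_apply]
      have h2 : (∑ b : Fin (n - s), Vb i b * Vb j b) = (Vb * Vbᵀ) i j := by
        simp [Matrix.mul_apply]
      rw [h1, h2, ← Matrix.add_apply, hcompl]
    have hmulQ3 : pad s n W * Q3 = W * Vᵀ := by
      ext i j
      rw [Matrix.mul_apply]
      rw [sum_split hsn (fun k => pad s n W i k * Q3 k j)]
      simp only [hpadA, hpadB, hQ3A, zero_mul, Finset.sum_const_zero, add_zero]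
      simp [Matrix.mul_apply]
    calc h (pad s n W) = h (pad s n W * Q3) := (hinv _ Q3 hQ3orth).symm
      _ = h (W * Vᵀ) := by rw [hmulQ3]
  -- Step 3: the derivative of the padded function.
  have hgder : ∀ K' : Matrix (Fin m) (Fin s) ℝ,
      fderiv ℝ (fun H' => h (pad s n H')) H K' = fderiv ℝ h X (K' * Vᵀ) := by
    intro K'
    have hfun : (fun H' : Matrix (Fin m) (Fin s) ℝ => h (pad s n H'))
        = fun W => h (W * Vᵀ) := funext hpadh
    have hL : HasFDerivAt (fun W : Matrix (Fin m) (Fin s) ℝ => W * Vᵀ)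
        (rmulCLM V) H := (rmulCLM V).hasFDerivAt
    have hf : HasFDerivAt h (fderiv ℝ h X) (H * Vᵀ) := by
      rw [← hdecomp]
      exact (hdiff X).hasFDerivAt
    have hcomp : HasFDerivAt (fun W : Matrix (Fin m) (Fin s) ℝ => h (W * Vᵀ))
        ((fderiv ℝ h X).comp (rmulCLM V)) H := hf.comp H hL
    rw [hfun, hcomp.fderiv]
    rfl
  have hKmem' : fderiv ℝ h X (K * Vᵀ) = 0 := by
    rw [← hgder K]
    exact LinearMap.mem_ker.mp hKmem
  constructor
  · rw [LinearMap.mem_ker]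
    have hadd : fderiv ℝ h X (K * Vᵀ + E * Vb * Vbᵀ)
        = fderiv ℝ h X (K * Vᵀ) + fderiv ℝ h X (E * Vb * Vbᵀ) := map_add _ _ _
    rw [ContinuousLinearMap.coe_coe, hadd, hKmem', key (E * Vb)]
    simp
  · intro Z hZ
    have hZ0 : fderiv ℝ h X Z = 0 := LinearMap.mem_ker.mp hZ
    have hZsplit : Z * V * Vᵀ = Z - Z * Vb * Vbᵀ := by
      have hzz : Z * (V * Vᵀ + Vb * Vbᵀ) = Z := by rw [hcompl, Matrix.mul_one]
      have : Z * (V * Vᵀ) + Z * (Vb * Vbᵀ) = Z := by rw [← Matrix.mul_add, hzz]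
      rw [← Matrix.mul_assoc, ← Matrix.mul_assoc] at this
      exact eq_sub_of_add_eq this
    have hZV : Z * V ∈ LinearMap.ker (fderiv ℝ (fun H' => h (pad s n H')) H : Matrix (Fin m) (Fin s) ℝ →ₗ[ℝ] (Fin q → ℝ)) := by
      rw [LinearMap.mem_ker, ContinuousLinearMap.coe_coe, hgder, hZsplit, map_sub, hZ0, key (Z * Vb)]
      simp
    have hE : E * V * Vᵀ + E * Vb * Vbᵀ = E := by
      have hzz : E * (V * Vᵀ + Vb * Vbᵀ) = E := by rw [hcompl, Matrix.mul_one]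
      have : E * (V * Vᵀ) + E * (Vb * Vbᵀ) = E := by rw [← Matrix.mul_add, hzz]
      rw [← Matrix.mul_assoc, ← Matrix.mul_assoc] at this
      exact this
    have hres : E - (K * Vᵀ + E * Vb * Vbᵀ) = (E * V - K) * Vᵀ := by
      nth_rewrite 1 [← hE]
      rw [Matrix.sub_mul]
      abel
    rw [hres]
    have hcyc : ((E * V - K) * Vᵀ)ᵀ * Z = V * ((E * V - K)ᵀ * Z) := by
      rw [Matrix.transpose_mul, Matrix.transpose_transpose, Matrix.mul_assoc]
    rw [hcyc, Matrix.trace_mul_comm, Matrix.mul_assoc]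
    exact hKproj (Z * V) hZV
end
end

section
/- Let h satisfy the blanket assumption, and let X ∈ R_s^{m×n} ∩ H (matrices of rank exactly s in the level set) with SVD X = UΣV^T = HV^T, H = UΣ. Then the intersection of tangent spaces is T_X R_s^{m×n} ∩ T_X H = {KV^T + UJV_⊥^T : K ∈ T_H H^s, J ∈ R^{s×(n−s)}}. -/
open Matrix

noncomputable section
attribute [local instance] Matrix.normedAddCommGroup Matrix.normedSpace

lemma vmv_mul {ι κ τ : Type*} [Fintype κ] (u : ι → ℝ) (v w : κ → ℝ) (z : τ → ℝ) :
    vecMulVec u v * vecMulVec w z = (v ⬝ᵥ w) • vecMulVec u z := by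
  ext i j
  simp only [Matrix.mul_apply, vecMulVec_apply, Matrix.smul_apply, dotProduct, smul_eq_mul,
    Finset.sum_mul]
  exact Finset.sum_congr rfl fun k _ => by ring

lemma mul_vmv {ι κ τ : Type*} [Fintype κ] (X : Matrix ι κ ℝ) (u : κ → ℝ) (v : τ → ℝ) :
    X * vecMulVec u v = vecMulVec (X *ᵥ u) v := by
  ext i j
  simp only [Matrix.mul_apply, vecMulVec_apply, Matrix.mulVec, dotProduct, Finset.sum_mul]
  exact Finset.sum_congr rfl fun k _ => by ring

lemma vmv_transpose {ι τ : Type*} (u : ι → ℝ) (v : τ → ℝ) :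
    (vecMulVec u v)ᵀ = vecMulVec v u := by
  ext i j; simp [vecMulVec_apply, mul_comm]

lemma rot_orth {ν : Type*} [Fintype ν] [DecidableEq ν] (a b : ν → ℝ)
    (haa : a ⬝ᵥ a = 1) (hbb : b ⬝ᵥ b = 1) (hab : a ⬝ᵥ b = 0) (hba : b ⬝ᵥ a = 0)
    (c s' : ℝ) (hcs : c ^ 2 + s' ^ 2 = 1) :
    (1 + (c - 1) • (vecMulVec a a + vecMulVec b b) + s' • (vecMulVec b a - vecMulVec a b))ᵀ *
    (1 + (c - 1) • (vecMulVec a a + vecMulVec b b) + s' • (vecMulVec b a - vecMulVec a b)) = 1 := by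
  set A := vecMulVec a a + vecMulVec b b with hA
  set W := vecMulVec b a - vecMulVec a b with hW
  have hAA : A * A = A := by
    simp [hA, add_mul, mul_add, vmv_mul, haa, hbb, hab, hba]
  have hAW : A * W = W := by
    simp [hA, hW, add_mul, mul_sub, vmv_mul, haa, hbb, hab, hba]
  have hWA : W * A = W := by
    simp [hA, hW, sub_mul, mul_add, vmv_mul, haa, hbb, hab, hba]
    abel
  have hWW : W * W = -A := by
    simp [hA, hW, sub_mul, mul_sub, vmv_mul, haa, hbb, hab, hba]
    abel
  have hT : (1 + (c - 1) • A + s' • W)ᵀ = 1 + (c - 1) • A - s' • W := by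
    simp [hA, hW, transpose_add, transpose_smul, transpose_sub, vmv_transpose]
    module
  rw [hT]
  have expand : (1 + (c - 1) • A - s' • W) * (1 + (c - 1) • A + s' • W)
      = 1 + ((c - 1) * (c - 1) + 2 * (c - 1) + s' * s') • A := by
    simp only [mul_add, add_mul, sub_mul, mul_sub, one_mul, mul_one, smul_mul_assoc,
      mul_smul_comm, hAA, hAW, hWA, hWW, smul_smul]
    module
  rw [expand]
  have h0 : (c - 1) * (c - 1) + 2 * (c - 1) + s' * s' = 0 := by nlinarith [hcs]
  rw [h0, zero_smul, add_zero]

lemma fderiv_rot {m n q : ℕ} (h : Matrix (Fin m) (Fin n) ℝ → (Fin q → ℝ))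
    (hd : Differentiable ℝ h)
    (hinv : ∀ (X : Matrix (Fin m) (Fin n) ℝ) (Q : Matrix (Fin n) (Fin n) ℝ),
      Qᵀ * Q = 1 → h (X * Q) = h X)
    (X : Matrix (Fin m) (Fin n) ℝ) (a b : Fin n → ℝ)
    (haa : a ⬝ᵥ a = 1) (hbb : b ⬝ᵥ b = 1) (hab : a ⬝ᵥ b = 0) (hba : b ⬝ᵥ a = 0) :
    fderiv ℝ h X (vecMulVec (X *ᵥ b) a - vecMulVec (X *ᵥ a) b) = 0 := by
  set A := vecMulVec a a + vecMulVec b b with hA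
  set W := vecMulVec b a - vecMulVec a b with hW
  set c : ℝ → Matrix (Fin m) (Fin n) ℝ :=
    fun t => X * (1 + (Real.cos t - 1) • A + Real.sin t • W) with hcdef
  have hconst : ∀ t, c t = X + (Real.cos t - 1) • (X * A) + Real.sin t • (X * W) := by
    intro t; simp only [hcdef]
    rw [Matrix.mul_add, Matrix.mul_add, Matrix.mul_one, Matrix.mul_smul, Matrix.mul_smul]
  have hc : HasDerivAt c (X * W) 0 := by
    have h1 : HasDerivAt (fun t : ℝ => Real.cos t - 1) (-Real.sin 0) 0 := by
      simpa using (Real.hasDerivAt_cos 0).sub_const 1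
    have h2 := ((hasDerivAt_const (0:ℝ) X).add (h1.smul_const (X * A))).add
      ((Real.hasDerivAt_sin 0).smul_const (X * W))
    have : (fun t : ℝ => X + (Real.cos t - 1) • (X * A) + Real.sin t • (X * W)) = c :=
      funext fun t => (hconst t).symm
    have h3 : HasDerivAt (fun t : ℝ => X + (Real.cos t - 1) • (X * A) + Real.sin t • (X * W))
        (0 + -Real.sin 0 • (X * A) + Real.cos 0 • (X * W)) 0 := h2
    rw [this] at h3
    simpa using h3
  have hc0 : c 0 = X := by simp [hcdef]
  have hcomp : HasDerivAt (fun t => h (c t)) (fderiv ℝ h X (X * W)) 0 := by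
    have hf : HasFDerivAt h (fderiv ℝ h X) (c 0) := hc0.symm ▸ (hd X).hasFDerivAt
    exact hf.comp_hasDerivAt 0 hc
  have hval : (fun t => h (c t)) = fun _ => h X := by
    funext t
    exact hinv X _ (rot_orth a b haa hbb hab hba (Real.cos t) (Real.sin t)
      (Real.cos_sq_add_sin_sq t))
  rw [hval] at hcomp
  have := hcomp.unique (hasDerivAt_const 0 (h X))
  rw [hW, Matrix.mul_sub, mul_vmv, mul_vmv] at this
  exact this

/-- Under the blanket assumption, for `X ∈ R_s^{m×n} ∩ H` with SVD
`X = U Σ Vᵀ = H Vᵀ`, `H = U Σ`: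
`T_X R_s ∩ T_X H = {K Vᵀ + U J V⊥ᵀ : K ∈ T_H Hˢ, J ∈ ℝ^{s×(n−s)}}`. -/
theorem prop_manifold_s_cap_H {m n q s : ℕ} (hsm : s ≤ m) (hsn : s ≤ n)
    (h : Matrix (Fin m) (Fin n) ℝ → (Fin q → ℝ))
    (hsmooth : ContDiff ℝ (⊤ : ℕ∞) h)
    (hinv : ∀ (X : Matrix (Fin m) (Fin n) ℝ) (Q : Matrix (Fin n) (Fin n) ℝ),
      Qᵀ * Q = 1 → h (X * Q) = h X)
    (hfullrank : ∀ X : Matrix (Fin m) (Fin n) ℝ, h X = 0 →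
      Function.Surjective (fderiv ℝ h X))
    (X : Matrix (Fin m) (Fin n) ℝ) (hX : h X = 0) (hrank : X.rank = s)
    (U : Matrix (Fin m) (Fin s) ℝ) (Ub : Matrix (Fin m) (Fin (m - s)) ℝ)
    (σ : Fin s → ℝ) (S : Matrix (Fin s) (Fin s) ℝ)
    (V : Matrix (Fin n) (Fin s) ℝ) (Vb : Matrix (Fin n) (Fin (n - s)) ℝ)
    (H : Matrix (Fin m) (Fin s) ℝ)
    (hU : Uᵀ * U = 1) (hV : Vᵀ * V = 1)
    (hUUb : Uᵀ * Ub = 0) (hUb : Ubᵀ * Ub = 1) (hUcompl : U * Uᵀ + Ub * Ubᵀ = 1)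
    (hVVb : Vᵀ * Vb = 0) (hVb : Vbᵀ * Vb = 1) (hVcompl : V * Vᵀ + Vb * Vbᵀ = 1)
    (hS : S = Matrix.diagonal σ) (hσ : ∀ i, 0 < σ i)
    (hSVD : X = U * S * Vᵀ) (hH : H = U * S) :
    {Z | ∃ (A : Matrix (Fin s) (Fin s) ℝ) (B : Matrix (Fin s) (Fin (n - s)) ℝ)
        (C : Matrix (Fin (m - s)) (Fin s) ℝ),
        Z = U * A * Vᵀ + U * B * Vbᵀ + Ub * C * Vᵀ} ∩
      (LinearMap.ker (fderiv ℝ h X :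
        Matrix (Fin m) (Fin n) ℝ →ₗ[ℝ] (Fin q → ℝ)) : Set (Matrix (Fin m) (Fin n) ℝ)) =
    {Z | ∃ (K : Matrix (Fin m) (Fin s) ℝ) (J : Matrix (Fin s) (Fin (n - s)) ℝ),
        K ∈ LinearMap.ker ((fderiv ℝ (fun H' => h (pad s n H')) H :
          Matrix (Fin m) (Fin s) ℝ →ₗ[ℝ] (Fin q → ℝ))) ∧
        Z = K * Vᵀ + U * J * Vbᵀ} := by
  have hd : Differentiable ℝ h := hsmooth.differentiable (by simp)
  have hVbV : Vbᵀ * V = 0 := by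
    have := congrArg Matrix.transpose hVVb
    simpa using this
  -- the orthogonal completion matrix Q = [V Vb]
  have hsn' : s + (n - s) = n := by omega
  set e : Fin s ⊕ Fin (n - s) ≃ Fin n := finSumFinEquiv.trans (finCongr hsn') with he
  set Qm : Matrix (Fin n) (Fin n) ℝ := (fromCols V Vb).submatrix id e.symm with hQmdef
  have hQm : Qmᵀ * Qm = 1 := by
    rw [hQmdef, transpose_submatrix, transpose_fromCols,
      ← Matrix.submatrix_mul _ _ e.symm (id : Fin n → Fin n) e.symm Function.bijective_id,
      fromRows_mul_fromCols, hV, hVVb, hVbV, hVb, Matrix.fromBlocks_one,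
      submatrix_one_equiv]
  -- pad H' = H' Vᵀ Q
  have pad_eq : ∀ H' : Matrix (Fin m) (Fin s) ℝ, pad s n H' = H' * Vᵀ * Qm := by
    intro H'
    have hVQ : Vᵀ * Qm = (fromCols (1 : Matrix (Fin s) (Fin s) ℝ) 0).submatrix id e.symm := by
      rw [hQmdef, ← Matrix.submatrix_id_id Vᵀ,
        ← Matrix.submatrix_mul Vᵀ (fromCols V Vb) (id : Fin s → Fin s) (id : Fin n → Fin n)
          e.symm Function.bijective_id, mul_fromCols, hV, hVVb]
    rw [Matrix.mul_assoc, hVQ]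
    ext i j
    rcases hje : e.symm j with k | k
    · have hj : (j : ℕ) = (k : ℕ) := by
        have := congrArg e hje
        rw [Equiv.apply_symm_apply] at this
        subst this
        simp [he, finSumFinEquiv]
      have hjs : (j : ℕ) < s := hj ▸ k.isLt
      have : (∑ p, H' i p * ((fromCols (1 : Matrix (Fin s) (Fin s) ℝ) 0).submatrix id e.symm) p j)
          = H' i k := by
        simp only [submatrix_apply, id_eq, hje, fromCols_apply_inl]
        have : (∑ p, H' i p * (1 : Matrix (Fin s) (Fin s) ℝ) p k)
            = (H' * (1 : Matrix (Fin s) (Fin s) ℝ)) i k := by rw [Matrix.mul_apply]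
        rw [this, Matrix.mul_one]
      rw [Matrix.mul_apply]
      dsimp only [pad, Matrix.of_apply]
      rw [this, dif_pos hjs]
      congr 1
      exact Fin.ext hj
    · have hj : (j : ℕ) = s + (k : ℕ) := by
        have := congrArg e hje
        rw [Equiv.apply_symm_apply] at this
        subst this
        simp [he, finSumFinEquiv]
      have hjs : ¬ (j : ℕ) < s := by omega
      rw [Matrix.mul_apply]
      dsimp only [pad, Matrix.of_apply]
      rw [dif_neg hjs]
      simp [submatrix_apply, hje]
  -- the continuous linear map K ↦ K Vᵀ
  set L : Matrix (Fin m) (Fin s) ℝ →ₗ[ℝ] Matrix (Fin m) (Fin n) ℝ :=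
    { toFun := fun K => K * Vᵀ
      map_add' := fun a b => Matrix.add_mul a b Vᵀ
      map_smul' := fun r a => Matrix.smul_mul r a Vᵀ } with hLdef
  set Lc : Matrix (Fin m) (Fin s) ℝ →L[ℝ] Matrix (Fin m) (Fin n) ℝ :=
    LinearMap.toContinuousLinearMap L with hLcdef
  have hLc : ∀ K, Lc K = K * Vᵀ := fun K => rfl
  have hXL : Lc H = X := by rw [hLc, hH, hSVD]
  have hpadf : (fun H' : Matrix (Fin m) (Fin s) ℝ => h (pad s n H')) = fun H' => h (Lc H') := by
    funext H'
    rw [pad_eq H', hLc]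
    exact hinv _ Qm hQm
  have hfd : fderiv ℝ (fun H' => h (pad s n H')) H = (fderiv ℝ h X).comp Lc := by
    rw [hpadf]
    have hg : HasFDerivAt h (fderiv ℝ h X) (Lc H) := hXL.symm ▸ (hd X).hasFDerivAt
    exact (hg.comp H Lc.hasFDerivAt).fderiv
  -- key2 : fderiv h X kills U J Vbᵀ
  have base : ∀ (k : Fin s) (l : Fin (n - s)),
      fderiv ℝ h X (vecMulVec (fun i => U i k) (fun j => Vb j l)) = 0 := by
    intro k l
    set a : Fin n → ℝ := fun i => V i k with ha
    set b : Fin n → ℝ := fun i => Vb i l with hb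
    have haa : a ⬝ᵥ a = 1 := by
      have := congrFun (congrFun hV k) k
      simpa [Matrix.mul_apply, dotProduct, Matrix.one_apply] using this
    have hbb : b ⬝ᵥ b = 1 := by
      have := congrFun (congrFun hVb l) l
      simpa [Matrix.mul_apply, dotProduct, Matrix.one_apply] using this
    have hab : a ⬝ᵥ b = 0 := by
      have := congrFun (congrFun hVVb k) l
      simpa [Matrix.mul_apply, dotProduct] using this
    have hba : b ⬝ᵥ a = 0 := by
      have := congrFun (congrFun hVbV l) k
      simpa [Matrix.mul_apply, dotProduct] using this
    have hXV : X * V = U * S := by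
      rw [hSVD, Matrix.mul_assoc, hV, Matrix.mul_one]
    have hXa : X *ᵥ a = fun i => σ k * U i k := by
      funext i
      have h1 : (X *ᵥ a) i = (X * V) i k := by
        simp [Matrix.mulVec, dotProduct, Matrix.mul_apply, ha]
      rw [h1, hXV, hS, Matrix.mul_diagonal]
      ring
    have hXVb : X * Vb = 0 := by
      rw [hSVD, Matrix.mul_assoc, hVVb, Matrix.mul_zero]
    have hXb : X *ᵥ b = 0 := by
      funext i
      have h1 : (X *ᵥ b) i = (X * Vb) i l := by
        simp [Matrix.mulVec, dotProduct, Matrix.mul_apply, hb]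
      rw [h1, hXVb]
      rfl
    have h0 := fderiv_rot h hd hinv X a b haa hbb hab hba
    rw [hXa, hXb] at h0
    have h1 : vecMulVec (0 : Fin m → ℝ) a = 0 := by
      ext i j; simp [vecMulVec_apply]
    have h2 : vecMulVec (fun i => σ k * U i k) b
        = σ k • vecMulVec (fun i => U i k) b := by
      ext i j; simp [vecMulVec_apply]; ring
    rw [h1, h2, zero_sub, map_neg, ContinuousLinearMap.map_smul, neg_eq_zero, smul_eq_zero] at h0
    rcases h0 with h0 | h0
    · exact absurd h0 (ne_of_gt (hσ k))
    · exact h0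
  have key2 : ∀ J : Matrix (Fin s) (Fin (n - s)) ℝ, fderiv ℝ h X (U * J * Vbᵀ) = 0 := by
    intro J
    have hdecomp : U * J * Vbᵀ
        = ∑ k : Fin s, ∑ l : Fin (n - s),
            J k l • vecMulVec (fun i => U i k) (fun j => Vb j l) := by
      ext i j
      simp only [Matrix.sum_apply, Matrix.smul_apply, vecMulVec_apply, smul_eq_mul,
        Matrix.mul_apply, Matrix.transpose_apply, Finset.sum_mul]
      rw [Finset.sum_comm]
      exact Finset.sum_congr rfl fun k _ => Finset.sum_congr rfl fun l _ => by ring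
    rw [hdecomp, map_sum]
    refine Finset.sum_eq_zero fun k _ => ?_
    rw [map_sum]
    refine Finset.sum_eq_zero fun l _ => ?_
    rw [ContinuousLinearMap.map_smul, base k l, smul_zero]
  -- the set equality
  ext Z
  simp only [Set.mem_inter_iff, Set.mem_setOf_eq, SetLike.mem_coe, LinearMap.mem_ker,
    ContinuousLinearMap.coe_coe]
  constructor
  · rintro ⟨⟨A, B, C, rfl⟩, hker⟩
    refine ⟨U * A + Ub * C, B, ?_, ?_⟩
    · rw [hfd, ContinuousLinearMap.coe_comp', Function.comp_apply, hLc]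
      have hsplit : (U * A + Ub * C) * Vᵀ
          = (U * A * Vᵀ + U * B * Vbᵀ + Ub * C * Vᵀ) - U * B * Vbᵀ := by
        rw [Matrix.add_mul]; abel
      rw [hsplit, map_sub, hker, key2 B, sub_zero]
    · rw [Matrix.add_mul]; abel
  · rintro ⟨K, J, hK, rfl⟩
    constructor
    · refine ⟨Uᵀ * K, J, Ubᵀ * K, ?_⟩
      have hcombine : U * (Uᵀ * K) * Vᵀ + U * J * Vbᵀ + Ub * (Ubᵀ * K) * Vᵀ
          = (U * Uᵀ + Ub * Ubᵀ) * (K * Vᵀ) + U * J * Vbᵀ := by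
        simp only [Matrix.add_mul, Matrix.mul_assoc]
        abel
      rw [hcombine, hUcompl, Matrix.one_mul]
    · rw [hfd, ContinuousLinearMap.coe_comp', Function.comp_apply, hLc] at hK
      rw [map_add, hK, key2 J, add_zero]
end
end

section
/- Under the blanket assumption on h, for every X ∈ R_{≤r}^{m×n} ∩ H, the intersection rule holds for Bouligand tangent cones: T_X(R_{≤r}^{m×n} ∩ H) = T_X R_{≤r}^{m×n} ∩ T_X H, and the Fréchet normal cone decomposes as a direct sum N_X(R_{≤r}^{m×n} ∩ H) = N_X R_{≤r}^{m×n} ⊕ N_X H of orthogonal linear subspaces. -/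
open Matrix
open Filter Topology

noncomputable section
attribute [local instance] Matrix.normedAddCommGroup Matrix.normedSpace

/-- The Bouligand tangent cone of a set `s` at `x`. -/
def bouligandCone {E : Type*} [NormedAddCommGroup E] [NormedSpace ℝ E]
    (s : Set E) (x : E) : Set E :=
  {y | ∃ (u : ℕ → E) (t : ℕ → ℝ), (∀ k, u k ∈ s) ∧ (∀ k, 0 < t k) ∧
    Filter.Tendsto t Filter.atTop (nhds 0) ∧
    Filter.Tendsto (fun k => (t k)⁻¹ • (u k - x)) Filter.atTop (nhds y)}

/-- The polar of a set of matrices w.r.t. the Frobenius inner product. -/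
def polarCone {m n : ℕ} (s : Set (Matrix (Fin m) (Fin n) ℝ)) :
    Set (Matrix (Fin m) (Fin n) ℝ) :=
  {Y | ∀ Z ∈ s, (Zᵀ * Y).trace ≤ 0}

/-- The Fréchet normal cone: the polar of the Bouligand tangent cone. -/
def frechetNormalCone {m n : ℕ} (s : Set (Matrix (Fin m) (Fin n) ℝ))
    (x : Matrix (Fin m) (Fin n) ℝ) : Set (Matrix (Fin m) (Fin n) ℝ) :=
  polarCone (bouligandCone s x)

set_option maxHeartbeats 1000000

namespace IR

variable {m n q r : ℕ}

/-- entrywise identification with Euclidean space -/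
def matE (m n : ℕ) : Matrix (Fin m) (Fin n) ℝ ≃ₗ[ℝ] EuclideanSpace ℝ (Fin m × Fin n) where
  toFun A := WithLp.toLp 2 (fun p : Fin m × Fin n => A p.1 p.2)
  map_add' := by intros; rfl
  map_smul' := by intros; rfl
  invFun v := Matrix.of fun i j => v (i, j)
  left_inv := fun A => rfl
  right_inv := fun v => rfl

lemma inner_matE (A B : Matrix (Fin m) (Fin n) ℝ) :
    (inner ℝ (matE m n A) (matE m n B) : ℝ) = (Aᵀ * B).trace := by
  simp [matE, PiLp.inner_apply, Matrix.trace, Matrix.diag, Matrix.mul_apply,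
    Fintype.sum_prod_type, RCLike.inner_apply, mul_comm]
  exact Finset.sum_comm

lemma norm_matmul_le {k l p : ℕ} (A : Matrix (Fin k) (Fin l) ℝ) (B : Matrix (Fin l) (Fin p) ℝ) :
    ‖A * B‖ ≤ l * ‖A‖ * ‖B‖ := by
  have h0 : (0:ℝ) ≤ l * ‖A‖ * ‖B‖ := by positivity
  rw [Matrix.norm_le_iff h0]
  intro i j
  calc ‖(A * B) i j‖ = |∑ x, A i x * B x j| := by simp [Matrix.mul_apply]
    _ ≤ ∑ x : Fin l, |A i x * B x j| := Finset.abs_sum_le_sum_abs _ _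
    _ ≤ ∑ _x : Fin l, ‖A‖ * ‖B‖ := by
        refine Finset.sum_le_sum fun x _ => ?_
        rw [abs_mul]
        exact mul_le_mul (A.norm_entry_le_entrywise_sup_norm)
          (B.norm_entry_le_entrywise_sup_norm) (abs_nonneg _) (norm_nonneg _)
    _ = l * ‖A‖ * ‖B‖ := by simp [mul_assoc]


variable {m n q : ℕ}

def rowE (X : Matrix (Fin m) (Fin n) ℝ) (i : Fin m) : EuclideanSpace ℝ (Fin n) :=
  WithLp.toLp 2 (fun j => X i j)

def rowSpan (X : Matrix (Fin m) (Fin n) ℝ) : Submodule ℝ (EuclideanSpace ℝ (Fin n)) :=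
  Submodule.span ℝ (Set.range (rowE X))

def pr (X : Matrix (Fin m) (Fin n) ℝ) (v : EuclideanSpace ℝ (Fin n)) : EuclideanSpace ℝ (Fin n) :=
  ((rowSpan X).orthogonalProjectionOnto v : EuclideanSpace ℝ (Fin n))

def Pmat (X : Matrix (Fin m) (Fin n) ℝ) : Matrix (Fin n) (Fin n) ℝ :=
  Matrix.of fun i j => pr X (EuclideanSpace.single j (1:ℝ)) i

lemma pr_row (X : Matrix (Fin m) (Fin n) ℝ) (i : Fin m) :
    pr X (rowE X i) = rowE X i := by
  unfold pr
  rw [← Submodule.starProjection_apply, Submodule.starProjection_eq_self_iff.mpr]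
  exact Submodule.subset_span (Set.mem_range_self i)

lemma pr_orth (X a : Matrix (Fin m) (Fin n) ℝ) (ha : a * Xᵀ = 0) (i : Fin m) :
    pr X (rowE a i) = 0 := by
  unfold pr
  have hm : rowE a i ∈ (rowSpan X)ᗮ := by
    rw [Submodule.mem_orthogonal]
    intro u hu
    induction hu using Submodule.span_induction with
    | mem v hv =>
      obtain ⟨l, rfl⟩ := hv
      have h0 : ((a * Xᵀ) i l : ℝ) = 0 := by rw [ha]; rfl
      rw [Matrix.mul_apply] at h0
      simpa [PiLp.inner_apply, RCLike.inner_apply, rowE, mul_comm] using h0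
    | zero => simp
    | add v w _ _ hv hw => rw [inner_add_left, hv, hw, add_zero]
    | smul c v _ hv => rw [inner_smul_left, hv, mul_zero]
  rw [Submodule.orthogonalProjectionOnto_apply_of_mem_orthogonal hm, Submodule.coe_zero]

lemma pr_apply_eq_inner (X : Matrix (Fin m) (Fin n) ℝ) (v : EuclideanSpace ℝ (Fin n)) (j : Fin n) :
    pr X v j = (inner ℝ v (pr X (EuclideanSpace.single j (1:ℝ))) : ℝ) := by
  unfold pr
  rw [← Submodule.starProjection_apply, ← Submodule.starProjection_apply,
    ← Submodule.inner_starProjection_left_eq_right]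
  simp [EuclideanSpace.inner_single_right]

lemma mul_Pmat_apply {k : ℕ} (X : Matrix (Fin m) (Fin n) ℝ) (A : Matrix (Fin k) (Fin n) ℝ)
    (i : Fin k) (j : Fin n) :
    (A * Pmat X) i j = pr X (rowE A i) j := by
  rw [Matrix.mul_apply, pr_apply_eq_inner]
  simp only [PiLp.inner_apply, RCLike.inner_apply, starRingEnd_apply, star_trivial]
  exact Finset.sum_congr rfl fun x _ => mul_comm _ _

lemma mul_Pmat_self (X : Matrix (Fin m) (Fin n) ℝ) : X * Pmat X = X := by
  ext i j
  rw [mul_Pmat_apply, pr_row]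
  rfl

lemma mul_Pmat_zero (X a : Matrix (Fin m) (Fin n) ℝ) (ha : a * Xᵀ = 0) : a * Pmat X = 0 := by
  ext i j
  rw [mul_Pmat_apply, pr_orth X a ha]
  rfl

lemma pr_single_symm (X : Matrix (Fin m) (Fin n) ℝ) (i j : Fin n) :
    pr X (EuclideanSpace.single j (1:ℝ)) i = pr X (EuclideanSpace.single i (1:ℝ)) j := by
  rw [pr_apply_eq_inner, pr_apply_eq_inner]
  unfold pr
  rw [← Submodule.starProjection_apply, ← Submodule.starProjection_apply,
    ← Submodule.inner_starProjection_left_eq_right]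
  exact real_inner_comm _ _

lemma Pmat_transpose (X : Matrix (Fin m) (Fin n) ℝ) : (Pmat X)ᵀ = Pmat X := by
  ext i j
  show Pmat X j i = Pmat X i j
  exact pr_single_symm X j i

lemma Pmat_idem (X : Matrix (Fin m) (Fin n) ℝ) : Pmat X * Pmat X = Pmat X := by
  ext i j
  rw [mul_Pmat_apply]
  have hrow : rowE (Pmat X) i = pr X (EuclideanSpace.single i (1:ℝ)) := by
    ext l
    exact pr_single_symm X i l
  rw [hrow]
  have hpp : pr X (pr X (EuclideanSpace.single i (1:ℝ))) = pr X (EuclideanSpace.single i (1:ℝ)) :=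
    Submodule.starProjection_eq_self_iff.mpr (((rowSpan X).orthogonalProjectionOnto _).2)
  rw [hpp]
  exact pr_single_symm X j i

/-- the reflection across the row space of `X` -/
def Qmat (X : Matrix (Fin m) (Fin n) ℝ) : Matrix (Fin n) (Fin n) ℝ :=
  (2:ℝ) • Pmat X - 1

lemma Qmat_orth (X : Matrix (Fin m) (Fin n) ℝ) : (Qmat X)ᵀ * Qmat X = 1 := by
  have hT : (Qmat X)ᵀ = Qmat X := by
    unfold Qmat
    rw [Matrix.transpose_sub, Matrix.transpose_smul, Pmat_transpose, Matrix.transpose_one]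
  rw [hT]
  unfold Qmat
  have h := Pmat_idem X
  rw [Matrix.sub_mul, Matrix.mul_sub, Matrix.mul_sub, Matrix.smul_mul, Matrix.mul_smul, h]
  rw [Matrix.mul_one, Matrix.one_mul]
  rw [smul_smul]
  ext i j
  simp [Matrix.sub_apply, Matrix.smul_apply]
  ring

lemma mul_Qmat_self (X : Matrix (Fin m) (Fin n) ℝ) : X * Qmat X = X := by
  unfold Qmat
  rw [Matrix.mul_sub, Matrix.mul_smul, mul_Pmat_self, Matrix.mul_one, two_smul]
  abel

lemma mul_Qmat_neg (X a : Matrix (Fin m) (Fin n) ℝ) (ha : a * Xᵀ = 0) : a * Qmat X = -a := by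
  unfold Qmat
  rw [Matrix.mul_sub, Matrix.mul_smul, mul_Pmat_zero X a ha, Matrix.mul_one, smul_zero]
  abel

/-- Key invariance consequence: the derivative of `h` kills matrices whose rows are
orthogonal to the rows of `X`. -/
lemma fderiv_zero_of_rows_orth
    (h : Matrix (Fin m) (Fin n) ℝ → (Fin q → ℝ))
    (hsmooth : ContDiff ℝ (⊤ : ℕ∞) h)
    (hinv : ∀ (Y : Matrix (Fin m) (Fin n) ℝ) (Q : Matrix (Fin n) (Fin n) ℝ),
      Qᵀ * Q = 1 → h (Y * Q) = h Y)
    (X a : Matrix (Fin m) (Fin n) ℝ) (ha : a * Xᵀ = 0) :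
    fderiv ℝ h X a = 0 := by
  set D := fderiv ℝ h X with hD
  have heq : ∀ t : ℝ, h (X + t • a) = h (X - t • a) := by
    intro t
    have h1 := hinv (X + t • a) (Qmat X) (Qmat_orth X)
    have h2 : (X + t • a) * Qmat X = X - t • a := by
      rw [Matrix.add_mul, Matrix.smul_mul, mul_Qmat_self, mul_Qmat_neg X a ha, smul_neg]
      abel
    rw [h2] at h1
    exact h1.symm
  have hDiff : HasFDerivAt h D X := (hsmooth.differentiable (by simp) X).hasFDerivAt
  have hc1 : HasDerivAt (fun t : ℝ => X + t • a) a 0 := by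
    have := ((hasDerivAt_id' (0:ℝ)).smul_const a).const_add X
    simp only [one_smul] at this
    exact this
  have hc2 : HasDerivAt (fun t : ℝ => X - t • a) (-a) 0 := by
    have := ((hasDerivAt_id' (0:ℝ)).smul_const a).const_sub X
    simp only [one_smul] at this
    exact this
  have hDiff1 : HasFDerivAt h D ((fun t : ℝ => X + t • a) 0) := by simpa using hDiff
  have hDiff2 : HasFDerivAt h D ((fun t : ℝ => X - t • a) 0) := by simpa using hDiff
  have hφ1 : HasDerivAt (fun t : ℝ => h (X + t • a)) (D a) 0 :=
    hDiff1.comp_hasDerivAt 0 hc1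
  have hφ2 : HasDerivAt (fun t : ℝ => h (X - t • a)) (D (-a)) 0 :=
    hDiff2.comp_hasDerivAt 0 hc2
  have : (fun t : ℝ => h (X + t • a)) = fun t : ℝ => h (X - t • a) := funext heq
  rw [this] at hφ1
  have huniq : D a = D (-a) := hφ1.unique hφ2
  rw [map_neg] at huniq
  have h2a : (2:ℝ) • D a = 0 := by
    rw [two_smul]
    nth_rewrite 2 [huniq]
    simp
  have := smul_eq_zero.mp h2a
  rcases this with h' | h'
  · norm_num at h'
  · exact h'



lemma tendsto_u {E : Type*} [NormedAddCommGroup E] [NormedSpace ℝ E]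
    {u : ℕ → E} {t : ℕ → ℝ} {x y : E} (ht : ∀ k, 0 < t k)
    (ht0 : Tendsto t atTop (𝓝 0))
    (hw : Tendsto (fun k => (t k)⁻¹ • (u k - x)) atTop (𝓝 y)) :
    Tendsto u atTop (𝓝 x) := by
  have h1 : Tendsto (fun k => t k • ((t k)⁻¹ • (u k - x))) atTop (𝓝 ((0:ℝ) • y)) :=
    ht0.smul hw
  have h2 : (fun k => t k • ((t k)⁻¹ • (u k - x))) = fun k => u k - x := by
    funext k
    rw [smul_smul, mul_inv_cancel₀ (ht k).ne', one_smul]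
  rw [h2, zero_smul] at h1
  have := h1.add_const x
  simpa using this

lemma smul_eq_sub {E : Type*} [NormedAddCommGroup E] [NormedSpace ℝ E]
    {u : ℕ → E} {t : ℕ → ℝ} {x : E} (ht : ∀ k, 0 < t k) (k : ℕ) :
    t k • ((t k)⁻¹ • (u k - x)) = u k - x := by
  rw [smul_smul, mul_inv_cancel₀ (ht k).ne', one_smul]

lemma cone_zero_mem {E : Type*} [NormedAddCommGroup E] [NormedSpace ℝ E]
    {s : Set E} {x : E} (hx : x ∈ s) : (0:E) ∈ bouligandCone s x := by
  refine ⟨fun _ => x, fun k => ((k:ℝ)+1)⁻¹, fun _ => hx, fun k => by positivity, ?_, ?_⟩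
  · simpa [one_div] using tendsto_one_div_add_atTop_nhds_zero_nat (𝕜 := ℝ)
  · simpa using (tendsto_const_nhds : Tendsto (fun _ : ℕ => (0:E)) atTop (𝓝 0))

/-- multiplication on the left by a fixed matrix, as a linear map -/
def mulLeftLM {k l p : ℕ} (A : Matrix (Fin k) (Fin l) ℝ) :
    Matrix (Fin l) (Fin p) ℝ →ₗ[ℝ] Matrix (Fin k) (Fin p) ℝ where
  toFun U := A * U
  map_add' := Matrix.mul_add A
  map_smul' c U := (Matrix.mul_smul A c U)

/-- multiplication on the right by a fixed matrix, as a linear map -/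
def mulRightLM {k l p : ℕ} (X : Matrix (Fin l) (Fin p) ℝ) :
    Matrix (Fin k) (Fin l) ℝ →ₗ[ℝ] Matrix (Fin k) (Fin p) ℝ where
  toFun A := A * X
  map_add' A B := Matrix.add_mul A B X
  map_smul' c A := (Matrix.smul_mul c A X)

lemma continuous_mulLeft {k l p : ℕ} (A : Matrix (Fin k) (Fin l) ℝ) :
    Continuous fun U : Matrix (Fin l) (Fin p) ℝ => A * U :=
  (mulLeftLM A).continuous_of_finiteDimensional

/-- The Bouligand cone to the rank variety is invariant under adding `A * X`. -/
lemma cone_add_mulX {m n r : ℕ} {X y : Matrix (Fin m) (Fin n) ℝ}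
    (hy : y ∈ bouligandCone {X' : Matrix (Fin m) (Fin n) ℝ | X'.rank ≤ r} X)
    (A : Matrix (Fin m) (Fin m) ℝ) :
    y + A * X ∈ bouligandCone {X' : Matrix (Fin m) (Fin n) ℝ | X'.rank ≤ r} X := by
  obtain ⟨u, t, hus, ht, ht0, hw⟩ := hy
  refine ⟨fun k => (1 + t k • A) * u k, t, ?_, ht, ht0, ?_⟩
  · intro k
    exact le_trans (Matrix.rank_mul_le_right _ _) (hus k)
  · have hu : Tendsto u atTop (𝓝 X) := tendsto_u ht ht0 hw
    have h1 : (fun k => (t k)⁻¹ • ((1 + t k • A) * u k - X))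
        = fun k => (t k)⁻¹ • (u k - X) + A * u k := by
      funext k
      rw [Matrix.add_mul, Matrix.one_mul, Matrix.smul_mul]
      rw [show u k + t k • (A * u k) - X = (u k - X) + t k • (A * u k) by abel]
      rw [smul_add, smul_smul, inv_mul_cancel₀ (ht k).ne', one_smul]
    rw [h1]
    exact hw.add (((continuous_mulLeft A).tendsto X).comp hu)

/-- The difference quotients of `h` along a cone sequence converge to `D y`. -/
lemma tendsto_h_along {E F : Type*} [NormedAddCommGroup E] [NormedSpace ℝ E]
    [NormedAddCommGroup F] [NormedSpace ℝ F]
    {h : E → F} {X y : E} {D : E →L[ℝ] F} (hD : HasFDerivAt h D X)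
    {u : ℕ → E} {t : ℕ → ℝ} (ht : ∀ k, 0 < t k) (ht0 : Tendsto t atTop (𝓝 0))
    (hw : Tendsto (fun k => (t k)⁻¹ • (u k - X)) atTop (𝓝 y)) :
    Tendsto (fun k => (t k)⁻¹ • (h (u k) - h X)) atTop (𝓝 (D y)) := by
  have hu : Tendsto u atTop (𝓝 X) := tendsto_u ht ht0 hw
  set g : E → F := fun Z => h Z - h X - D (Z - X) with hg
  have hlo : (fun k => g (u k)) =o[atTop] fun k => u k - X :=
    (hD.isLittleO).comp_tendsto hu
  have hzero : Tendsto (fun k => (t k)⁻¹ • g (u k)) atTop (𝓝 0) := by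
    rw [NormedAddCommGroup.tendsto_nhds_zero]
    intro ε hε
    have hypos : (0:ℝ) < ‖y‖ + 1 := by positivity
    set c := ε / (2 * (‖y‖ + 1)) with hc
    have hcpos : 0 < c := by positivity
    have h1 := hlo.def hcpos
    have h2 : ∀ᶠ k in atTop, ‖(t k)⁻¹ • (u k - X)‖ < ‖y‖ + 1 :=
      (hw.norm).eventually_lt_const (lt_add_one _)
    filter_upwards [h1, h2] with k hk1 hk2
    have htk := ht k
    have hnorm : ‖u k - X‖ = t k * ‖(t k)⁻¹ • (u k - X)‖ := by
      rw [norm_smul, Real.norm_eq_abs, abs_of_pos (inv_pos.mpr htk)]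
      field_simp
    calc ‖(t k)⁻¹ • g (u k)‖ = (t k)⁻¹ * ‖g (u k)‖ := by
          rw [norm_smul, Real.norm_eq_abs, abs_of_pos (inv_pos.mpr htk)]
      _ ≤ (t k)⁻¹ * (c * ‖u k - X‖) := by
          exact mul_le_mul_of_nonneg_left hk1 (le_of_lt (inv_pos.mpr htk))
      _ = c * ‖(t k)⁻¹ • (u k - X)‖ := by rw [hnorm]; field_simp
      _ < c * (‖y‖ + 1) := by exact (mul_lt_mul_iff_right₀ hcpos).mpr hk2
      _ = ε / 2 := by rw [hc]; field_simp
      _ < ε := by linarith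
  have hDw : Tendsto (fun k => D ((t k)⁻¹ • (u k - X))) atTop (𝓝 (D y)) :=
    (D.continuous.tendsto y).comp hw
  have heq : (fun k => (t k)⁻¹ • (h (u k) - h X))
      = fun k => (t k)⁻¹ • g (u k) + D ((t k)⁻¹ • (u k - X)) := by
    funext k
    rw [hg]
    rw [D.map_smul, ← smul_add]
    congr 1
    simp only []
    abel
  rw [heq]
  simpa using hzero.add hDw


/-- a matrix whose rows lie in the row span of `X` is of the form `A * X` -/
lemma exists_eq_mul_of_rows_mem {m n : ℕ} (X : Matrix (Fin m) (Fin n) ℝ)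
    (Z : Matrix (Fin m) (Fin n) ℝ) (hZ : ∀ i, rowE Z i ∈ rowSpan X) :
    ∃ A : Matrix (Fin m) (Fin m) ℝ, Z = A * X := by
  have hch : ∀ i, ∃ c : Fin m → ℝ, ∑ l, c l • rowE X l = rowE Z i := by
    intro i
    have := hZ i
    rw [rowSpan] at this
    exact (Submodule.mem_span_range_iff_exists_fun ℝ).mp this
  choose A hA using hch
  refine ⟨Matrix.of A, ?_⟩
  ext i j
  have := congrArg (fun v : EuclideanSpace ℝ (Fin n) => v j) (hA i)
  rw [Matrix.mul_apply]
  simp [rowE] at this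
  rw [← this]
  exact Finset.sum_congr rfl fun l _ => by simp

/-- decomposition: any matrix splits as `A * X` plus a matrix with rows orthogonal
to the rows of `X`. -/
lemma decomp_AX {m n : ℕ} (X Z : Matrix (Fin m) (Fin n) ℝ) :
    ∃ A : Matrix (Fin m) (Fin m) ℝ, (Z - A * X) * Xᵀ = 0 := by
  obtain ⟨A, hA⟩ := exists_eq_mul_of_rows_mem X (Z * Pmat X) (by
    intro i
    have : rowE (Z * Pmat X) i = pr X (rowE Z i) := by
      ext j; exact mul_Pmat_apply X Z i j
    rw [this]
    exact ((rowSpan X).orthogonalProjectionOnto _).2)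
  refine ⟨A, ?_⟩
  rw [← hA, Matrix.sub_mul]
  have hPXt : Pmat X * Xᵀ = Xᵀ := by
    have := congrArg Matrix.transpose (mul_Pmat_self X)
    rwa [Matrix.transpose_mul, Pmat_transpose] at this
  rw [Matrix.mul_assoc, hPXt, sub_self]

/-- **Part 1, hard direction**: a tangent direction of the variety that is killed by
`Dh_X` is tangent to the intersection. -/
lemma part1_sup {m n q r : ℕ}
    (h : Matrix (Fin m) (Fin n) ℝ → (Fin q → ℝ))
    (hsmooth : ContDiff ℝ (⊤ : ℕ∞) h)
    (hinv : ∀ (Y : Matrix (Fin m) (Fin n) ℝ) (Q : Matrix (Fin n) (Fin n) ℝ),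
      Qᵀ * Q = 1 → h (Y * Q) = h Y)
    (X : Matrix (Fin m) (Fin n) ℝ) (hXr : X.rank ≤ r) (hX : h X = 0)
    (hsurjD : Function.Surjective (fderiv ℝ h X))
    (y : Matrix (Fin m) (Fin n) ℝ)
    (hyT : y ∈ bouligandCone {X' : Matrix (Fin m) (Fin n) ℝ | X'.rank ≤ r} X)
    (hyK : fderiv ℝ h X y = 0) :
    y ∈ bouligandCone {X' : Matrix (Fin m) (Fin n) ℝ | X'.rank ≤ r ∧ h X' = 0} X := by
  classical
  obtain ⟨u, t, hus, ht, ht0, hw⟩ := hyT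
  have hu : Tendsto u atTop (𝓝 X) := tendsto_u ht ht0 hw
  set D := fderiv ℝ h X with hDdef
  have hDiff : HasFDerivAt h D X := (hsmooth.differentiable (by simp) X).hasFDerivAt
  have hDz : ∀ a : Matrix (Fin m) (Fin n) ℝ, a * Xᵀ = 0 → D a = 0 := fun a ha =>
    fderiv_zero_of_rows_orth h hsmooth hinv X a ha
  -- the linear map `B ↦ D (B * X)` is surjective
  set L : Matrix (Fin m) (Fin m) ℝ →ₗ[ℝ] (Fin q → ℝ) :=
    ((D : Matrix (Fin m) (Fin n) ℝ →ₗ[ℝ] (Fin q → ℝ)).comp (mulRightLM X)) with hL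
  have hLapp : ∀ A, L A = D (A * X) := fun A => rfl
  have hLsurj : Function.Surjective L := by
    intro c
    obtain ⟨Z, hZ⟩ := hsurjD c
    obtain ⟨A, hA⟩ := decomp_AX X Z
    refine ⟨A, ?_⟩
    have h0 : D (Z - A * X) = 0 := hDz _ hA
    rw [map_sub, sub_eq_zero] at h0
    rw [hLapp, ← h0, hZ]
  obtain ⟨Sc, hSc⟩ := Submodule.exists_isCompl (LinearMap.ker L)
  -- the corrector map `G` and its derivative
  set G : Sc × Matrix (Fin m) (Fin n) ℝ → (Fin q → ℝ) × Matrix (Fin m) (Fin n) ℝ :=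
    fun p => (h (p.2 + (p.1 : Matrix (Fin m) (Fin m) ℝ) * p.2), p.2) with hG
  set G'l : (Sc × Matrix (Fin m) (Fin n) ℝ) →ₗ[ℝ] (Fin q → ℝ) × Matrix (Fin m) (Fin n) ℝ :=
    LinearMap.prod
      ((D : Matrix (Fin m) (Fin n) ℝ →ₗ[ℝ] (Fin q → ℝ)).comp
        ((mulRightLM X).comp (Sc.subtype.comp (LinearMap.fst ℝ Sc _)) + LinearMap.snd ℝ Sc _))
      (LinearMap.snd ℝ Sc _) with hG'l
  have hG'lapp : ∀ p : Sc × Matrix (Fin m) (Fin n) ℝ,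
      G'l p = (D ((p.1 : Matrix (Fin m) (Fin m) ℝ) * X + p.2), p.2) := fun p => rfl
  have hG'lbij : Function.Bijective G'l := by
    constructor
    · rw [← LinearMap.ker_eq_bot, LinearMap.ker_eq_bot']
      intro p hp
      rw [hG'lapp] at hp
      have h2 : p.2 = 0 := congrArg Prod.snd hp
      have h1 : D ((p.1 : Matrix (Fin m) (Fin m) ℝ) * X + p.2) = 0 := congrArg Prod.fst hp
      rw [h2, add_zero] at h1
      have hker : (p.1 : Matrix (Fin m) (Fin m) ℝ) ∈ LinearMap.ker L := by
        rw [LinearMap.mem_ker, hLapp]; exact h1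
      have hzero : (p.1 : Matrix (Fin m) (Fin m) ℝ) ∈ (⊥ : Submodule ℝ _) := by
        rw [← hSc.inf_eq_bot]; exact ⟨hker, p.1.2⟩
      have h1' : p.1 = 0 := Subtype.ext (by simpa using hzero)
      rw [Prod.ext_iff]; exact ⟨h1', h2⟩
    · intro c
      have hex : ∃ B : Sc, L (B : Matrix (Fin m) (Fin m) ℝ) = c.1 - D c.2 := by
        obtain ⟨A, hA⟩ := hLsurj (c.1 - D c.2)
        have hAmem : A ∈ LinearMap.ker L ⊔ Sc := by rw [hSc.sup_eq_top]; trivial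
        obtain ⟨k1, hk1, s1, hs1, hks⟩ := Submodule.mem_sup.mp hAmem
        refine ⟨⟨s1, hs1⟩, ?_⟩
        have : L k1 = 0 := hk1
        rw [← hks, map_add, this, zero_add] at hA
        exact hA
      obtain ⟨B, hB⟩ := hex
      refine ⟨(B, c.2), ?_⟩
      rw [hG'lapp, map_add]
      have : D ((B : Matrix (Fin m) (Fin m) ℝ) * X) = c.1 - D c.2 := by rw [← hLapp]; exact hB
      rw [this]
      simp
  set G'e : (Sc × Matrix (Fin m) (Fin n) ℝ) ≃L[ℝ] (Fin q → ℝ) × Matrix (Fin m) (Fin n) ℝ :=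
    (LinearEquiv.ofBijective G'l hG'lbij).toContinuousLinearEquiv with hG'e
  -- strict differentiability of G at (0, X)
  have hbil : IsBoundedBilinearMap ℝ
      (fun p : Matrix (Fin m) (Fin m) ℝ × Matrix (Fin m) (Fin n) ℝ => p.1 * p.2) := by
    refine ⟨fun a b U => Matrix.add_mul a b U, fun c A U => Matrix.smul_mul c A U,
      fun A U V => Matrix.mul_add A U V, fun c A U => Matrix.mul_smul A c U,
      ⟨(m : ℝ) + 1, by positivity, fun A U => ?_⟩⟩
    calc ‖A * U‖ ≤ m * ‖A‖ * ‖U‖ := norm_matmul_le A U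
      _ ≤ ((m : ℝ) + 1) * ‖A‖ * ‖U‖ := by nlinarith [norm_nonneg A, norm_nonneg U]
  set jId : (Sc × Matrix (Fin m) (Fin n) ℝ) →L[ℝ]
      (Matrix (Fin m) (Fin m) ℝ × Matrix (Fin m) (Fin n) ℝ) :=
    (Sc.subtypeL.prodMap (ContinuousLinearMap.id ℝ _)) with hjId
  have hβ : HasStrictFDerivAt
      (fun p : Sc × Matrix (Fin m) (Fin n) ℝ => (p.1 : Matrix (Fin m) (Fin m) ℝ) * p.2)
      ((hbil.deriv (jId ((0:Sc), X))).comp jId) ((0:Sc), X) :=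
    (hbil.hasStrictFDerivAt (jId ((0:Sc), X))).comp ((0:Sc), X) jId.hasStrictFDerivAt
  have hη : HasStrictFDerivAt
      (fun p : Sc × Matrix (Fin m) (Fin n) ℝ => p.2 + (p.1 : Matrix (Fin m) (Fin m) ℝ) * p.2)
      (Add.add (ContinuousLinearMap.snd ℝ Sc (Matrix (Fin m) (Fin n) ℝ))
        ((hbil.deriv (jId ((0:Sc), X))).comp jId)) ((0:Sc), X) :=
    hasStrictFDerivAt_snd.add hβ
  have hηfix : ((0:Sc), X).2 + (((0:Sc), X).1 : Matrix (Fin m) (Fin m) ℝ) * ((0:Sc), X).2 = X := by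
    simp
  have hh' : HasStrictFDerivAt h D
      ((fun p : Sc × Matrix (Fin m) (Fin n) ℝ =>
        p.2 + (p.1 : Matrix (Fin m) (Fin m) ℝ) * p.2) ((0:Sc), X)) := by
    show HasStrictFDerivAt h D
      (((0:Sc), X).2 + (((0:Sc), X).1 : Matrix (Fin m) (Fin m) ℝ) * ((0:Sc), X).2)
    rw [hηfix]
    exact hsmooth.contDiffAt.hasStrictFDerivAt (by simp)
  have hG1 : HasStrictFDerivAt
      (fun p : Sc × Matrix (Fin m) (Fin n) ℝ =>
        h (p.2 + (p.1 : Matrix (Fin m) (Fin m) ℝ) * p.2))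
      (D.comp (Add.add (ContinuousLinearMap.snd ℝ Sc (Matrix (Fin m) (Fin n) ℝ))
        ((hbil.deriv (jId ((0:Sc), X))).comp jId))) ((0:Sc), X) :=
    hh'.comp ((0:Sc), X) hη
  have hGstrict0 : HasStrictFDerivAt G
      ((D.comp (Add.add (ContinuousLinearMap.snd ℝ Sc (Matrix (Fin m) (Fin n) ℝ))
        ((hbil.deriv (jId ((0:Sc), X))).comp jId))).prod
        (ContinuousLinearMap.snd ℝ Sc (Matrix (Fin m) (Fin n) ℝ))) ((0:Sc), X) :=
    HasStrictFDerivAt.prodMk hG1 hasStrictFDerivAt_snd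
  have hCLMeq : ((G'e : (Sc × Matrix (Fin m) (Fin n) ℝ) ≃L[ℝ] _) :
      (Sc × Matrix (Fin m) (Fin n) ℝ) →L[ℝ] (Fin q → ℝ) × Matrix (Fin m) (Fin n) ℝ)
      = ((D.comp (Add.add (ContinuousLinearMap.snd ℝ Sc (Matrix (Fin m) (Fin n) ℝ))
        ((hbil.deriv (jId ((0:Sc), X))).comp jId))).prod
        (ContinuousLinearMap.snd ℝ Sc (Matrix (Fin m) (Fin n) ℝ))) := by
    apply ContinuousLinearMap.ext
    intro p
    have hlhs : ((G'e : (Sc × Matrix (Fin m) (Fin n) ℝ) ≃L[ℝ] _) :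
        (Sc × Matrix (Fin m) (Fin n) ℝ) →L[ℝ] _) p = G'l p := by
      rw [hG'e]
      simp
    rw [hlhs, hG'lapp]
    have hbd : (hbil.deriv (jId ((0:Sc), X))) (jId p)
        = (p.1 : Matrix (Fin m) (Fin m) ℝ) * X := by
      rw [hbil.deriv_apply]
      simp [hjId]
    apply Prod.ext
    · show D ((p.1 : Matrix (Fin m) (Fin m) ℝ) * X + p.2)
        = D (p.2 + (hbil.deriv (jId ((0:Sc), X))) (jId p))
      rw [hbd, add_comm]
    · rfl
  have hGs : HasStrictFDerivAt G
      ((G'e : (Sc × Matrix (Fin m) (Fin n) ℝ) ≃L[ℝ] _) :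
        (Sc × Matrix (Fin m) (Fin n) ℝ) →L[ℝ] _) ((0:Sc), X) := by
    rw [hCLMeq]; exact hGstrict0
  -- the local inverse and its Lipschitz property
  have hG0 : G ((0:Sc), X) = (0, X) := by
    rw [hG]
    simp [hX]
  set ψ := HasStrictFDerivAt.localInverse G G'e ((0:Sc), X) hGs with hψ
  have hψs := hGs.to_localInverse
  rw [← hψ, hG0] at hψs
  obtain ⟨C, sψ, hsψ, hlips⟩ := hψs.exists_lipschitzOnWith
  have hrinv : ∀ᶠ p in 𝓝 ((0 : Fin q → ℝ), X), G (ψ p) = p := by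
    have := hGs.eventually_right_inverse
    rw [← hψ, hG0] at this
    exact this
  have hlinv : ∀ᶠ p in 𝓝 ((0:Sc), X), ψ (G p) = p := by
    have := hGs.eventually_left_inverse
    rw [← hψ] at this
    exact this
  have hq1 : Tendsto (fun k => ((0 : Fin q → ℝ), u k)) atTop (𝓝 ((0 : Fin q → ℝ), X)) :=
    tendsto_const_nhds.prodMk_nhds hu
  have hq2 : Tendsto (fun k => (h (u k), u k)) atTop (𝓝 ((0 : Fin q → ℝ), X)) := by
    have hcont : Tendsto (fun k => h (u k)) atTop (𝓝 (h X)) :=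
      (hsmooth.continuous.tendsto X).comp hu
    rw [hX] at hcont
    exact hcont.prodMk_nhds hu
  have hq3 : Tendsto (fun k => ((0:Sc), u k)) atTop (𝓝 ((0:Sc), X)) :=
    tendsto_const_nhds.prodMk_nhds hu
  set B : ℕ → Sc := fun k => (ψ ((0 : Fin q → ℝ), u k)).1 with hB
  have hvH : ∀ᶠ k in atTop, h (u k + ((B k : Matrix (Fin m) (Fin m) ℝ)) * u k) = 0 := by
    have h1 : ∀ᶠ k in atTop, G (ψ ((0 : Fin q → ℝ), u k)) = ((0 : Fin q → ℝ), u k) :=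
      hq1.eventually hrinv
    filter_upwards [h1] with k hk
    have hsnd : (ψ ((0 : Fin q → ℝ), u k)).2 = u k := by
      have := congrArg Prod.snd hk
      rw [hG] at this
      exact this
    have hfst := congrArg Prod.fst hk
    rw [hG] at hfst
    simp only at hfst
    rw [hsnd] at hfst
    exact hfst
  have hψ0 : ∀ᶠ k in atTop, ψ (h (u k), u k) = ((0:Sc), u k) := by
    have h1 : ∀ᶠ k in atTop, ψ (G ((0:Sc), u k)) = ((0:Sc), u k) := hq3.eventually hlinv
    filter_upwards [h1] with k hk
    have hGk : G ((0:Sc), u k) = (h (u k), u k) := by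
      rw [hG]
      simp
    rwa [hGk] at hk
  have hmem1 : ∀ᶠ k in atTop, ((0 : Fin q → ℝ), u k) ∈ sψ := hq1.eventually_mem hsψ
  have hmem2 : ∀ᶠ k in atTop, (h (u k), u k) ∈ sψ := hq2.eventually_mem hsψ
  have hBbd : ∀ᶠ k in atTop, ‖B k‖ ≤ (C:ℝ) * ‖h (u k)‖ := by
    filter_upwards [hψ0, hmem1, hmem2] with k h0 h1 h2
    have hd := hlips.dist_le_mul _ h1 _ h2
    rw [h0] at hd
    have hL1 : ‖B k‖ ≤ dist (ψ ((0 : Fin q → ℝ), u k)) ((0:Sc), u k) := by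
      rw [Prod.dist_eq]
      exact le_trans (le_of_eq (dist_zero_right (B k)).symm) (le_max_left _ _)
    have hR1 : dist ((0 : Fin q → ℝ), u k) (h (u k), u k) = ‖h (u k)‖ := by
      rw [Prod.dist_eq, dist_self, dist_zero_left]
      exact max_eq_left (norm_nonneg _)
    calc ‖B k‖ ≤ dist (ψ ((0 : Fin q → ℝ), u k)) ((0:Sc), u k) := hL1
      _ ≤ C * dist ((0 : Fin q → ℝ), u k) (h (u k), u k) := hd
      _ = C * ‖h (u k)‖ := by rw [hR1]
  have hh0 : Tendsto (fun k => (t k)⁻¹ • (h (u k))) atTop (𝓝 0) := by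
    have h1 := tendsto_h_along hDiff ht ht0 hw
    replace h1 : Tendsto (fun k => (t k)⁻¹ • (h (u k) - h X)) atTop (𝓝 (D y)) := h1
    rw [show D y = 0 from hyK] at h1
    have heq : (fun k => (t k)⁻¹ • (h (u k) - h X)) = fun k => (t k)⁻¹ • (h (u k)) := by
      funext k
      rw [hX, sub_zero]
    rwa [heq] at h1
  have hn : Tendsto (fun k => (t k)⁻¹ * ‖h (u k)‖) atTop (𝓝 0) := by
    have h1 := hh0.norm
    rw [norm_zero] at h1
    refine h1.congr fun k => ?_
    rw [norm_smul, Real.norm_eq_abs, abs_of_pos (inv_pos.mpr (ht k))]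
  have hcoe : ∀ b : Sc, ‖(b : Matrix (Fin m) (Fin m) ℝ)‖ = ‖b‖ := fun b => rfl
  have hcorr : Tendsto (fun k => (t k)⁻¹ • ((B k : Matrix (Fin m) (Fin m) ℝ) * u k))
      atTop (𝓝 0) := by
    have hbound : ∀ᶠ k in atTop,
        ‖(t k)⁻¹ • ((B k : Matrix (Fin m) (Fin m) ℝ) * u k)‖
          ≤ ((m : ℝ) * C) * ((t k)⁻¹ * ‖h (u k)‖) * ‖u k‖ := by
      filter_upwards [hBbd] with k hk
      have h1 : ‖(t k)⁻¹ • ((B k : Matrix (Fin m) (Fin m) ℝ) * u k)‖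
          = (t k)⁻¹ * ‖(B k : Matrix (Fin m) (Fin m) ℝ) * u k‖ := by
        rw [norm_smul, Real.norm_eq_abs, abs_of_pos (inv_pos.mpr (ht k))]
      rw [h1]
      have h2 : ‖(B k : Matrix (Fin m) (Fin m) ℝ) * u k‖ ≤ m * ‖B k‖ * ‖u k‖ := by
        have h3 := norm_matmul_le (B k : Matrix (Fin m) (Fin m) ℝ) (u k)
        rwa [hcoe] at h3
      calc (t k)⁻¹ * ‖(B k : Matrix (Fin m) (Fin m) ℝ) * u k‖
          ≤ (t k)⁻¹ * ((m:ℝ) * ‖B k‖ * ‖u k‖) :=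
            mul_le_mul_of_nonneg_left h2 (inv_pos.mpr (ht k)).le
        _ ≤ (t k)⁻¹ * ((m:ℝ) * ((C:ℝ) * ‖h (u k)‖) * ‖u k‖) := by
            have hm : (0:ℝ) ≤ m := Nat.cast_nonneg m
            have h4 : (m:ℝ) * ‖B k‖ * ‖u k‖ ≤ (m:ℝ) * ((C:ℝ) * ‖h (u k)‖) * ‖u k‖ :=
              mul_le_mul_of_nonneg_right (mul_le_mul_of_nonneg_left hk hm) (norm_nonneg _)
            exact mul_le_mul_of_nonneg_left h4 (inv_pos.mpr (ht k)).le
        _ = ((m : ℝ) * C) * ((t k)⁻¹ * ‖h (u k)‖) * ‖u k‖ := by ring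
    have hrhs : Tendsto (fun k => ((m : ℝ) * C) * ((t k)⁻¹ * ‖h (u k)‖) * ‖u k‖)
        atTop (𝓝 0) := by
      have h5 := (hn.const_mul ((m : ℝ) * C)).mul hu.norm
      simpa using h5
    exact squeeze_zero_norm' hbound hrhs
  obtain ⟨N, hN⟩ := eventually_atTop.mp hvH
  refine ⟨fun k => if N ≤ k then u k + ((B k : Matrix (Fin m) (Fin m) ℝ)) * u k else X,
    t, ?_, ht, ht0, ?_⟩
  · intro k
    by_cases hk : N ≤ k
    · simp only [if_pos hk]
      constructor
      · have he : u k + ((B k : Matrix (Fin m) (Fin m) ℝ)) * u k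
            = (1 + (B k : Matrix (Fin m) (Fin m) ℝ)) * u k := by
          rw [Matrix.add_mul, Matrix.one_mul]
        rw [he]
        exact le_trans (Matrix.rank_mul_le_right _ _) (hus k)
      · exact hN k hk
    · simp only [if_neg hk]
      exact ⟨hXr, hX⟩
  · have hEE : (fun k => (t k)⁻¹ • (u k - X)
        + (t k)⁻¹ • ((B k : Matrix (Fin m) (Fin m) ℝ) * u k))
        =ᶠ[atTop] (fun k => (t k)⁻¹ •
          ((if N ≤ k then u k + ((B k : Matrix (Fin m) (Fin m) ℝ)) * u k else X) - X)) := by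
      filter_upwards [eventually_ge_atTop N] with k hk
      rw [if_pos hk, ← smul_add]
      congr 1
      abel
    have hfin := hw.add hcorr
    rw [add_zero] at hfin
    show Tendsto (fun k => (t k)⁻¹ •
      ((if N ≤ k then u k + ((B k : Matrix (Fin m) (Fin m) ℝ)) * u k else X) - X)) atTop (𝓝 y)
    exact Filter.Tendsto.congr' hEE hfin

lemma eq_zero_of_trace_tmul {k l : ℕ} (M : Matrix (Fin k) (Fin l) ℝ)
    (hM : (Mᵀ * M).trace = 0) : M = 0 := by
  have h1 : (inner ℝ (matE k l M) (matE k l M) : ℝ) = 0 := by rw [inner_matE]; exact hM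
  have h2 : matE k l M = 0 := inner_self_eq_zero.mp h1
  have h3 := congrArg (matE k l).symm h2
  simpa using h3

lemma mulXt_eq_zero_of_traces {m n : ℕ} (X V : Matrix (Fin m) (Fin n) ℝ)
    (hA : ∀ A : Matrix (Fin m) (Fin m) ℝ, ((A * X)ᵀ * V).trace = 0) : V * Xᵀ = 0 := by
  have key2 : ∀ A : Matrix (Fin m) (Fin m) ℝ, (Aᵀ * (V * Xᵀ)).trace = 0 := by
    intro A
    have h1 := hA A
    rw [Matrix.transpose_mul, Matrix.mul_assoc, Matrix.trace_mul_comm, Matrix.mul_assoc] at h1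
    exact h1
  exact eq_zero_of_trace_tmul _ (key2 (V * Xᵀ))

end IR

/-- Under the blanket assumption on `h`, for every
`X ∈ R_{≤r} ∩ H` the intersection rule holds for Bouligand tangent cones,
`T_X(R_{≤r} ∩ H) = T_X R_{≤r} ∩ T_X H`, and the Fréchet normal cone decomposes as a
direct sum of the two mutually orthogonal cones,
`N_X(R_{≤r} ∩ H) = N_X R_{≤r} ⊕ N_X H`. -/
theorem intersection_rule {m n q r : ℕ} (hrm : r ≤ m) (hrn : r ≤ n)
    (h : Matrix (Fin m) (Fin n) ℝ → (Fin q → ℝ))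
    (hsmooth : ContDiff ℝ (⊤ : ℕ∞) h)
    (hinv : ∀ (X : Matrix (Fin m) (Fin n) ℝ) (Q : Matrix (Fin n) (Fin n) ℝ),
      Qᵀ * Q = 1 → h (X * Q) = h X)
    (hfullrank : ∀ X : Matrix (Fin m) (Fin n) ℝ, h X = 0 →
      Function.Surjective (fderiv ℝ h X))
    (X : Matrix (Fin m) (Fin n) ℝ) (hXr : X.rank ≤ r) (hX : h X = 0) :
    bouligandCone {X' : Matrix (Fin m) (Fin n) ℝ | X'.rank ≤ r ∧ h X' = 0} X =
      bouligandCone {X' : Matrix (Fin m) (Fin n) ℝ | X'.rank ≤ r} X ∩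
        (LinearMap.ker (fderiv ℝ h X : Matrix (Fin m) (Fin n) ℝ →ₗ[ℝ] (Fin q → ℝ)) : Set (Matrix (Fin m) (Fin n) ℝ)) ∧
    frechetNormalCone {X' : Matrix (Fin m) (Fin n) ℝ | X'.rank ≤ r ∧ h X' = 0} X =
      {Y | ∃ a ∈ frechetNormalCone {X' : Matrix (Fin m) (Fin n) ℝ | X'.rank ≤ r} X,
        ∃ b ∈ {Y' | ∀ Z ∈ LinearMap.ker
          (fderiv ℝ h X : Matrix (Fin m) (Fin n) ℝ →ₗ[ℝ] (Fin q → ℝ)), (Zᵀ * Y').trace = 0},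
        Y = a + b} ∧
    ∀ a ∈ frechetNormalCone {X' : Matrix (Fin m) (Fin n) ℝ | X'.rank ≤ r} X,
      ∀ b ∈ {Y' : Matrix (Fin m) (Fin n) ℝ | ∀ Z ∈ LinearMap.ker
        (fderiv ℝ h X : Matrix (Fin m) (Fin n) ℝ →ₗ[ℝ] (Fin q → ℝ)), (Zᵀ * Y').trace = 0},
        (aᵀ * b).trace = 0 := by
  classical
  have hDiff : HasFDerivAt h (fderiv ℝ h X) X := (hsmooth.differentiable (by simp) X).hasFDerivAt
  have hDz : ∀ a : Matrix (Fin m) (Fin n) ℝ, a * Xᵀ = 0 → fderiv ℝ h X a = 0 := fun a ha =>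
    IR.fderiv_zero_of_rows_orth h hsmooth hinv X a ha
  -- Part A : the tangent cone intersection rule
  have partA : bouligandCone {X' : Matrix (Fin m) (Fin n) ℝ | X'.rank ≤ r ∧ h X' = 0} X =
      bouligandCone {X' : Matrix (Fin m) (Fin n) ℝ | X'.rank ≤ r} X ∩
        (LinearMap.ker (fderiv ℝ h X : Matrix (Fin m) (Fin n) ℝ →ₗ[ℝ] (Fin q → ℝ)) : Set (Matrix (Fin m) (Fin n) ℝ)) := by
    apply Set.Subset.antisymm
    · rintro y ⟨u, t, hus, ht, ht0, hw⟩
      constructor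
      · exact ⟨u, t, fun k => (hus k).1, ht, ht0, hw⟩
      · have h1 := IR.tendsto_h_along hDiff ht ht0 hw
        have h2 : (fun k => (t k)⁻¹ • (h (u k) - h X)) = fun _ => (0 : Fin q → ℝ) := by
          funext k
          rw [(hus k).2, hX, sub_zero, smul_zero]
        rw [h2] at h1
        have h3 : fderiv ℝ h X y = 0 := (tendsto_nhds_unique h1 tendsto_const_nhds)
        simpa [SetLike.mem_coe, LinearMap.mem_ker] using h3
    · rintro y ⟨hyT, hyK⟩
      have hyK' : fderiv ℝ h X y = 0 := by
        simpa [SetLike.mem_coe, LinearMap.mem_ker] using hyK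
      exact IR.part1_sup h hsmooth hinv X hXr hX (hfullrank X hX) y hyT hyK'
  refine ⟨partA, ?_, ?_⟩
  -- helper facts for the normal cone parts
  · -- Part B : the normal cone decomposition
    have hAXmem : ∀ A : Matrix (Fin m) (Fin m) ℝ,
        A * X ∈ bouligandCone {X' : Matrix (Fin m) (Fin n) ℝ | X'.rank ≤ r} X := by
      intro A
      have h0 : (0 : Matrix (Fin m) (Fin n) ℝ)
          ∈ bouligandCone {X' : Matrix (Fin m) (Fin n) ℝ | X'.rank ≤ r} X :=
        IR.cone_zero_mem hXr
      have h1 := IR.cone_add_mulX h0 A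
      rwa [zero_add] at h1
    set e := IR.matE m n with he
    have htr : ∀ Z W : Matrix (Fin m) (Fin n) ℝ,
        (Zᵀ * W).trace = (inner ℝ (e Z) (e W) : ℝ) := fun Z W => (IR.inner_matE Z W).symm
    set K' : Submodule ℝ (EuclideanSpace ℝ (Fin m × Fin n)) :=
      (LinearMap.ker (fderiv ℝ h X : Matrix (Fin m) (Fin n) ℝ →ₗ[ℝ] (Fin q → ℝ))).map (e : Matrix (Fin m) (Fin n) ℝ →ₗ[ℝ] _) with hK'
    have hKperp : ∀ w : EuclideanSpace ℝ (Fin m × Fin n), w ∈ K'ᗮ →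
        ∃ A : Matrix (Fin m) (Fin m) ℝ, e.symm w = A * X := by
      set S' : Submodule ℝ (EuclideanSpace ℝ (Fin m × Fin n)) :=
        (LinearMap.range (IR.mulRightLM X :
          Matrix (Fin m) (Fin m) ℝ →ₗ[ℝ] Matrix (Fin m) (Fin n) ℝ)).map
          (e : Matrix (Fin m) (Fin n) ℝ →ₗ[ℝ] _) with hS'
      have hsub : S'ᗮ ≤ K' := by
        intro v hv
        have hVXt : (e.symm v) * Xᵀ = 0 := by
          apply IR.mulXt_eq_zero_of_traces
          intro A
          rw [htr]
          have hmem : e (A * X) ∈ S' := ⟨A * X, ⟨A, rfl⟩, rfl⟩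
          have := (Submodule.mem_orthogonal S' v).mp hv (e (A * X)) hmem
          simpa using this
        refine ⟨e.symm v, LinearMap.mem_ker.mpr (hDz _ hVXt), by simp⟩
      intro w hw'
      have hw2 : w ∈ S' := by
        have h2 : K'ᗮ ≤ S'ᗮᗮ := Submodule.orthogonal_le hsub
        rw [Submodule.orthogonal_orthogonal] at h2
        exact h2 hw'
      obtain ⟨V, hV, hVe⟩ := hw2
      obtain ⟨A, hA⟩ := hV
      refine ⟨A, ?_⟩
      rw [← hVe, ← hA]
      exact e.symm_apply_apply _
    apply Set.Subset.antisymm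
    · intro Y hY
      have hY' : ∀ Z ∈ bouligandCone {X' : Matrix (Fin m) (Fin n) ℝ | X'.rank ≤ r} X ∩
          (LinearMap.ker (fderiv ℝ h X : Matrix (Fin m) (Fin n) ℝ →ₗ[ℝ] (Fin q → ℝ)) : Set (Matrix (Fin m) (Fin n) ℝ)),
          (Zᵀ * Y).trace ≤ 0 := by
        intro Z hZ
        rw [← partA] at hZ
        exact hY Z hZ
      obtain ⟨p, hp, w, hw', hpw⟩ := K'.exists_add_mem_mem_orthogonal (e Y)
      refine ⟨e.symm p, ?_, e.symm w, ?_, ?_⟩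
      · -- `e.symm p` lies in the polar of the tangent cone of the variety
        intro Z hZT
        obtain ⟨z1, hz1, z2, hz2, hz12⟩ := K'.exists_add_mem_mem_orthogonal (e Z)
        obtain ⟨A, hA⟩ := hKperp z2 hz2
        have hZdecomp : e.symm z1 = Z + (-A) * X := by
          have h5 : e.symm z1 = Z - e.symm z2 := by
            have := congrArg e.symm hz12
            rw [e.symm_apply_apply, map_add] at this
            rw [this]
            abel
          rw [h5, hA, Matrix.neg_mul, sub_eq_add_neg]
        have hZ1T : e.symm z1 ∈ bouligandCone
            {X' : Matrix (Fin m) (Fin n) ℝ | X'.rank ≤ r} X := by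
          rw [hZdecomp]
          exact IR.cone_add_mulX hZT (-A)
        have hZ1K : e.symm z1 ∈ LinearMap.ker (fderiv ℝ h X : Matrix (Fin m) (Fin n) ℝ →ₗ[ℝ] (Fin q → ℝ)) := by
          obtain ⟨W, hWK, hWe⟩ := hz1
          have h6 : e.symm z1 = W := by rw [← hWe]; simp
          rw [h6]; exact hWK
        have hle := hY' _ ⟨hZ1T, hZ1K⟩
        have hcalc : (Zᵀ * e.symm p).trace = ((e.symm z1)ᵀ * Y).trace := by
          rw [htr, htr, e.apply_symm_apply, e.apply_symm_apply, hz12, inner_add_left]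
          have h7 : (inner ℝ z2 p : ℝ) = 0 := by
            rw [real_inner_comm]
            exact (Submodule.mem_orthogonal K' z2).mp hz2 p hp
          have h8 : (inner ℝ z1 w : ℝ) = 0 :=
            (Submodule.mem_orthogonal K' w).mp hw' z1 hz1
          rw [h7, add_zero, hpw, inner_add_right, h8, add_zero]
        rw [hcalc]
        exact hle
      · -- `e.symm w` is orthogonal to the kernel
        intro Z hZK
        rw [htr, e.apply_symm_apply]
        exact (Submodule.mem_orthogonal K' w).mp hw' (e Z) ⟨Z, hZK, rfl⟩
      · -- Y = a + b
        apply e.injective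
        rw [map_add, e.apply_symm_apply, e.apply_symm_apply]
        exact hpw
    · rintro Y ⟨a, ha, b, hb, rfl⟩
      intro Z hZ
      rw [partA] at hZ
      obtain ⟨hZT, hZK⟩ := hZ
      rw [Matrix.mul_add, Matrix.trace_add]
      have h1 := ha Z hZT
      have h2 := hb Z hZK
      linarith
  · -- Part C : orthogonality of the two normal cones
    intro a ha b hb
    have hAXmem : ∀ A : Matrix (Fin m) (Fin m) ℝ,
        A * X ∈ bouligandCone {X' : Matrix (Fin m) (Fin n) ℝ | X'.rank ≤ r} X := by
      intro A
      have h0 : (0 : Matrix (Fin m) (Fin n) ℝ)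
          ∈ bouligandCone {X' : Matrix (Fin m) (Fin n) ℝ | X'.rank ≤ r} X :=
        IR.cone_zero_mem hXr
      have h1 := IR.cone_add_mulX h0 A
      rwa [zero_add] at h1
    have haXt : a * Xᵀ = 0 := by
      apply IR.mulXt_eq_zero_of_traces
      intro A
      have h1 := ha _ (hAXmem A)
      have h2 := ha _ (hAXmem (-A))
      rw [Matrix.neg_mul, Matrix.transpose_neg, Matrix.neg_mul, Matrix.trace_neg] at h2
      linarith
    exact hb a (LinearMap.mem_ker.mpr (hDz a haXt))
end
end

section
/- Let h satisfy the blanket assumption and fix r ≤ min(m,n) and 0 ≤ s ≤ n. If the set S_h(s) = {(X,W) ∈ R^{m×n} × St(n,s) : XW = 0, h(X) = 0} is nonempty, then it is a smooth embedded submanifold of R^{m×n} × St(n,s) of dimension m(n−s) + ns − dim Sym(s) − q = m(n−s) + ns − s(s+1)/2 − q. -/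
open Matrix

noncomputable section
attribute [local instance] Matrix.normedAddCommGroup Matrix.normedSpace

section Aux

variable {m n s q : ℕ}

/-- entry evaluation on the first component -/
private def eE1 (i : Fin m) (k : Fin n) :
    (Matrix (Fin m) (Fin n) ℝ × Matrix (Fin n) (Fin s) ℝ) →L[ℝ] ℝ :=
  LinearMap.toContinuousLinearMap
    { toFun := fun p => p.1 i k
      map_add' := fun _ _ => rfl
      map_smul' := fun _ _ => rfl }

private def eE2 (k : Fin n) (j : Fin s) :
    (Matrix (Fin m) (Fin n) ℝ × Matrix (Fin n) (Fin s) ℝ) →L[ℝ] ℝ :=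
  LinearMap.toContinuousLinearMap
    { toFun := fun p => p.2 k j
      map_add' := fun _ _ => rfl
      map_smul' := fun _ _ => rfl }

@[simp] private lemma eE1_apply (i : Fin m) (k : Fin n)
    (p : Matrix (Fin m) (Fin n) ℝ × Matrix (Fin n) (Fin s) ℝ) :
    eE1 (s := s) i k p = p.1 i k := rfl

@[simp] private lemma eE2_apply (k : Fin n) (j : Fin s)
    (p : Matrix (Fin m) (Fin n) ℝ × Matrix (Fin n) (Fin s) ℝ) :
    eE2 (m := m) k j p = p.2 k j := rfl

private def sym2ofMat (M : Matrix (Fin s) (Fin s) ℝ) : Sym2 (Fin s) → ℝ :=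
  Sym2.lift ⟨fun i j => M i j + M j i, fun i j => add_comm _ _⟩

@[simp] private lemma sym2ofMat_mk (M : Matrix (Fin s) (Fin s) ℝ) (i j : Fin s) :
    sym2ofMat M s(i, j) = M i j + M j i := rfl

private lemma sym2ofMat_add (M N : Matrix (Fin s) (Fin s) ℝ) (z : Sym2 (Fin s)) :
    sym2ofMat (M + N) z = sym2ofMat M z + sym2ofMat N z := by
  induction z using Sym2.ind with
  | _ i j => simp [Matrix.add_apply]; ring

private lemma sym2ofMat_smul (c : ℝ) (M : Matrix (Fin s) (Fin s) ℝ) (z : Sym2 (Fin s)) :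
    sym2ofMat (c • M) z = c * sym2ofMat M z := by
  induction z using Sym2.ind with
  | _ i j => simp [Matrix.smul_apply]; ring

/-- coordinate functions of the defining map -/
private def phiC (h : Matrix (Fin m) (Fin n) ℝ → (Fin q → ℝ)) :
    ((Fin m × Fin s) ⊕ (Sym2 (Fin s) ⊕ Fin q)) →
      (Matrix (Fin m) (Fin n) ℝ × Matrix (Fin n) (Fin s) ℝ) → ℝ
  | .inl (i, j) => fun p => (p.1 * p.2) i j
  | .inr (.inl z) => fun p => sym2ofMat (p.2ᵀ * p.2 - 1) z
  | .inr (.inr k) => fun p => h p.1 k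

/-- coordinate derivative candidates at the point `(X, W)` -/
private def ellC (h : Matrix (Fin m) (Fin n) ℝ → (Fin q → ℝ))
    (X : Matrix (Fin m) (Fin n) ℝ) (W : Matrix (Fin n) (Fin s) ℝ) :
    ((Fin m × Fin s) ⊕ (Sym2 (Fin s) ⊕ Fin q)) →
      ((Matrix (Fin m) (Fin n) ℝ × Matrix (Fin n) (Fin s) ℝ) →L[ℝ] ℝ)
  | .inl (i, j) => LinearMap.toContinuousLinearMap
      { toFun := fun p => (p.1 * W + X * p.2) i j
        map_add' := fun p p' => by
          simp [Matrix.add_mul, Matrix.mul_add, Matrix.add_apply]; ring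
        map_smul' := fun c p => by
          simp [Matrix.smul_mul, Matrix.mul_smul, Matrix.smul_apply]; ring }
  | .inr (.inl z) => LinearMap.toContinuousLinearMap
      { toFun := fun p => sym2ofMat (Wᵀ * p.2 + p.2ᵀ * W) z
        map_add' := fun p p' => by
          have : Wᵀ * (p.2 + p'.2) + (p.2 + p'.2)ᵀ * W
              = (Wᵀ * p.2 + p.2ᵀ * W) + (Wᵀ * p'.2 + p'.2ᵀ * W) := by
            rw [Matrix.transpose_add, Matrix.mul_add, Matrix.add_mul]; abel
          simp only [Prod.snd_add, this, sym2ofMat_add]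
        map_smul' := fun c p => by
          have : Wᵀ * (c • p.2) + (c • p.2)ᵀ * W
              = c • (Wᵀ * p.2 + p.2ᵀ * W) := by
            rw [Matrix.transpose_smul, Matrix.mul_smul, Matrix.smul_mul, smul_add]
          simp only [Prod.smul_snd, this, sym2ofMat_smul, RingHom.id_apply, smul_eq_mul] }
  | .inr (.inr k) => (ContinuousLinearMap.proj k).comp
      ((fderiv ℝ h X).comp (ContinuousLinearMap.fst ℝ _ _))

@[simp] private lemma ellC_inl (h : Matrix (Fin m) (Fin n) ℝ → (Fin q → ℝ)) (X W) (i : Fin m)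
    (j : Fin s) (p : Matrix (Fin m) (Fin n) ℝ × Matrix (Fin n) (Fin s) ℝ) :
    ellC h X W (.inl (i, j)) p = (p.1 * W + X * p.2) i j := rfl

@[simp] private lemma ellC_inrl (h : Matrix (Fin m) (Fin n) ℝ → (Fin q → ℝ)) (X W)
    (z : Sym2 (Fin s)) (p : Matrix (Fin m) (Fin n) ℝ × Matrix (Fin n) (Fin s) ℝ) :
    ellC h X W (.inr (.inl z)) p = sym2ofMat (Wᵀ * p.2 + p.2ᵀ * W) z := rfl

@[simp] private lemma ellC_inrr (h : Matrix (Fin m) (Fin n) ℝ → (Fin q → ℝ)) (X W) (k : Fin q)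
    (p : Matrix (Fin m) (Fin n) ℝ × Matrix (Fin n) (Fin s) ℝ) :
    ellC h X W (.inr (.inr k)) p = fderiv ℝ h X p.1 k := rfl

private lemma hasfd_phiC (h : Matrix (Fin m) (Fin n) ℝ → (Fin q → ℝ))
    (hsmooth : ContDiff ℝ (⊤ : ℕ∞) h)
    (X : Matrix (Fin m) (Fin n) ℝ) (W : Matrix (Fin n) (Fin s) ℝ)
    (idx : (Fin m × Fin s) ⊕ (Sym2 (Fin s) ⊕ Fin q)) :
    HasFDerivAt (phiC h idx) (ellC h X W idx) (X, W) := by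
  match idx with
  | .inl (i, j) =>
    have hfun : (phiC h (.inl (i, j)) :
        (Matrix (Fin m) (Fin n) ℝ × Matrix (Fin n) (Fin s) ℝ) → ℝ)
        = fun p => ∑ k, p.1 i k * p.2 k j := by
      funext p; exact Matrix.mul_apply
    have hd : HasFDerivAt (fun p : Matrix (Fin m) (Fin n) ℝ × Matrix (Fin n) (Fin s) ℝ =>
        ∑ k, p.1 i k * p.2 k j)
        (∑ k, (X i k • eE2 k j + W k j • eE1 i k)) (X, W) := by
      apply HasFDerivAt.fun_sum
      intro k _
      have hA : HasFDerivAt (fun p : Matrix (Fin m) (Fin n) ℝ × Matrix (Fin n) (Fin s) ℝ =>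
          p.1 i k) (eE1 i k) (X, W) := (eE1 i k).hasFDerivAt
      have hB : HasFDerivAt (fun p : Matrix (Fin m) (Fin n) ℝ × Matrix (Fin n) (Fin s) ℝ =>
          p.2 k j) (eE2 k j) (X, W) := (eE2 k j).hasFDerivAt
      exact hA.mul hB
    have heq : (∑ k, (X i k • eE2 k j + W k j • eE1 i k)) = ellC h X W (.inl (i, j)) := by
      refine ContinuousLinearMap.ext fun p => ?_
      simp only [ellC_inl, ContinuousLinearMap.sum_apply, ContinuousLinearMap.add_apply,
        ContinuousLinearMap.smul_apply, eE1_apply, eE2_apply, smul_eq_mul,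
        Matrix.add_apply, Matrix.mul_apply]
      rw [Finset.sum_add_distrib, add_comm]
      congr 1
      exact Finset.sum_congr rfl fun k _ => mul_comm _ _
    rw [hfun, ← heq]
    exact hd
  | .inr (.inl z) =>
    induction z using Sym2.ind with
    | _ i j =>
      have hfun : (phiC h (.inr (.inl s(i, j))) :
          (Matrix (Fin m) (Fin n) ℝ × Matrix (Fin n) (Fin s) ℝ) → ℝ)
          = fun p => ((∑ k, p.2 k i * p.2 k j) - (1 : Matrix (Fin s) (Fin s) ℝ) i j)
            + ((∑ k, p.2 k j * p.2 k i) - (1 : Matrix (Fin s) (Fin s) ℝ) j i) := by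
        funext p
        show sym2ofMat (p.2ᵀ * p.2 - 1) s(i, j) = _
        rw [sym2ofMat_mk]
        simp [Matrix.sub_apply, Matrix.mul_apply]
      have hd : HasFDerivAt (fun p : Matrix (Fin m) (Fin n) ℝ × Matrix (Fin n) (Fin s) ℝ =>
          ((∑ k, p.2 k i * p.2 k j) - (1 : Matrix (Fin s) (Fin s) ℝ) i j)
            + ((∑ k, p.2 k j * p.2 k i) - (1 : Matrix (Fin s) (Fin s) ℝ) j i))
          ((∑ k, (W k i • eE2 k j + W k j • eE2 k i))
            + (∑ k, (W k j • eE2 k i + W k i • eE2 k j))) (X, W) := by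
        apply HasFDerivAt.add
        · apply HasFDerivAt.sub_const
          apply HasFDerivAt.fun_sum
          intro k _
          have hA : HasFDerivAt (fun p : Matrix (Fin m) (Fin n) ℝ × Matrix (Fin n) (Fin s) ℝ =>
              p.2 k i) (eE2 k i) (X, W) := (eE2 k i).hasFDerivAt
          have hB : HasFDerivAt (fun p : Matrix (Fin m) (Fin n) ℝ × Matrix (Fin n) (Fin s) ℝ =>
              p.2 k j) (eE2 k j) (X, W) := (eE2 k j).hasFDerivAt
          exact hA.mul hB
        · apply HasFDerivAt.sub_const
          apply HasFDerivAt.fun_sum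
          intro k _
          have hA : HasFDerivAt (fun p : Matrix (Fin m) (Fin n) ℝ × Matrix (Fin n) (Fin s) ℝ =>
              p.2 k j) (eE2 k j) (X, W) := (eE2 k j).hasFDerivAt
          have hB : HasFDerivAt (fun p : Matrix (Fin m) (Fin n) ℝ × Matrix (Fin n) (Fin s) ℝ =>
              p.2 k i) (eE2 k i) (X, W) := (eE2 k i).hasFDerivAt
          exact hA.mul hB
      have heq : ((∑ k, (W k i • eE2 k j + W k j • eE2 k i))
            + (∑ k, (W k j • eE2 k i + W k i • eE2 k j)))
          = ellC h X W (.inr (.inl s(i, j))) := by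
        refine ContinuousLinearMap.ext fun p => ?_
        simp only [ellC_inrl, sym2ofMat_mk, ContinuousLinearMap.add_apply,
          ContinuousLinearMap.sum_apply, ContinuousLinearMap.smul_apply, eE2_apply, smul_eq_mul,
          Matrix.add_apply, Matrix.mul_apply, Matrix.transpose_apply]
        rw [Finset.sum_add_distrib, Finset.sum_add_distrib]
        have hc : ∀ (a b : Fin s), (∑ k, p.2 k a * W k b) = ∑ k, W k b * p.2 k a :=
          fun a b => Finset.sum_congr rfl fun k _ => mul_comm _ _
        rw [hc, hc]
        try abel
      rw [hfun, ← heq]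
      exact hd
  | .inr (.inr k) =>
    have hfst : HasFDerivAt
        (Prod.fst : Matrix (Fin m) (Fin n) ℝ × Matrix (Fin n) (Fin s) ℝ → Matrix (Fin m) (Fin n) ℝ)
        (ContinuousLinearMap.fst ℝ (Matrix (Fin m) (Fin n) ℝ) (Matrix (Fin n) (Fin s) ℝ))
        (X, W) := (ContinuousLinearMap.fst ℝ (Matrix (Fin m) (Fin n) ℝ) (Matrix (Fin n) (Fin s) ℝ)).hasFDerivAt
    have h1 : HasFDerivAt (fun p : Matrix (Fin m) (Fin n) ℝ × Matrix (Fin n) (Fin s) ℝ => h p.1)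
        ((fderiv ℝ h X).comp
          (ContinuousLinearMap.fst ℝ (Matrix (Fin m) (Fin n) ℝ) (Matrix (Fin n) (Fin s) ℝ)))
        (X, W) :=
      (((hsmooth.differentiable (by simp)) X).hasFDerivAt).comp (X, W) hfst
    have hproj : HasFDerivAt (fun v : Fin q → ℝ => v k)
        (ContinuousLinearMap.proj (R := ℝ) (φ := fun _ : Fin q => ℝ) k)
        (h X) := (ContinuousLinearMap.proj (R := ℝ) (φ := fun _ : Fin q => ℝ) k).hasFDerivAt
    exact hproj.comp (X, W) h1

private lemma contDiff_phiC (h : Matrix (Fin m) (Fin n) ℝ → (Fin q → ℝ))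
    (hsmooth : ContDiff ℝ (⊤ : ℕ∞) h)
    (idx : (Fin m × Fin s) ⊕ (Sym2 (Fin s) ⊕ Fin q)) :
    ContDiff ℝ (⊤ : ℕ∞) (phiC h idx) := by
  match idx with
  | .inl (i, j) =>
    have hfun : (phiC h (.inl (i, j)) :
        (Matrix (Fin m) (Fin n) ℝ × Matrix (Fin n) (Fin s) ℝ) → ℝ)
        = fun p => ∑ k, p.1 i k * p.2 k j := by
      funext p; exact Matrix.mul_apply
    rw [hfun]
    apply ContDiff.sum
    intro k _
    exact ((eE1 (s := s) i k).contDiff).mul ((eE2 (m := m) k j).contDiff)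
  | .inr (.inl z) =>
    induction z using Sym2.ind with
    | _ i j =>
      have hfun : (phiC h (.inr (.inl s(i, j))) :
          (Matrix (Fin m) (Fin n) ℝ × Matrix (Fin n) (Fin s) ℝ) → ℝ)
          = fun p => ((∑ k, p.2 k i * p.2 k j) - (1 : Matrix (Fin s) (Fin s) ℝ) i j)
            + ((∑ k, p.2 k j * p.2 k i) - (1 : Matrix (Fin s) (Fin s) ℝ) j i) := by
        funext p
        show sym2ofMat (p.2ᵀ * p.2 - 1) s(i, j) = _
        rw [sym2ofMat_mk]
        simp [Matrix.sub_apply, Matrix.mul_apply]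
      rw [hfun]
      apply ContDiff.add
      · apply ContDiff.sub _ contDiff_const
        apply ContDiff.sum
        intro k _
        exact ((eE2 (m := m) k i).contDiff).mul ((eE2 (m := m) k j).contDiff)
      · apply ContDiff.sub _ contDiff_const
        apply ContDiff.sum
        intro k _
        exact ((eE2 (m := m) k j).contDiff).mul ((eE2 (m := m) k i).contDiff)
  | .inr (.inr k) =>
    have : ContDiff ℝ (⊤ : ℕ∞) (fun p : Matrix (Fin m) (Fin n) ℝ × Matrix (Fin n) (Fin s) ℝ => h p.1) :=
      hsmooth.comp contDiff_fst
    exact (contDiff_pi.mp this) k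

/-- Key lemma: by orthogonal invariance of `h`, the derivative of `h` at `X`
vanishes on matrices of the form `M * Wᵀ` whenever `X * W = 0` and `Wᵀ * W = 1`. -/
private lemma fderiv_vanish (h : Matrix (Fin m) (Fin n) ℝ → (Fin q → ℝ))
    (hsmooth : ContDiff ℝ (⊤ : ℕ∞) h)
    (hinv : ∀ (X : Matrix (Fin m) (Fin n) ℝ) (Q : Matrix (Fin n) (Fin n) ℝ),
      Qᵀ * Q = 1 → h (X * Q) = h X)
    (X : Matrix (Fin m) (Fin n) ℝ) (W : Matrix (Fin n) (Fin s) ℝ)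
    (hW : Wᵀ * W = 1) (hXW : X * W = 0) (M : Matrix (Fin m) (Fin s) ℝ) :
    fderiv ℝ h X (M * Wᵀ) = 0 := by
  set N : Matrix (Fin m) (Fin n) ℝ := M * Wᵀ with hN
  set Q : Matrix (Fin n) (Fin n) ℝ := 1 - (2 : ℝ) • (W * Wᵀ) with hQ
  have hWWW : (W * Wᵀ) * (W * Wᵀ) = W * Wᵀ := by
    rw [Matrix.mul_assoc, ← Matrix.mul_assoc Wᵀ W Wᵀ, hW, Matrix.one_mul]
  have hQt : Qᵀ = Q := by
    rw [hQ, Matrix.transpose_sub, Matrix.transpose_smul, Matrix.transpose_one,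
      Matrix.transpose_mul, Matrix.transpose_transpose]
  have hQorth : Qᵀ * Q = 1 := by
    rw [hQt, hQ]
    simp only [Matrix.sub_mul, Matrix.mul_sub, Matrix.one_mul, Matrix.mul_one,
      Matrix.smul_mul, Matrix.mul_smul, smul_smul, hWWW]
    module
  have hXQ : X * Q = X := by
    rw [hQ, Matrix.mul_sub, Matrix.mul_one, Matrix.mul_smul, ← Matrix.mul_assoc, hXW,
      Matrix.zero_mul, smul_zero, sub_zero]
  have hNQ : N * Q = -N := by
    have e1 : N * (W * Wᵀ) = N := by
      rw [hN, Matrix.mul_assoc, ← Matrix.mul_assoc Wᵀ W Wᵀ, hW, Matrix.one_mul]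
    rw [hQ, Matrix.mul_sub, Matrix.mul_one, Matrix.mul_smul, e1]
    module
  -- the two curves
  have hcurve : ∀ t : ℝ, (X + t • N) * Q = X - t • N := by
    intro t
    rw [Matrix.add_mul, hXQ, Matrix.smul_mul, hNQ, smul_neg, sub_eq_add_neg]
  have heven : (fun t : ℝ => h (X + t • N)) = fun t : ℝ => h (X - t • N) := by
    funext t
    rw [← hcurve t, hinv _ _ hQorth]
  have hdX : DifferentiableAt ℝ h X := (hsmooth.differentiable (by simp)) X
  have hc1 : HasDerivAt (fun t : ℝ => X + t • N) N 0 := by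
    have := ((hasDerivAt_id (0 : ℝ)).smul_const N).const_add X
    simp only [id, one_smul] at this
    exact this
  have hc2 : HasDerivAt (fun t : ℝ => X - t • N) (-N) 0 := by
    have := ((hasDerivAt_id (0 : ℝ)).smul_const N).const_sub X
    simp only [id, one_smul] at this
    exact this
  have hdX1 : HasFDerivAt h (fderiv ℝ h X) (X + (0 : ℝ) • N) := by
    simpa using hdX.hasFDerivAt
  have hdX2 : HasFDerivAt h (fderiv ℝ h X) (X - (0 : ℝ) • N) := by
    simpa using hdX.hasFDerivAt
  have hg1 : HasDerivAt (fun t : ℝ => h (X + t • N)) (fderiv ℝ h X N) 0 := by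
    exact hdX1.comp_hasDerivAt 0 hc1
  have hg2 : HasDerivAt (fun t : ℝ => h (X + t • N)) (-(fderiv ℝ h X N)) 0 := by
    rw [heven]
    have := hdX2.comp_hasDerivAt 0 hc2
    have hneg : fderiv ℝ h X (-N) = -(fderiv ℝ h X N) := (fderiv ℝ h X).map_neg N
    exact this.congr_deriv hneg
  have hDD : fderiv ℝ h X N = -(fderiv ℝ h X N) := hg1.unique hg2
  have h2 : (2 : ℝ) • fderiv ℝ h X N = 0 := by
    rw [two_smul]
    nth_rewrite 2 [hDD]
    exact add_neg_cancel _
  exact (smul_eq_zero.mp h2).resolve_left (by norm_num)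

private lemma surj_ellC (h : Matrix (Fin m) (Fin n) ℝ → (Fin q → ℝ))
    (hsmooth : ContDiff ℝ (⊤ : ℕ∞) h)
    (hinv : ∀ (X : Matrix (Fin m) (Fin n) ℝ) (Q : Matrix (Fin n) (Fin n) ℝ),
      Qᵀ * Q = 1 → h (X * Q) = h X)
    (X : Matrix (Fin m) (Fin n) ℝ) (W : Matrix (Fin n) (Fin s) ℝ)
    (hW : Wᵀ * W = 1) (hXW : X * W = 0) (hh : h X = 0)
    (hfr : Function.Surjective (fderiv ℝ h X))
    (t : ((Fin m × Fin s) ⊕ (Sym2 (Fin s) ⊕ Fin q)) → ℝ) :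
    ∃ p, ∀ idx, ellC h X W idx p = t idx := by
  classical
  set S : Matrix (Fin s) (Fin s) ℝ := Matrix.of (fun i j => t (.inr (.inl s(i, j))) / 4)
    with hS
  have hSsym : Sᵀ = S := by
    ext i j
    show t (.inr (.inl s(j, i))) / 4 = t (.inr (.inl s(i, j))) / 4
    rw [Sym2.eq_swap]
  set B := W * S with hB
  obtain ⟨η, hη⟩ := hfr (fun k => t (.inr (.inr k)))
  set C : Matrix (Fin m) (Fin s) ℝ := Matrix.of (fun i j => t (.inl (i, j))) with hC
  set Mm := C - X * B - η * W with hM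
  set A := η + Mm * Wᵀ with hA
  refine ⟨(A, B), ?_⟩
  have hAW : A * W + X * B = C := by
    rw [hA, Matrix.add_mul, Matrix.mul_assoc, hW, Matrix.mul_one, hM]
    abel
  have hWB : Wᵀ * B = S := by rw [hB, ← Matrix.mul_assoc, hW, Matrix.one_mul]
  have hBW : Bᵀ * W = S := by
    rw [hB, Matrix.transpose_mul, Matrix.mul_assoc, hW, Matrix.mul_one, hSsym]
  intro idx
  match idx with
  | .inl (i, j) =>
    rw [ellC_inl]
    show (A * W + X * B) i j = _
    rw [hAW]
    rfl
  | .inr (.inl z) =>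
    rw [ellC_inrl]
    show sym2ofMat (Wᵀ * B + Bᵀ * W) z = t _
    rw [hWB, hBW]
    induction z using Sym2.ind with
    | _ i j =>
      rw [sym2ofMat_mk]
      have h1 : S i j = t (.inr (.inl s(i, j))) / 4 := rfl
      have h2 : S j i = t (.inr (.inl s(i, j))) / 4 := by
        show t (.inr (.inl s(j, i))) / 4 = _
        rw [Sym2.eq_swap]
      simp only [Matrix.add_apply, h1, h2]
      ring
  | .inr (.inr k) =>
    rw [ellC_inrr]
    show fderiv ℝ h X A k = _
    rw [hA, map_add]
    rw [fderiv_vanish h hsmooth hinv X W hW hXW Mm]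
    rw [hη]
    simp

private lemma phiC_zero_iff (h : Matrix (Fin m) (Fin n) ℝ → (Fin q → ℝ))
    (p : Matrix (Fin m) (Fin n) ℝ × Matrix (Fin n) (Fin s) ℝ) :
    (∀ idx, phiC h idx p = 0) ↔ (p.2ᵀ * p.2 = 1 ∧ p.1 * p.2 = 0 ∧ h p.1 = 0) := by
  constructor
  · intro hz
    refine ⟨?_, ?_, ?_⟩
    · ext i j
      have h1 : (p.2ᵀ * p.2 - 1 : Matrix (Fin s) (Fin s) ℝ) i j
          + (p.2ᵀ * p.2 - 1 : Matrix (Fin s) (Fin s) ℝ) j i = 0 := hz (.inr (.inl s(i, j)))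
      have hsymm : (p.2ᵀ * p.2) j i = (p.2ᵀ * p.2) i j := by
        simp only [Matrix.mul_apply, Matrix.transpose_apply]
        exact Finset.sum_congr rfl fun k _ => mul_comm _ _
      have hone : (1 : Matrix (Fin s) (Fin s) ℝ) j i = (1 : Matrix (Fin s) (Fin s) ℝ) i j := by
        simp [Matrix.one_apply, eq_comm]
      rw [Matrix.sub_apply, Matrix.sub_apply, hsymm, hone] at h1
      have h2 : (p.2ᵀ * p.2) i j - (1 : Matrix (Fin s) (Fin s) ℝ) i j = 0 := by linarith
      linarith
    · ext i j
      have : (p.1 * p.2) i j = 0 := hz (.inl (i, j))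
      simpa using this
    · funext k
      exact hz (.inr (.inr k))
  · rintro ⟨h1, h2, h3⟩ idx
    match idx with
    | .inl (i, j) =>
      show (p.1 * p.2) i j = 0
      rw [h2]
      simp
    | .inr (.inl z) =>
      show sym2ofMat (p.2ᵀ * p.2 - 1) z = 0
      rw [h1, sub_self]
      induction z using Sym2.ind with
      | _ i j => rw [sym2ofMat_mk]; simp
    | .inr (.inr k) =>
      show h p.1 k = 0
      rw [h3]
      rfl

private lemma card_arith (m n s q : ℕ) (hsn : s ≤ n)
    (hle : m * s + s * (s + 1) / 2 + q ≤ m * n + n * s) :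
    m * s + s * (s + 1) / 2 + q
      = (m * n + n * s) - (m * (n - s) + n * s - s * (s + 1) / 2 - q) := by
  have h1 : m * (n - s) + m * s = m * n := by
    rw [← Nat.mul_add, Nat.sub_add_cancel hsn]
  omega

end Aux

/-- Under the blanket assumption on `h`, if the set
`S_h(s) = {(X,W) ∈ ℝ^{m×n} × St(n,s) : XW = 0, h(X) = 0}` is nonempty, it is a
smooth embedded submanifold (of the ambient space `ℝ^{m×n} × ℝ^{n×s}`) of dimension
`m(n−s) + ns − s(s+1)/2 − q`. -/
theorem lemma_Sh_manifold {m n q s : ℕ} (hsn : s ≤ n)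
    (h : Matrix (Fin m) (Fin n) ℝ → (Fin q → ℝ))
    (hsmooth : ContDiff ℝ (⊤ : ℕ∞) h)
    (hinv : ∀ (X : Matrix (Fin m) (Fin n) ℝ) (Q : Matrix (Fin n) (Fin n) ℝ),
      Qᵀ * Q = 1 → h (X * Q) = h X)
    (hfullrank : ∀ X : Matrix (Fin m) (Fin n) ℝ, h X = 0 →
      Function.Surjective (fderiv ℝ h X))
    (hne : ∃ p : Matrix (Fin m) (Fin n) ℝ × Matrix (Fin n) (Fin s) ℝ,
      p.2ᵀ * p.2 = 1 ∧ p.1 * p.2 = 0 ∧ h p.1 = 0) :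
    IsEmbeddedSubmanifoldOfDim
      {p : Matrix (Fin m) (Fin n) ℝ × Matrix (Fin n) (Fin s) ℝ |
        p.2ᵀ * p.2 = 1 ∧ p.1 * p.2 = 0 ∧ h p.1 = 0}
      (m * (n - s) + n * s - s * (s + 1) / 2 - q) := by
  classical
  intro x hx
  obtain ⟨hxW, hxXW, hxh⟩ := hx
  obtain ⟨w, hwW, hwXW, hwh⟩ := hne
  -- surjectivity of the full derivative at the witness point gives the dimension bound
  have hsurjw : Function.Surjective
      ⇑(ContinuousLinearMap.pi (fun idx => ellC h w.1 w.2 idx)) := by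
    intro t
    obtain ⟨p, hp⟩ := surj_ellC h hsmooth hinv w.1 w.2 hwW hwXW hwh (hfullrank w.1 hwh) t
    exact ⟨p, funext fun idx => by rw [ContinuousLinearMap.pi_apply]; exact hp idx⟩
  have hfinE : Module.finrank ℝ (Matrix (Fin m) (Fin n) ℝ × Matrix (Fin n) (Fin s) ℝ)
      = m * n + n * s := by
    simp [Module.finrank_matrix]
  have hcardI : Fintype.card ((Fin m × Fin s) ⊕ (Sym2 (Fin s) ⊕ Fin q))
      = m * s + s * (s + 1) / 2 + q := by
    rw [Fintype.card_sum, Fintype.card_sum, Fintype.card_prod, Sym2.card,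
      Nat.choose_two_right]
    simp only [Fintype.card_fin, Nat.add_sub_cancel]
    rw [Nat.mul_comm (s + 1) s]
    omega
  have hfinI : Module.finrank ℝ (((Fin m × Fin s) ⊕ (Sym2 (Fin s) ⊕ Fin q)) → ℝ)
      = m * s + s * (s + 1) / 2 + q := by
    rw [Module.finrank_pi, hcardI]
  have hle : m * s + s * (s + 1) / 2 + q ≤ m * n + n * s := by
    have hrange : LinearMap.range
        (ContinuousLinearMap.pi (fun idx => ellC h w.1 w.2 idx)).toLinearMap = ⊤ :=
      LinearMap.range_eq_top.mpr hsurjw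
    have h2 := LinearMap.finrank_range_le
      (ContinuousLinearMap.pi (fun idx => ellC h w.1 w.2 idx)).toLinearMap
    rw [hrange, finrank_top, hfinI, hfinE] at h2
    exact h2
  have hKeq : Fintype.card ((Fin m × Fin s) ⊕ (Sym2 (Fin s) ⊕ Fin q))
      = Module.finrank ℝ (Matrix (Fin m) (Fin n) ℝ × Matrix (Fin n) (Fin s) ℝ)
        - (m * (n - s) + n * s - s * (s + 1) / 2 - q) := by
    rw [hcardI, hfinE]
    exact card_arith m n s q hsn hle
  let e := Fintype.equivFinOfCardEq hKeq
  refine ⟨Set.univ, fun p i => phiC h (e.symm i) p, isOpen_univ, Set.mem_univ x, ?_, ?_, ?_⟩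
  · exact contDiff_pi.mpr fun i => contDiff_phiC h hsmooth (e.symm i)
  · have hF : HasFDerivAt (fun p i => phiC h (e.symm i) p)
        (ContinuousLinearMap.pi fun i => ellC h x.1 x.2 (e.symm i)) x :=
      hasFDerivAt_pi.mpr (fun i => hasfd_phiC h hsmooth x.1 x.2 (e.symm i))
    erw [hF.fderiv]
    intro t
    obtain ⟨p, hp⟩ := surj_ellC h hsmooth hinv x.1 x.2 hxW hxXW hxh (hfullrank x.1 hxh)
      (fun idx => t (e idx))
    refine ⟨p, funext fun i => ?_⟩
    show ellC h x.1 x.2 (e.symm i) p = t i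
    rw [hp (e.symm i), Equiv.apply_symm_apply]
  · ext p
    simp only [Set.mem_inter_iff, Set.mem_univ, true_and, and_true, Set.mem_setOf_eq,
      Set.mem_preimage, Set.mem_singleton_iff]
    constructor
    · intro hp
      funext i
      show phiC h (e.symm i) p = 0
      exact ((phiC_zero_iff h p).mpr hp) (e.symm i)
    · intro hp
      refine (phiC_zero_iff h p).mp (fun idx => ?_)
      have h0 := congrFun hp (e idx)
      rw [Equiv.symm_apply_apply] at h0
      exact h0
end
end

section
/- The desingularization manifold M_desing = {(X,G) ∈ R^{m×n} × Sym(n) : G ∈ Gr(n,n−r), XG = 0} and the product manifold H × Sym(n) intersect transversally in R^{m×n} × Sym(n): for every (X,G) in the intersection, any (E,Z) ∈ R^{m×n} × Sym(n) decomposes as (E,Z) = ((EV)V^T, 0) + ((EV_⊥)V_⊥^T, Z) with the first summand in T_{(X,G)} M_desing and the second in T_{(X,G)}(H × Sym(n)), where G = I − VV^T. -/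
open Matrix

noncomputable section
attribute [local instance] Matrix.normedAddCommGroup Matrix.normedSpace

/-- The desingularization manifold `M_desing` and `H × Sym(n)`
intersect transversally: at any common point `(X,G)` with representation
`X = H Vᵀ`, `G = I − V Vᵀ`, every `(E,Z) ∈ ℝ^{m×n} × Sym(n)` decomposes as
`(E,Z) = ((EV)Vᵀ, 0) + ((EV⊥)V⊥ᵀ, Z)`, with `((EV)Vᵀ, 0) ∈ T_{(X,G)} M_desing` and
`((EV⊥)V⊥ᵀ, Z) ∈ T_{(X,G)}(H × Sym(n)) = ker Dh_X × Sym(n)`. -/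
theorem transversal_Mdesing_H {m n q r : ℕ} (hrn : r ≤ n)
    (h : Matrix (Fin m) (Fin n) ℝ → (Fin q → ℝ))
    (hsmooth : ContDiff ℝ (⊤ : ℕ∞) h)
    (hinv : ∀ (X : Matrix (Fin m) (Fin n) ℝ) (Q : Matrix (Fin n) (Fin n) ℝ),
      Qᵀ * Q = 1 → h (X * Q) = h X)
    (hfullrank : ∀ X : Matrix (Fin m) (Fin n) ℝ, h X = 0 →
      Function.Surjective (fderiv ℝ h X))
    (X : Matrix (Fin m) (Fin n) ℝ) (G : Matrix (Fin n) (Fin n) ℝ)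
    (H : Matrix (Fin m) (Fin r) ℝ) (V : Matrix (Fin n) (Fin r) ℝ)
    (Vb : Matrix (Fin n) (Fin (n - r)) ℝ)
    (hX : h X = 0) (hXG : X * G = 0)
    (hV : Vᵀ * V = 1) (hrep : X = H * Vᵀ) (hG : G = 1 - V * Vᵀ)
    (hVVb : Vᵀ * Vb = 0) (hVb : Vbᵀ * Vb = 1)
    (hcompl : V * Vᵀ + Vb * Vbᵀ = 1)
    (E : Matrix (Fin m) (Fin n) ℝ) (Z : Matrix (Fin n) (Fin n) ℝ) (hZ : Zᵀ = Z) :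
    -- the decomposition (E,Z) = ((EV)Vᵀ, 0) + ((EV⊥)V⊥ᵀ, Z):
    E = (E * V) * Vᵀ + (E * Vb) * Vbᵀ ∧
    -- first summand lies in the tangent space of the desingularization manifold:
    (∃ (K : Matrix (Fin m) (Fin r) ℝ) (Vp : Matrix (Fin n) (Fin r) ℝ),
      Vᵀ * Vp = 0 ∧ (E * V) * Vᵀ = K * Vᵀ + H * Vpᵀ ∧
      (0 : Matrix (Fin n) (Fin n) ℝ) = -(Vp * Vᵀ) - V * Vpᵀ) ∧
    -- second summand lies in T_X H × Sym(n):
    (E * Vb) * Vbᵀ ∈ LinearMap.ker (fderiv ℝ h X).toLinearMap ∧ Zᵀ = Z := by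

  -- the reflection Q = V Vᵀ - Vb Vbᵀ
  set Q : Matrix (Fin n) (Fin n) ℝ := V * Vᵀ - Vb * Vbᵀ with hQdef
  have hVbV : Vbᵀ * V = 0 := by
    have := congrArg Matrix.transpose hVVb
    simpa [Matrix.transpose_mul] using this
  have hQorth : Qᵀ * Q = 1 := by
    have hQT : Qᵀ = Q := by
      simp [hQdef, Matrix.transpose_sub, Matrix.transpose_mul]
    rw [hQT, hQdef]
    have : (V * Vᵀ - Vb * Vbᵀ) * (V * Vᵀ - Vb * Vbᵀ)
        = V * (Vᵀ * V) * Vᵀ - V * (Vᵀ * Vb) * Vbᵀ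
          - Vb * (Vbᵀ * V) * Vᵀ + Vb * (Vbᵀ * Vb) * Vbᵀ := by
      simp only [Matrix.mul_assoc, Matrix.sub_mul, Matrix.mul_sub]
      abel
    rw [this, hV, hVVb, hVbV, hVb]
    simpa using hcompl
  have hXQ : X * Q = X := by
    rw [hrep, hQdef]
    calc H * Vᵀ * (V * Vᵀ - Vb * Vbᵀ)
        = H * (Vᵀ * V) * Vᵀ - H * (Vᵀ * Vb) * Vbᵀ := by
          simp only [Matrix.mul_sub, Matrix.mul_assoc]
      _ = H * Vᵀ := by rw [hV, hVVb]; simp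
  -- any B * Vbᵀ is flipped by Q
  have hflip : (E * Vb) * Vbᵀ * Q = -((E * Vb) * Vbᵀ) := by
    rw [hQdef]
    calc (E * Vb) * Vbᵀ * (V * Vᵀ - Vb * Vbᵀ)
        = E * Vb * (Vbᵀ * V) * Vᵀ - E * Vb * (Vbᵀ * Vb) * Vbᵀ := by
          simp only [Matrix.mul_sub, Matrix.mul_assoc]
      _ = -((E * Vb) * Vbᵀ) := by rw [hVbV, hVb]; simp
  -- linear map of right multiplication by Q
  let L : Matrix (Fin m) (Fin n) ℝ →L[ℝ] Matrix (Fin m) (Fin n) ℝ :=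
    LinearMap.toContinuousLinearMap
      { toFun := fun Y => Y * Q
        map_add' := fun a b => Matrix.add_mul a b Q
        map_smul' := fun c a => Matrix.smul_mul c a Q }
  have hdiff : Differentiable ℝ h := hsmooth.differentiable (by simp)
  have hcomp : h ∘ L = h := by
    funext Y
    exact hinv Y Q hQorth
  have hfd : ∀ W, fderiv ℝ h X (L W) = fderiv ℝ h X W := by
    intro W
    have h1 : fderiv ℝ (h ∘ L) X = (fderiv ℝ h (L X)).comp (L : _ →L[ℝ] _) := by
      exact ((hdiff (L X)).hasFDerivAt.comp X L.hasFDerivAt).fderiv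
    have hLX : L X = X := hXQ
    have h3 : fderiv ℝ (h ∘ ⇑L) X = fderiv ℝ h X := by rw [hcomp]
    rw [h1, hLX] at h3
    calc fderiv ℝ h X (L W) = ((fderiv ℝ h X).comp L) W := rfl
      _ = fderiv ℝ h X W := by rw [h3]
  have hker : fderiv ℝ h X ((E * Vb) * Vbᵀ) = 0 := by
    have h2 := hfd ((E * Vb) * Vbᵀ)
    have hL : L ((E * Vb) * Vbᵀ) = -((E * Vb) * Vbᵀ) := hflip
    rw [hL, map_neg] at h2
    have : (2 : ℝ) • fderiv ℝ h X ((E * Vb) * Vbᵀ) = 0 := by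
      rw [two_smul]
      linear_combination (norm := abel) -h2
    simpa using this
  refine ⟨?_, ⟨E * V, 0, by simp, by simp, by simp⟩, hker, hZ⟩
  calc E = E * (1 : Matrix (Fin n) (Fin n) ℝ) := by simp
    _ = (E * V) * Vᵀ + (E * Vb) * Vbᵀ := by
        rw [← hcompl, Matrix.mul_add, Matrix.mul_assoc, Matrix.mul_assoc]
end
end
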